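/- arXiv:0907.0762 — 15 statements merged into one kernel-verified Lean document; each statement's English description precedes it below -/
import Mathlib

section
/- Let a ∈ ℝ and suppose B⁺ₐ < ∞. Then for every F ∈ 𝓕, ∫_{(a,∞)} (F(x) − F(a))² dm(x) ≤ 4·B⁺ₐ · ∫_{(a,∞)} (dF/dS)²(t) dS(t). In particular the optimal Hardy constant over (a,∞) is at most 4·B⁺ₐ. -/
/-!
Write `W t = S t - S a`. Since `S` carries `dS` to Lebesgue measure,
`∫_{(a,x]} W^{-1/2} dS = 2 W(x)^{1/2}` and `∫_{(t,∞)} W^{-3/2} dS = 2 W(t)^{-1/2}`.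
Cauchy–Schwarz with the weight `W^{1/2}` gives
`(F x - F a)² ≤ 2 W(x)^{1/2} ∫_{(a,x]} f² W^{1/2} dS`; integrating against `m` and exchanging
the integrals reduces the claim to the tail estimate `∫_{[t,∞)} W^{1/2} dm ≤ 2 B W(t)^{-1/2}`.
That estimate follows by writing `W(x)^{1/2} = ½ ∫_{(a,x]} W^{-1/2} dS`, exchanging the integrals
once more and bounding `m [u, ∞) ≤ B / W(u)` at `u = max s t`; this closed-tail bound follows from
the definition of `B⁺ₐ` by letting `x ↑ u` and using continuity of `S`.
-/

open MeasureTheory Set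
open scoped ENNReal

lemma lintegral_Ioc_ofReal_rpow_neg_half {y : ℝ} (hy : 0 ≤ y) :
    ∫⁻ v in Ioc 0 y, ENNReal.ofReal v ^ (-(1 / 2) : ℝ) = 2 * ENNReal.ofReal y ^ (1 / 2 : ℝ) := by
  have hint : IntegrableOn (fun v : ℝ ↦ v ^ (-(1 / 2) : ℝ)) (Ioc 0 y) :=
    (intervalIntegrable_iff_integrableOn_Ioc_of_le hy).1
      (intervalIntegral.intervalIntegrable_rpow' (by norm_num))
  rw [setLIntegral_congr_fun measurableSet_Ioc fun v hv ↦ ENNReal.ofReal_rpow_of_pos hv.1,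
    ← ofReal_integral_eq_lintegral_ofReal hint
      ((ae_restrict_iff' measurableSet_Ioc).2 (.of_forall fun v hv ↦ Real.rpow_nonneg hv.1.le _)),
    ← intervalIntegral.integral_of_le hy, integral_rpow (.inl (by norm_num)),
    ENNReal.ofReal_rpow_of_nonneg hy (by norm_num), ← ENNReal.ofReal_ofNat 2,
    ← ENNReal.ofReal_mul zero_le_two]
  congr 1
  norm_num
  ring

lemma lintegral_Ioi_ofReal_rpow_neg_three_halves {y : ℝ} (hy : 0 < y) :
    ∫⁻ v in Ioi y, ENNReal.ofReal v ^ (-(3 / 2) : ℝ) = 2 * ENNReal.ofReal y ^ (-(1 / 2) : ℝ) := by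
  rw [setLIntegral_congr_fun measurableSet_Ioi fun v hv ↦
      ENNReal.ofReal_rpow_of_pos (hy.trans hv),
    ← ofReal_integral_eq_lintegral_ofReal (integrableOn_Ioi_rpow_of_lt (by norm_num) hy)
      ((ae_restrict_iff' measurableSet_Ioi).2
        (.of_forall fun v hv ↦ Real.rpow_nonneg (hy.trans hv).le _)),
    integral_Ioi_rpow_of_lt (by norm_num) hy, ENNReal.ofReal_rpow_of_pos hy,
    ← ENNReal.ofReal_ofNat 2, ← ENNReal.ofReal_mul zero_le_two]
  congr 1
  norm_num
  ring

theorem sq_lintegral_le_lintegral_sq_mul_mul_lintegral_inv {α : Type*} [MeasurableSpace α]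
    {μ : Measure α} {f w : α → ℝ≥0∞} (hf : AEMeasurable f μ) (hw : AEMeasurable w μ)
    (hw0 : ∀ᵐ x ∂μ, w x ≠ 0) (hwtop : ∀ᵐ x ∂μ, w x ≠ ∞) :
    (∫⁻ x, f x ∂μ) ^ 2 ≤ (∫⁻ x, f x ^ 2 * w x ∂μ) * ∫⁻ x, (w x)⁻¹ ∂μ := by
  have hsplit : ∫⁻ x, f x ∂μ = ∫⁻ x, f x * w x ^ (1 / 2 : ℝ) * (w x ^ (1 / 2 : ℝ))⁻¹ ∂μ := by
    refine lintegral_congr_ae ?_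
    filter_upwards [hw0, hwtop] with x h0 htop
    rw [mul_assoc, ENNReal.mul_inv_cancel (by simp [h0]) (by simp [htop]), mul_one]
  have hholder : ∫⁻ x, f x ∂μ
      ≤ (∫⁻ x, f x ^ 2 * w x ∂μ) ^ (1 / 2 : ℝ) * (∫⁻ x, (w x)⁻¹ ∂μ) ^ (1 / 2 : ℝ) := by
    rw [hsplit]
    refine (ENNReal.lintegral_mul_le_Lp_mul_Lq μ .two_two
      (hf.mul (hw.pow_const (1 / 2 : ℝ))) (hw.pow_const (1 / 2 : ℝ)).inv).trans_eq ?_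
    congr 3 <;> funext x
    · rw [Pi.mul_apply, ENNReal.mul_rpow_of_nonneg _ _ zero_le_two, ← ENNReal.rpow_mul]
      norm_num
    · rw [Pi.inv_apply, ENNReal.inv_rpow, ← ENNReal.rpow_mul]
      norm_num
  have hsq : ∀ y : ℝ≥0∞, (y ^ (1 / 2 : ℝ)) ^ 2 = y := fun y ↦ by
    rw [← ENNReal.rpow_natCast, ← ENNReal.rpow_mul]; norm_num
  calc (∫⁻ x, f x ∂μ) ^ 2
      ≤ ((∫⁻ x, f x ^ 2 * w x ∂μ) ^ (1 / 2 : ℝ) * (∫⁻ x, (w x)⁻¹ ∂μ) ^ (1 / 2 : ℝ)) ^ 2 := by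
        gcongr
    _ = (∫⁻ x, f x ^ 2 * w x ∂μ) * ∫⁻ x, (w x)⁻¹ ∂μ := by rw [mul_pow, hsq, hsq]

theorem lintegral_mul_setLIntegral_Ioc_comm {μ ν : Measure ℝ} [SFinite μ] [SFinite ν]
    {g h : ℝ → ℝ≥0∞} (hg : AEMeasurable g μ) (hh : AEMeasurable h ν) (c : ℝ) :
    ∫⁻ x, g x * ∫⁻ t in Ioc c x, h t ∂ν ∂μ = ∫⁻ t in Ioi c, h t * ∫⁻ x in Ici t, g x ∂μ ∂ν := by
  set D : Set (ℝ × ℝ) := {p | c < p.2 ∧ p.2 ≤ p.1}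
  have hD : MeasurableSet D :=
    (measurableSet_lt measurable_const measurable_snd).inter
      (measurableSet_le measurable_snd measurable_fst)
  have hslice_x : ∀ x, ∫⁻ t, D.indicator (fun p ↦ g p.1 * h p.2) (x, t) ∂ν
      = g x * ∫⁻ t in Ioc c x, h t ∂ν := fun x ↦ by
    rw [← lintegral_const_mul'' _ hh.restrict, ← lintegral_indicator measurableSet_Ioc]
    rfl
  have hslice_t : ∀ t, ∫⁻ x, D.indicator (fun p ↦ g p.1 * h p.2) (x, t) ∂μ
      = (Ioi c).indicator (fun t ↦ h t * ∫⁻ x in Ici t, g x ∂μ) t := fun t ↦ by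
    by_cases hct : c < t
    · rw [indicator_of_mem (show t ∈ Ioi c from hct), mul_comm,
        ← lintegral_mul_const'' _ hg.restrict, ← lintegral_indicator measurableSet_Ici]
      simp [D, indicator_apply, hct]
    · simp [D, hct]
  calc ∫⁻ x, g x * ∫⁻ t in Ioc c x, h t ∂ν ∂μ
      = ∫⁻ x, ∫⁻ t, D.indicator (fun p ↦ g p.1 * h p.2) (x, t) ∂ν ∂μ := by simp_rw [hslice_x]
    _ = ∫⁻ t, ∫⁻ x, D.indicator (fun p ↦ g p.1 * h p.2) (x, t) ∂μ ∂ν :=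
        lintegral_lintegral_swap ((hg.comp_fst.mul hh.comp_snd).indicator hD)
    _ = ∫⁻ t in Ioi c, h t * ∫⁻ x in Ici t, g x ∂μ ∂ν := by
        simp_rw [hslice_t, lintegral_indicator measurableSet_Ioi]

theorem measure_Ici_mul_le_biSup {m : Measure ℝ} [IsFiniteMeasure m] {g : ℝ → ℝ≥0∞} {a s : ℝ}
    (has : a < s) (hg : ContinuousWithinAt g (Iio s) s) :
    m (Ici s) * g s ≤ ⨆ x ∈ Ici a, m (Ioi x) * g x := by
  refine le_of_tendsto (ENNReal.Tendsto.const_mul hg (.inr (measure_ne_top m _))) ?_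
  filter_upwards [Ioo_mem_nhdsLT has] with y hy
  calc m (Ici s) * g y ≤ m (Ioi y) * g y := by gcongr; exact hy.2
    _ ≤ ⨆ x ∈ Ici a, m (Ioi x) * g x := le_biSup (fun x ↦ m (Ioi x) * g x) hy.1.le

section

variable {μ : Measure ℝ} {e : ℝ ≃o ℝ}

lemma measurePreserving_of_measure_Ioc
    (h : ∀ c d, c ≤ d → μ (Ioc c d) = ENNReal.ofReal (e d - e c)) :
    MeasurePreserving e μ volume := by
  have hmap : ∀ ⦃u v : ℝ⦄, u < v → μ.map e (Ioc u v) = ENNReal.ofReal (v - u) := by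
    intro u v huv
    rw [Measure.map_apply e.monotone.measurable measurableSet_Ioc, e.preimage_Ioc,
      h _ _ (e.symm.monotone huv.le), e.apply_symm_apply, e.apply_symm_apply]
  refine ⟨e.monotone.measurable, Measure.ext_of_Ioc' _ _ (fun u v huv ↦ ?_) fun u v huv ↦ ?_⟩
  · simp [hmap huv]
  · rw [hmap huv, Real.volume_Ioc]

lemma setLIntegral_comp_sub_preimage (he : MeasurePreserving e μ volume) (a : ℝ)
    (g : ℝ → ℝ≥0∞) (s : Set ℝ) :
    ∫⁻ t in (fun t ↦ e t - e a) ⁻¹' s, g (e t - e a) ∂μ = ∫⁻ v in s, g v :=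
  ((measurePreserving_sub_right volume (e a)).comp he).setLIntegral_comp_preimage_emb
    ((Homeomorph.subRight (e a)).measurableEmbedding.comp e.toHomeomorph.measurableEmbedding) g s

lemma lintegral_Ioc_ofReal_sub_rpow_neg_half (he : MeasurePreserving e μ volume) {a x : ℝ}
    (hax : a ≤ x) :
    ∫⁻ t in Ioc a x, ENNReal.ofReal (e t - e a) ^ (-(1 / 2) : ℝ) ∂μ
      = 2 * ENNReal.ofReal (e x - e a) ^ (1 / 2 : ℝ) := by
  have hpre : (fun t ↦ e t - e a) ⁻¹' Ioc 0 (e x - e a) = Ioc a x := by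
    ext t; simp
  rw [← hpre, setLIntegral_comp_sub_preimage he a (fun v ↦ ENNReal.ofReal v ^ (-(1 / 2) : ℝ)),
    lintegral_Ioc_ofReal_rpow_neg_half (sub_nonneg.2 (e.monotone hax))]

lemma lintegral_Ioi_ofReal_sub_rpow_neg_three_halves (he : MeasurePreserving e μ volume)
    {a x : ℝ} (hax : a < x) :
    ∫⁻ t in Ioi x, ENNReal.ofReal (e t - e a) ^ (-(3 / 2) : ℝ) ∂μ
      = 2 * ENNReal.ofReal (e x - e a) ^ (-(1 / 2) : ℝ) := by
  have hpre : (fun t ↦ e t - e a) ⁻¹' Ioi (e x - e a) = Ioi x := by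
    ext t; simp
  rw [← hpre, setLIntegral_comp_sub_preimage he a (fun v ↦ ENNReal.ofReal v ^ (-(3 / 2) : ℝ)),
    lintegral_Ioi_ofReal_rpow_neg_three_halves (sub_pos.2 (e.strictMono hax))]

lemma setLIntegral_Ici_ofReal_sub_rpow_half_eq (he : MeasurePreserving e μ volume)
    {m : Measure ℝ} [SFinite m] {a t : ℝ} (hat : a ≤ t) :
    ∫⁻ x in Ici t, ENNReal.ofReal (e x - e a) ^ (1 / 2 : ℝ) ∂m
      = 2⁻¹ * ∫⁻ s in Ioi a,
          ENNReal.ofReal (e s - e a) ^ (-(1 / 2) : ℝ) * m (Ici (max s t)) ∂μ := by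
  have := he.sigmaFinite
  have hWm : Measurable fun s ↦ ENNReal.ofReal (e s - e a) ^ (-(1 / 2) : ℝ) :=
    (e.monotone.measurable.sub_const _).ennreal_ofReal.pow_const _
  calc ∫⁻ x in Ici t, ENNReal.ofReal (e x - e a) ^ (1 / 2 : ℝ) ∂m
      = ∫⁻ x in Ici t, 2⁻¹ * ∫⁻ s in Ioc a x, ENNReal.ofReal (e s - e a) ^ (-(1 / 2) : ℝ) ∂μ ∂m :=
        setLIntegral_congr_fun measurableSet_Ici fun x hx ↦ by
          rw [lintegral_Ioc_ofReal_sub_rpow_neg_half he (hat.trans hx), ← mul_assoc,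
            ENNReal.inv_mul_cancel two_ne_zero ENNReal.ofNat_ne_top, one_mul]
    _ = ∫⁻ s in Ioi a, ENNReal.ofReal (e s - e a) ^ (-(1 / 2) : ℝ) *
          ∫⁻ x in Ici s, 2⁻¹ ∂m.restrict (Ici t) ∂μ :=
        lintegral_mul_setLIntegral_Ioc_comm aemeasurable_const hWm.aemeasurable a
    _ = _ := by
        rw [← lintegral_const_mul' _ _ (ENNReal.inv_ne_top.2 two_ne_zero)]
        refine lintegral_congr fun s ↦ ?_
        rw [setLIntegral_const, Measure.restrict_apply measurableSet_Ici, Ici_inter_Ici]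
        ring

lemma lintegral_Ici_ofReal_sub_rpow_half_le (he : MeasurePreserving e μ volume) {m : Measure ℝ}
    [SFinite m] {a t : ℝ} {B : ℝ≥0∞}
    (hB : ∀ s, a < s → m (Ici s) * ENNReal.ofReal (e s - e a) ≤ B) (hat : a < t) :
    ∫⁻ x in Ici t, ENNReal.ofReal (e x - e a) ^ (1 / 2 : ℝ) ∂m
      ≤ 2 * B * ENNReal.ofReal (e t - e a) ^ (-(1 / 2) : ℝ) := by
  set W : ℝ → ℝ≥0∞ := fun s ↦ ENNReal.ofReal (e s - e a)
  have hWm : Measurable W := (e.monotone.measurable.sub_const _).ennreal_ofReal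
  have hrpow : ∀ {s}, a < s → ∀ p q : ℝ, W s ^ p * W s ^ q = W s ^ (p + q) := fun hs p q ↦
    (ENNReal.rpow_add _ _ (by simpa [W] using e.strictMono hs) ENNReal.ofReal_ne_top).symm
  have hm : ∀ {s}, a < s → m (Ici s) ≤ B * W s ^ (-1 : ℝ) := fun hs ↦ by
    rw [ENNReal.rpow_neg_one, ← div_eq_mul_inv]
    exact (ENNReal.le_div_iff_mul_le (.inl (by simpa [W] using e.strictMono hs))
      (.inl ENNReal.ofReal_ne_top)).2 (hB _ hs)
  rw [setLIntegral_Ici_ofReal_sub_rpow_half_eq he hat.le, ← Ioc_union_Ioi_eq_Ioi hat.le,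
    lintegral_union measurableSet_Ioi (Ioc_disjoint_Ioi le_rfl)]
  calc 2⁻¹ * (∫⁻ s in Ioc a t, W s ^ (-(1 / 2) : ℝ) * m (Ici (max s t)) ∂μ
        + ∫⁻ s in Ioi t, W s ^ (-(1 / 2) : ℝ) * m (Ici (max s t)) ∂μ)
      ≤ 2⁻¹ * (∫⁻ s in Ioc a t, W s ^ (-(1 / 2) : ℝ) * (B * W t ^ (-1 : ℝ)) ∂μ
        + ∫⁻ s in Ioi t, B * W s ^ (-(3 / 2) : ℝ) ∂μ) := by
        gcongr 2⁻¹ * (?_ + ?_)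
        · refine setLIntegral_mono' measurableSet_Ioc fun s hs ↦ ?_
          rw [max_eq_right hs.2]
          gcongr
          exact hm hat
        · refine setLIntegral_mono' measurableSet_Ioi fun s hs ↦ ?_
          rw [max_eq_left (le_of_lt hs), show (-(3 / 2) : ℝ) = -(1 / 2) + -1 by norm_num,
            ← hrpow (hat.trans hs), mul_left_comm]
          gcongr
          exact hm (hat.trans hs)
    _ = 2⁻¹ * (2 * B * (W t ^ (1 / 2 : ℝ) * W t ^ (-1 : ℝ)) + 2 * B * W t ^ (-(1 / 2) : ℝ)) := by
        rw [lintegral_mul_const'' _ (hWm.pow_const _).aemeasurable.restrict,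
          lintegral_const_mul'' _ (hWm.pow_const _).aemeasurable.restrict,
          lintegral_Ioc_ofReal_sub_rpow_neg_half he hat.le,
          lintegral_Ioi_ofReal_sub_rpow_neg_three_halves he hat]
        ring
    _ = 2 * B * W t ^ (-(1 / 2) : ℝ) := by
        rw [hrpow hat, show (1 / 2 : ℝ) + -1 = -(1 / 2) by norm_num, ← two_mul, ← mul_assoc,
          ENNReal.inv_mul_cancel two_ne_zero ENNReal.ofNat_ne_top, one_mul]

lemma ofReal_sq_sub_le (he : MeasurePreserving e μ volume) {F f : ℝ → ℝ}
    (hf : AEMeasurable f μ) {a x : ℝ} (hax : a < x)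
    (hdF : F x - F a = ∫ t in Ioc a x, f t ∂μ) :
    ENNReal.ofReal ((F x - F a) ^ 2) ≤ 2 * ENNReal.ofReal (e x - e a) ^ (1 / 2 : ℝ) *
      ∫⁻ t in Ioc a x, ENNReal.ofReal (f t ^ 2) * ENNReal.ofReal (e t - e a) ^ (1 / 2 : ℝ) ∂μ := by
  have hsq : ∀ r : ℝ, ENNReal.ofReal (r ^ 2) = ‖r‖ₑ ^ 2 := fun r ↦ by
    rw [Real.enorm_eq_ofReal_abs, ← ENNReal.ofReal_pow (abs_nonneg r), sq_abs]
  have hw : AEMeasurable (fun t ↦ ENNReal.ofReal (e t - e a) ^ (1 / 2 : ℝ)) μ :=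
    ((e.monotone.measurable.sub_const _).ennreal_ofReal.pow_const _).aemeasurable
  have hpos : ∀ᵐ t ∂μ.restrict (Ioc a x), ENNReal.ofReal (e t - e a) ^ (1 / 2 : ℝ) ≠ 0 :=
    ae_restrict_of_forall_mem measurableSet_Ioc fun t ht ↦ by simpa using e.strictMono ht.1
  calc ENNReal.ofReal ((F x - F a) ^ 2)
      ≤ (∫⁻ t in Ioc a x, ‖f t‖ₑ ∂μ) ^ 2 := by
        rw [hsq, hdF]; gcongr; exact enorm_integral_le_lintegral_enorm _
    _ ≤ (∫⁻ t in Ioc a x, ‖f t‖ₑ ^ 2 * ENNReal.ofReal (e t - e a) ^ (1 / 2 : ℝ) ∂μ)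
          * ∫⁻ t in Ioc a x, (ENNReal.ofReal (e t - e a) ^ (1 / 2 : ℝ))⁻¹ ∂μ :=
        sq_lintegral_le_lintegral_sq_mul_mul_lintegral_inv hf.enorm.restrict hw.restrict hpos
          (.of_forall fun t ↦ by simp)
    _ = _ := by
        simp_rw [← hsq, ← ENNReal.rpow_neg]
        rw [lintegral_Ioc_ofReal_sub_rpow_neg_half he hax.le, mul_comm]

theorem lintegral_sq_sub_le_of_measurePreserving (he : MeasurePreserving e μ volume)
    {m : Measure ℝ} [SFinite m] {F f : ℝ → ℝ} (hf : AEMeasurable f μ) {a : ℝ} {B : ℝ≥0∞}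
    (hB : ∀ s, a < s → m (Ici s) * ENNReal.ofReal (e s - e a) ≤ B)
    (hdF : ∀ x, a < x → F x - F a = ∫ t in Ioc a x, f t ∂μ) :
    ∫⁻ x in Ioi a, ENNReal.ofReal ((F x - F a) ^ 2) ∂m
      ≤ 4 * B * ∫⁻ t in Ioi a, ENNReal.ofReal (f t ^ 2) ∂μ := by
  have := he.sigmaFinite
  set W : ℝ → ℝ≥0∞ := fun s ↦ ENNReal.ofReal (e s - e a)
  have hWm : Measurable W := (e.monotone.measurable.sub_const _).ennreal_ofReal
  have hf2 : AEMeasurable (fun t ↦ ENNReal.ofReal (f t ^ 2)) μ := (hf.pow_const 2).ennreal_ofReal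
  have hh : AEMeasurable (fun t ↦ ENNReal.ofReal (f t ^ 2) * W t ^ (1 / 2 : ℝ)) μ :=
    hf2.mul (hWm.pow_const _).aemeasurable
  calc ∫⁻ x in Ioi a, ENNReal.ofReal ((F x - F a) ^ 2) ∂m
      ≤ ∫⁻ x in Ioi a, 2 * (W x ^ (1 / 2 : ℝ) *
          ∫⁻ t in Ioc a x, ENNReal.ofReal (f t ^ 2) * W t ^ (1 / 2 : ℝ) ∂μ) ∂m :=
        setLIntegral_mono' measurableSet_Ioi fun x hx ↦
          (ofReal_sq_sub_le he hf hx (hdF x hx)).trans_eq (mul_assoc _ _ _)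
    _ = 2 * ∫⁻ t in Ioi a, ENNReal.ofReal (f t ^ 2) * W t ^ (1 / 2 : ℝ) *
          ∫⁻ x in Ici t, W x ^ (1 / 2 : ℝ) ∂m.restrict (Ioi a) ∂μ := by
        rw [lintegral_const_mul' _ _ ENNReal.ofNat_ne_top, lintegral_mul_setLIntegral_Ioc_comm
          (hWm.pow_const _).aemeasurable hh]
    _ ≤ 2 * ∫⁻ t in Ioi a, 2 * B * ENNReal.ofReal (f t ^ 2) ∂μ := by
        gcongr 2 * ?_
        refine setLIntegral_mono' measurableSet_Ioi fun t ht ↦ ?_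
        have hW : W t ^ (1 / 2 : ℝ) * W t ^ (-(1 / 2) : ℝ) = 1 := by
          rw [ENNReal.rpow_neg, ENNReal.mul_inv_cancel (by simpa [W] using e.strictMono ht)
            (by simp [W])]
        rw [Measure.restrict_restrict measurableSet_Ici, inter_eq_left.2 (Ici_subset_Ioi.2 ht)]
        calc ENNReal.ofReal (f t ^ 2) * W t ^ (1 / 2 : ℝ) * ∫⁻ x in Ici t, W x ^ (1 / 2 : ℝ) ∂m
            ≤ ENNReal.ofReal (f t ^ 2) * W t ^ (1 / 2 : ℝ) * (2 * B * W t ^ (-(1 / 2) : ℝ)) := by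
              gcongr
              exact lintegral_Ici_ofReal_sub_rpow_half_le he hB ht
          _ = 2 * B * ENNReal.ofReal (f t ^ 2) * (W t ^ (1 / 2 : ℝ) * W t ^ (-(1 / 2) : ℝ)) := by
              ring
          _ = 2 * B * ENNReal.ofReal (f t ^ 2) := by rw [hW, mul_one]
    _ = 4 * B * ∫⁻ t in Ioi a, ENNReal.ofReal (f t ^ 2) ∂μ := by
        rw [lintegral_const_mul'' _ hf2.restrict, ← mul_assoc, ← mul_assoc]
        norm_num
end

theorem hardy_upper_bound_right_general
    (S : ℝ → ℝ) (hScont : Continuous S) (hSmono : StrictMono S)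
    (hStop : Filter.Tendsto S Filter.atTop Filter.atTop)
    (hSbot : Filter.Tendsto S Filter.atBot Filter.atBot)
    (μS : Measure ℝ)
    (hμS : ∀ c d : ℝ, c ≤ d → μS (Ioc c d) = ENNReal.ofReal (S d - S c))
    (m : Measure ℝ) [IsFiniteMeasure m]
    (a : ℝ)
    (B : ℝ≥0∞)
    (hB : B = ⨆ x ∈ Ici a, m (Ioi x) * ENNReal.ofReal (S x - S a))
    (F f : ℝ → ℝ)
    (hfint : Integrable f μS)
    (hdF : ∀ c d : ℝ, c < d → F d - F c = ∫ t in Ioc c d, f t ∂μS) :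
    ∫⁻ x in Ioi a, ENNReal.ofReal ((F x - F a) ^ 2) ∂m ≤
      4 * B * ∫⁻ t in Ioi a, ENNReal.ofReal (f t ^ 2) ∂μS := by
  let e : ℝ ≃o ℝ := hSmono.orderIsoOfSurjective S (hScont.surjective hStop hSbot)
  have he : MeasurePreserving e μS volume := measurePreserving_of_measure_Ioc hμS
  refine lintegral_sq_sub_le_of_measurePreserving he hfint.aemeasurable (fun s hs ↦ ?_)
    (hdF a · ·)
  rw [hB]
  exact measure_Ici_mul_le_biSup hs
    (ENNReal.continuous_ofReal.comp (hScont.sub continuous_const)).continuousWithinAt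

/-- If `B⁺ₐ < ∞`, then the Hardy inequality over `(a,∞)` holds with
constant `4 · B⁺ₐ`: for every `F ∈ 𝓕` (with density `f = dF/dS`),
`∫_{(a,∞)} (F(x) − F(a))² dm ≤ 4·B⁺ₐ · ∫_{(a,∞)} f² dS`. -/
theorem hardy_upper_bound_right
    (S : ℝ → ℝ) (hScont : Continuous S) (hSmono : StrictMono S)
    (hStop : Filter.Tendsto S Filter.atTop Filter.atTop)
    (hSbot : Filter.Tendsto S Filter.atBot Filter.atBot)
    (μS : Measure ℝ)
    (hμS : ∀ c d : ℝ, c ≤ d → μS (Ioc c d) = ENNReal.ofReal (S d - S c))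
    (m : Measure ℝ) [IsFiniteMeasure m]
    (a : ℝ)
    (B : ℝ≥0∞)
    (hB : B = ⨆ x ∈ Ici a, m (Ioi x) * ENNReal.ofReal (S x - S a))
    (hBfin : B ≠ ⊤)
    (F f : ℝ → ℝ)
    (hFL2 : MemLp F 2 m)
    (hfint : Integrable f μS)
    (hfL2 : MemLp f 2 μS)
    (hdF : ∀ c d : ℝ, c < d → F d - F c = ∫ t in Ioc c d, f t ∂μS) :
    ∫⁻ x in Ioi a, ENNReal.ofReal ((F x - F a) ^ 2) ∂m ≤
      4 * B * ∫⁻ t in Ioi a, ENNReal.ofReal (f t ^ 2) ∂μS :=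
  hardy_upper_bound_right_general S hScont hSmono hStop hSbot μS hμS m a B hB F f hfint hdF
end

section
/- Let a ∈ ℝ and let A < ∞ be such that the Hardy inequality over (a,∞) holds with constant A, i.e. for every F ∈ 𝓕, ∫_{(a,∞)} (F(x) − F(a))² dm(x) ≤ A · ∫_{(a,∞)} (dF/dS)²(t) dS(t). Then B⁺ₐ ≤ A; equivalently, for every r > a, (S(r) − S(a))·m((r,∞)) ≤ A. -/
open MeasureTheory Set
open scoped ENNReal

/-! Test the Hardy inequality on `F = S ∘ clamp_{[a, r]} - S a`, whose density with respect to
`dS` is the indicator of `(a, r]`. The left side is at least `(S r - S a)² m((r, ∞))`, since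
`F = S r - S a` on `(r, ∞)`, and the right side is `A (S r - S a)`; divide by `S r - S a > 0`. -/

theorem Set.Ioc_inter_Ioc_eq_Ioc_max_min {α : Type*} [LinearOrder α] (a r c d : α) :
    Ioc c d ∩ Ioc a r = Ioc (max a (min r c)) (max a (min r d)) := by
  ext x
  simp only [mem_inter_iff, mem_Ioc, max_lt_iff, min_lt_iff, le_max_iff, le_min_iff]
  grind

def clampedIncrement (S : ℝ → ℝ) (a r x : ℝ) : ℝ := S (max a (min r x)) - S a

section
variable {S : ℝ → ℝ} {a r : ℝ}

theorem clampedIncrement_left (har : a ≤ r) : clampedIncrement S a r a = 0 := by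
  simp [clampedIncrement, har]

theorem clampedIncrement_of_le (har : a ≤ r) {x : ℝ} (hrx : r ≤ x) :
    clampedIncrement S a r x = S r - S a := by
  simp [clampedIncrement, hrx, har]

theorem monotone_clampedIncrement (hS : Monotone S) : Monotone (clampedIncrement S a r) :=
  fun _ _ hxy => sub_le_sub_right (hS (max_le_max_left a (min_le_min_left r hxy))) _

theorem memLp_clampedIncrement (hS : Monotone S) (har : a ≤ r) (m : Measure ℝ)
    [IsFiniteMeasure m] (p : ℝ≥0∞) : MemLp (clampedIncrement S a r) p m := by
  refine MemLp.of_bound (monotone_clampedIncrement hS).measurable.aestronglyMeasurable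
    (S r - S a) <| .of_forall fun x => ?_
  have hx : max a (min r x) ≤ r := max_le har (min_le_left _ _)
  rw [clampedIncrement, Real.norm_of_nonneg (sub_nonneg.2 (hS (le_max_left _ _)))]
  exact sub_le_sub_right (hS hx) _

theorem ofReal_sq_mul_measure_Ioi_le_setLIntegral_clampedIncrement (har : a ≤ r)
    (m : Measure ℝ) :
    ENNReal.ofReal ((S r - S a) ^ 2) * m (Ioi r) ≤
      ∫⁻ x in Ioi a,
        ENNReal.ofReal ((clampedIncrement S a r x - clampedIncrement S a r a) ^ 2) ∂m :=
  calc ENNReal.ofReal ((S r - S a) ^ 2) * m (Ioi r)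
      = ∫⁻ x in Ioi r,
          ENNReal.ofReal ((clampedIncrement S a r x - clampedIncrement S a r a) ^ 2) ∂m := by
        rw [setLIntegral_congr_fun measurableSet_Ioi fun x hx => by
          rw [clampedIncrement_of_le har (le_of_lt hx), clampedIncrement_left har, sub_zero],
          setLIntegral_const]
    _ ≤ _ := lintegral_mono_set (Ioi_subset_Ioi har)

end

theorem setLIntegral_Ioi_ofReal_indicator_one_sq (μ : Measure ℝ) (a r : ℝ) :
    ∫⁻ t in Ioi a, ENNReal.ofReal ((Ioc a r).indicator 1 t ^ 2) ∂μ = μ (Ioc a r) := by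
  have hsq : ∀ t, ENNReal.ofReal ((Ioc a r).indicator 1 t ^ 2) = (Ioc a r).indicator 1 t := by
    intro t
    by_cases ht : t ∈ Ioc a r <;> simp [ht]
  simp only [hsq, lintegral_indicator_one measurableSet_Ioc,
    Measure.restrict_apply measurableSet_Ioc, inter_eq_left.2 Ioc_subset_Ioi_self]

section
variable {S : ℝ → ℝ} {μ : Measure ℝ}
  (hμ : ∀ c d : ℝ, c ≤ d → μ (Ioc c d) = ENNReal.ofReal (S d - S c))
include hμ

theorem setIntegral_indicator_one_Ioc_eq_clampedIncrement_sub (hS : Monotone S) (a r : ℝ)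
    {c d : ℝ} (hcd : c ≤ d) :
    ∫ t in Ioc c d, (Ioc a r).indicator 1 t ∂μ =
      clampedIncrement S a r d - clampedIncrement S a r c := by
  have hclamp : max a (min r c) ≤ max a (min r d) := max_le_max_left a (min_le_min_left r hcd)
  rw [integral_indicator_one measurableSet_Ioc, measureReal_restrict_apply measurableSet_Ioc,
    inter_comm, Ioc_inter_Ioc_eq_Ioc_max_min, measureReal_def, hμ _ _ hclamp,
    ENNReal.toReal_ofReal (sub_nonneg.2 (hS hclamp)), clampedIncrement, clampedIncrement,
    sub_sub_sub_cancel_right]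

theorem memLp_indicator_one_Ioc {a r : ℝ} (har : a ≤ r) (p : ℝ≥0∞) :
    MemLp ((Ioc a r).indicator (1 : ℝ → ℝ)) p μ :=
  memLp_indicator_const p measurableSet_Ioc 1 (Or.inr (by simp [hμ a r har]))

end

theorem ofReal_sub_mul_measure_Ioi_le_of_hardy {S : ℝ → ℝ} (hS : StrictMono S)
    {μ : Measure ℝ}
    (hμ : ∀ c d : ℝ, c ≤ d → μ (Ioc c d) = ENNReal.ofReal (S d - S c))
    (m : Measure ℝ) [IsFiniteMeasure m] {a A : ℝ}
    (hHardy : ∀ F f : ℝ → ℝ, MemLp F 2 m → Integrable f μ → MemLp f 2 μ →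
      (∀ c d : ℝ, c < d → F d - F c = ∫ t in Ioc c d, f t ∂μ) →
      ∫⁻ x in Ioi a, ENNReal.ofReal ((F x - F a) ^ 2) ∂m ≤
        ENNReal.ofReal A * ∫⁻ t in Ioi a, ENNReal.ofReal (f t ^ 2) ∂μ)
    {r : ℝ} (har : a < r) :
    ENNReal.ofReal (S r - S a) * m (Ioi r) ≤ ENNReal.ofReal A := by
  have hdiff : 0 < S r - S a := sub_pos.2 (hS har)
  have hHardy_ramp := hHardy (clampedIncrement S a r) ((Ioc a r).indicator 1)
    (memLp_clampedIncrement hS.monotone har.le m 2)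
    (memLp_one_iff_integrable.1 (memLp_indicator_one_Ioc hμ har.le 1))
    (memLp_indicator_one_Ioc hμ har.le 2) fun c d hcd =>
      (setIntegral_indicator_one_Ioc_eq_clampedIncrement_sub hμ hS.monotone a r hcd.le).symm
  rw [setLIntegral_Ioi_ofReal_indicator_one_sq, hμ a r har.le] at hHardy_ramp
  rw [← ENNReal.mul_le_mul_iff_right (ENNReal.ofReal_pos.2 hdiff).ne' ENNReal.ofReal_ne_top]
  calc ENNReal.ofReal (S r - S a) * (ENNReal.ofReal (S r - S a) * m (Ioi r))
      = ENNReal.ofReal ((S r - S a) ^ 2) * m (Ioi r) := by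
        rw [← mul_assoc, ← ENNReal.ofReal_mul hdiff.le, sq]
    _ ≤ _ := ofReal_sq_mul_measure_Ioi_le_setLIntegral_clampedIncrement har.le m
    _ ≤ ENNReal.ofReal A * ENNReal.ofReal (S r - S a) := hHardy_ramp
    _ = _ := mul_comm _ _

theorem hardy_lower_bound_right_general
    (S : ℝ → ℝ) (hSmono : StrictMono S)
    (μS : Measure ℝ)
    (hμS : ∀ c d : ℝ, c ≤ d → μS (Ioc c d) = ENNReal.ofReal (S d - S c))
    (m : Measure ℝ) [IsFiniteMeasure m]
    (a : ℝ) (A : ℝ)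
    (hHardy : ∀ F f : ℝ → ℝ, MemLp F 2 m → Integrable f μS → MemLp f 2 μS →
      (∀ c d : ℝ, c < d → F d - F c = ∫ t in Ioc c d, f t ∂μS) →
      ∫⁻ x in Ioi a, ENNReal.ofReal ((F x - F a) ^ 2) ∂m ≤
        ENNReal.ofReal A * ∫⁻ t in Ioi a, ENNReal.ofReal (f t ^ 2) ∂μS) :
    (⨆ x ∈ Ici a, m (Ioi x) * ENNReal.ofReal (S x - S a)) ≤ ENNReal.ofReal A ∧
      ∀ r : ℝ, a < r →
        ENNReal.ofReal (S r - S a) * m (Ioi r) ≤ ENNReal.ofReal A := by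
  have hbound : ∀ r, a < r → ENNReal.ofReal (S r - S a) * m (Ioi r) ≤ ENNReal.ofReal A :=
    fun _ har => ofReal_sub_mul_measure_Ioi_le_of_hardy hSmono hμS m hHardy har
  refine ⟨iSup₂_le fun x hx => ?_, hbound⟩
  rcases (mem_Ici.1 hx).eq_or_lt with rfl | hax
  · simp
  · rw [mul_comm]
    exact hbound x hax

/-- If the Hardy inequality over `(a,∞)` holds with a (finite) constant `A`,
then `B⁺ₐ ≤ A`; equivalently, for every `r > a`, `(S(r) − S(a)) · m((r,∞)) ≤ A`. -/
theorem hardy_lower_bound_right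
    (S : ℝ → ℝ) (hScont : Continuous S) (hSmono : StrictMono S)
    (hStop : Filter.Tendsto S Filter.atTop Filter.atTop)
    (hSbot : Filter.Tendsto S Filter.atBot Filter.atBot)
    (μS : Measure ℝ)
    (hμS : ∀ c d : ℝ, c ≤ d → μS (Ioc c d) = ENNReal.ofReal (S d - S c))
    (m : Measure ℝ) [IsFiniteMeasure m]
    (a : ℝ) (A : ℝ)
    (hHardy : ∀ F f : ℝ → ℝ, MemLp F 2 m → Integrable f μS → MemLp f 2 μS →
      (∀ c d : ℝ, c < d → F d - F c = ∫ t in Ioc c d, f t ∂μS) →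
      ∫⁻ x in Ioi a, ENNReal.ofReal ((F x - F a) ^ 2) ∂m ≤
        ENNReal.ofReal A * ∫⁻ t in Ioi a, ENNReal.ofReal (f t ^ 2) ∂μS) :
    (⨆ x ∈ Ici a, m (Ioi x) * ENNReal.ofReal (S x - S a)) ≤ ENNReal.ofReal A ∧
      ∀ r : ℝ, a < r →
        ENNReal.ofReal (S r - S a) * m (Ioi r) ≤ ENNReal.ofReal A :=
  hardy_lower_bound_right_general S hSmono μS hμS m a A hHardy
end

section
/- Let a ∈ ℝ and suppose B⁻ₐ < ∞. Then for every F ∈ 𝓕, ∫_{(−∞,a)} (F(x) − F(a))² dm(x) ≤ 4·B⁻ₐ · ∫_{(−∞,a)} (dF/dS)²(t) dS(t). In particular the optimal Hardy constant over (−∞,a) is at most 4·B⁻ₐ. -/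
/-!
The substitution `u = S x` carries `dS` to Lebesgue measure and `m` to its image under `S`,
so it suffices to treat `S = id`, with `b = S a`. For `x < b`, Cauchy–Schwarz against the
weight `(b - t) ^ (1/2)` gives
`(F x - F b)² ≤ 2 (b - x) ^ (1/2) ∫_x^b f(t)² (b - t) ^ (1/2) dt`.
Integrating in `dm(x)` and exchanging the integrals leaves the estimate
`∫_{x<t} 2 (b - x) ^ (1/2) dm(x) ≤ 4B (b - t) ^ (-1/2)`. Writing
`2 (b - x) ^ (1/2) = ∫_x^b (b - u) ^ (-1/2) du` and exchanging once more, the left side becomes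
`∫_{u<b} (b - u) ^ (-1/2) m((-∞, min u t)) du`, and `m((-∞, y)) ≤ B / (b - y)` bounds the
parts `u < t` and `t ≤ u < b` by `2B (b - t) ^ (-1/2)` each.
-/

open MeasureTheory Set
open scoped ENNReal

theorem lintegral_Ioo_zero_ofReal_rpow {r d : ℝ} (hr : -1 < r) (hd : 0 ≤ d) :
    ∫⁻ v in Ioo 0 d, ENNReal.ofReal v ^ r = ENNReal.ofReal (d ^ (r + 1) / (r + 1)) := by
  have hint : IntegrableOn (fun v : ℝ => v ^ r) (Ioo 0 d) :=
    ((intervalIntegrable_iff_integrableOn_Ioc_of_le hd).1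
      (intervalIntegral.intervalIntegrable_rpow' hr)).mono_set Ioo_subset_Ioc_self
  rw [setLIntegral_congr_fun measurableSet_Ioo (fun v hv => ENNReal.ofReal_rpow_of_pos hv.1),
    ← ofReal_integral_eq_lintegral_ofReal hint
      ((ae_restrict_iff' measurableSet_Ioo).2 (.of_forall fun v hv => Real.rpow_nonneg hv.1.le r)),
    ← integral_Ioc_eq_integral_Ioo, ← intervalIntegral.integral_of_le hd, integral_rpow (.inl hr),
    Real.zero_rpow (by linarith), sub_zero]

theorem lintegral_Ioi_ofReal_rpow {r k : ℝ} (hr : r < -1) (hk : 0 < k) :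
    ∫⁻ v in Ioi k, ENNReal.ofReal v ^ r = ENNReal.ofReal (-k ^ (r + 1) / (r + 1)) := by
  rw [setLIntegral_congr_fun measurableSet_Ioi
      (fun v hv => ENNReal.ofReal_rpow_of_pos (hk.trans hv)),
    ← ofReal_integral_eq_lintegral_ofReal (integrableOn_Ioi_rpow_of_lt hr hk)
      ((ae_restrict_iff' measurableSet_Ioi).2
        (.of_forall fun v hv => Real.rpow_nonneg (hk.trans hv).le r)),
    integral_Ioi_rpow_of_lt hr hk]

theorem lintegral_Ioo_ofReal_sub_rpow {r b c : ℝ} (hr : -1 < r) (hcb : c ≤ b) :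
    ∫⁻ u in Ioo c b, ENNReal.ofReal (b - u) ^ r =
      ENNReal.ofReal ((b - c) ^ (r + 1) / (r + 1)) := by
  have hreflect := (Measure.measurePreserving_sub_left volume b).setLIntegral_comp_preimage_emb
    (MeasurableEquiv.subLeft b).measurableEmbedding (fun v => ENNReal.ofReal v ^ r) (Ioo 0 (b - c))
  simp only [preimage_const_sub_Ioo, sub_sub_cancel, sub_zero] at hreflect
  rw [hreflect, lintegral_Ioo_zero_ofReal_rpow hr (sub_nonneg.2 hcb)]

theorem lintegral_Iio_ofReal_sub_rpow {r b c : ℝ} (hr : r < -1) (hcb : c < b) :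
    ∫⁻ u in Iio c, ENNReal.ofReal (b - u) ^ r =
      ENNReal.ofReal (-(b - c) ^ (r + 1) / (r + 1)) := by
  have hreflect := (Measure.measurePreserving_sub_left volume b).setLIntegral_comp_preimage_emb
    (MeasurableEquiv.subLeft b).measurableEmbedding (fun v => ENNReal.ofReal v ^ r) (Ioi (b - c))
  simp only [preimage_const_sub_Ioi, sub_sub_cancel] at hreflect
  rw [hreflect, lintegral_Ioi_ofReal_rpow hr (sub_pos.2 hcb)]

theorem lintegral_Ioo_ofReal_sub_rpow_neg_half {b c : ℝ} (hcb : c ≤ b) :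
    ∫⁻ u in Ioo c b, ENNReal.ofReal (b - u) ^ (-(1 / 2) : ℝ) =
      2 * ENNReal.ofReal (b - c) ^ (1 / 2 : ℝ) := by
  rw [lintegral_Ioo_ofReal_sub_rpow (by norm_num) hcb, ENNReal.ofReal_rpow_of_nonneg
    (sub_nonneg.2 hcb) (by norm_num), ← ENNReal.ofReal_ofNat 2, ← ENNReal.ofReal_mul zero_le_two]
  norm_num [div_eq_mul_inv, mul_comm]

theorem lintegral_Iio_ofReal_sub_rpow_neg_three_halves {b c : ℝ} (hcb : c < b) :
    ∫⁻ u in Iio c, ENNReal.ofReal (b - u) ^ (-(3 / 2) : ℝ) =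
      2 * ENNReal.ofReal (b - c) ^ (-(1 / 2) : ℝ) := by
  rw [lintegral_Iio_ofReal_sub_rpow (by norm_num) hcb, ENNReal.ofReal_rpow_of_pos
    (sub_pos.2 hcb), ← ENNReal.ofReal_ofNat 2, ← ENNReal.ofReal_mul zero_le_two]
  norm_num [div_eq_mul_inv, mul_comm]

theorem ofReal_rpow_mul_ofReal_rpow {r : ℝ} (hr : 0 < r) (p q : ℝ) :
    ENNReal.ofReal r ^ p * ENNReal.ofReal r ^ q = ENNReal.ofReal r ^ (p + q) :=
  (ENNReal.rpow_add p q (ENNReal.ofReal_pos.2 hr).ne' ENNReal.ofReal_ne_top).symm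

theorem lintegral_sq_le_lintegral_inv_mul_lintegral {α : Type*} [MeasurableSpace α]
    {μ : Measure α} {g w : α → ℝ≥0∞} (hg : AEMeasurable g μ) (hw : AEMeasurable w μ)
    (hw0 : ∀ᵐ x ∂μ, w x ≠ 0) (hwtop : ∀ᵐ x ∂μ, w x ≠ ⊤) :
    (∫⁻ x, g x ∂μ) ^ 2 ≤ (∫⁻ x, (w x)⁻¹ ∂μ) * ∫⁻ x, g x ^ 2 * w x ∂μ := by
  set v : α → ℝ≥0∞ := fun x => w x ^ (1 / 2 : ℝ)
  have hfactor : ∫⁻ x, g x ∂μ = ∫⁻ x, (g x * v x) * (v x)⁻¹ ∂μ := by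
    refine lintegral_congr_ae ?_
    filter_upwards [hw0, hwtop] with x h0 htop
    rw [mul_assoc, ENNReal.mul_inv_cancel (ENNReal.rpow_pos (pos_iff_ne_zero.2 h0) htop).ne'
      (ENNReal.rpow_ne_top_of_nonneg (by norm_num) htop), mul_one]
  have hv : AEMeasurable v μ := hw.pow_const _
  have hholder := ENNReal.lintegral_mul_le_Lp_mul_Lq μ (f := fun x => g x * v x)
    (g := fun x => (v x)⁻¹) Real.HolderConjugate.two_two (hg.mul hv) hv.inv
  have hsq_left : ∀ x, (g x * v x) ^ (2 : ℝ) = g x ^ 2 * w x := fun x => by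
    rw [ENNReal.mul_rpow_of_nonneg _ _ zero_le_two, ← ENNReal.rpow_mul]
    norm_num
  have hsq_right : ∀ x, (v x)⁻¹ ^ (2 : ℝ) = (w x)⁻¹ := fun x => by
    rw [ENNReal.inv_rpow, ← ENNReal.rpow_mul]
    norm_num
  simp only [hsq_left, hsq_right] at hholder
  calc (∫⁻ x, g x ∂μ) ^ 2
      ≤ ((∫⁻ x, g x ^ 2 * w x ∂μ) ^ (1 / 2 : ℝ) * (∫⁻ x, (w x)⁻¹ ∂μ) ^ (1 / 2 : ℝ)) ^ 2 := by
        rw [hfactor]; exact pow_le_pow_left' hholder 2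
    _ = (∫⁻ x, (w x)⁻¹ ∂μ) * ∫⁻ x, g x ^ 2 * w x ∂μ := by
        rw [mul_pow, ← ENNReal.rpow_natCast, ← ENNReal.rpow_natCast, ← ENNReal.rpow_mul,
          ← ENNReal.rpow_mul, mul_comm]
        norm_num

theorem lintegral_Iio_mul_lintegral_Ioo_swap {μ ν : Measure ℝ} [SFinite μ] [SFinite ν]
    {φ ψ : ℝ → ℝ≥0∞} (hφ : Measurable φ) (hψ : Measurable ψ) (b : ℝ) :
    ∫⁻ x in Iio b, φ x * ∫⁻ t in Ioo x b, ψ t ∂μ ∂ν =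
      ∫⁻ t in Iio b, ψ t * ∫⁻ x in Iio t, φ x ∂ν ∂μ := by
  set K : ℝ → ℝ → ℝ≥0∞ := fun x t => (Ioi x).indicator (fun t => φ x * ψ t) t
  have hK : Measurable (Function.uncurry K) := by
    have hK_eq : Function.uncurry K =
        {p : ℝ × ℝ | p.1 < p.2}.indicator (fun p => φ p.1 * ψ p.2) := by
      ext ⟨x, t⟩; simp [K, indicator_apply]
    rw [hK_eq]
    exact ((hφ.comp measurable_fst).mul (hψ.comp measurable_snd)).indicator
      (measurableSet_lt measurable_fst measurable_snd)
  have hinner_t : ∀ x, ∫⁻ t in Iio b, K x t ∂μ = φ x * ∫⁻ t in Ioo x b, ψ t ∂μ := fun x => by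
    rw [lintegral_indicator measurableSet_Ioi, Measure.restrict_restrict measurableSet_Ioi,
      Ioi_inter_Iio, lintegral_const_mul _ hψ]
  have hinner_x : ∀ t ∈ Iio b, ∫⁻ x in Iio b, K x t ∂ν = ψ t * ∫⁻ x in Iio t, φ x ∂ν := by
    intro t ht
    have hK_t : ∀ x, K x t = (Iio t).indicator (fun x => φ x * ψ t) x := fun x => by
      simp [K, indicator_apply]
    simp_rw [hK_t]
    rw [lintegral_indicator measurableSet_Iio, Measure.restrict_restrict measurableSet_Iio,
      Iio_inter_Iio, min_eq_left (le_of_lt ht), lintegral_mul_const _ hφ, mul_comm]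
  simp_rw [← hinner_t]
  rw [lintegral_lintegral_swap hK.aemeasurable]
  exact setLIntegral_congr_fun measurableSet_Iio hinner_x

theorem lintegral_Iio_two_mul_ofReal_sub_rpow_half_eq {ν : Measure ℝ} [SFinite ν] {b t : ℝ}
    (htb : t < b) :
    ∫⁻ x in Iio t, 2 * ENNReal.ofReal (b - x) ^ (1 / 2 : ℝ) ∂ν =
      ∫⁻ u in Iio b, ENNReal.ofReal (b - u) ^ (-(1 / 2) : ℝ) * ν (Iio (min u t)) := by
  have hswap := lintegral_Iio_mul_lintegral_Ioo_swap (μ := volume) (ν := ν.restrict (Iio t))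
    (φ := fun _ => 1) measurable_const
    (by fun_prop : Measurable fun u => ENNReal.ofReal (b - u) ^ (-(1 / 2) : ℝ)) b
  simp only [one_mul, setLIntegral_one, Measure.restrict_restrict measurableSet_Iio,
    Iio_inter_Iio, min_eq_right htb.le] at hswap
  rw [← hswap]
  refine setLIntegral_congr_fun measurableSet_Iio fun x hx => ?_
  exact (lintegral_Ioo_ofReal_sub_rpow_neg_half (hx.out.trans htb).le).symm

theorem lintegral_Iio_two_mul_ofReal_sub_rpow_half_le {ν : Measure ℝ} [SFinite ν] {b t : ℝ}
    {B : ℝ≥0∞} (hB : ∀ y ≤ b, ν (Iio y) * ENNReal.ofReal (b - y) ≤ B) (htb : t < b) :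
    ∫⁻ x in Iio t, 2 * ENNReal.ofReal (b - x) ^ (1 / 2 : ℝ) ∂ν ≤
      4 * B * ENNReal.ofReal (b - t) ^ (-(1 / 2) : ℝ) := by
  set k : ℝ → ℝ≥0∞ := fun u => ENNReal.ofReal (b - u) ^ (-(1 / 2) : ℝ)
  have hk : Measurable k := by fun_prop
  have hν : ∀ y < b, ν (Iio y) ≤ B * ENNReal.ofReal (b - y) ^ (-1 : ℝ) := fun y hy => by
    rw [ENNReal.rpow_neg_one, ← div_eq_mul_inv, ENNReal.le_div_iff_mul_le
      (.inl (ENNReal.ofReal_pos.2 (sub_pos.2 hy)).ne') (.inl ENNReal.ofReal_ne_top)]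
    exact hB y hy.le
  have hfar : ∫⁻ u in Iio t, k u * ν (Iio (min u t)) ≤
      2 * B * ENNReal.ofReal (b - t) ^ (-(1 / 2) : ℝ) := by
    calc ∫⁻ u in Iio t, k u * ν (Iio (min u t))
        ≤ ∫⁻ u in Iio t, B * ENNReal.ofReal (b - u) ^ (-(3 / 2) : ℝ) := by
          refine setLIntegral_mono' measurableSet_Iio fun u hu => ?_
          have hub : u < b := hu.out.trans htb
          calc k u * ν (Iio (min u t))
              ≤ k u * (B * ENNReal.ofReal (b - u) ^ (-1 : ℝ)) := by
                rw [min_eq_left hu.out.le]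
                gcongr
                exact hν u hub
            _ = B * ENNReal.ofReal (b - u) ^ (-(3 / 2) : ℝ) := by
                rw [mul_left_comm, ofReal_rpow_mul_ofReal_rpow (sub_pos.2 hub)]
                norm_num
      _ = 2 * B * ENNReal.ofReal (b - t) ^ (-(1 / 2) : ℝ) := by
          rw [lintegral_const_mul _ (by fun_prop),
            lintegral_Iio_ofReal_sub_rpow_neg_three_halves htb]
          ring
  have hnear : ∫⁻ u in Ico t b, k u * ν (Iio (min u t)) ≤
      2 * B * ENNReal.ofReal (b - t) ^ (-(1 / 2) : ℝ) := by
    calc ∫⁻ u in Ico t b, k u * ν (Iio (min u t))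
        ≤ ∫⁻ u in Ico t b, k u * (B * ENNReal.ofReal (b - t) ^ (-1 : ℝ)) := by
          refine setLIntegral_mono' measurableSet_Ico fun u hu => ?_
          rw [min_eq_right hu.1]
          gcongr
          exact hν t htb
      _ = 2 * B * ENNReal.ofReal (b - t) ^ (-(1 / 2) : ℝ) := by
          rw [lintegral_mul_const _ hk, setLIntegral_congr Ioo_ae_eq_Ico.symm,
            lintegral_Ioo_ofReal_sub_rpow_neg_half htb.le, mul_mul_mul_comm,
            ofReal_rpow_mul_ofReal_rpow (sub_pos.2 htb)]
          norm_num
  calc ∫⁻ x in Iio t, 2 * ENNReal.ofReal (b - x) ^ (1 / 2 : ℝ) ∂ν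
      = (∫⁻ u in Iio t, k u * ν (Iio (min u t))) +
          ∫⁻ u in Ico t b, k u * ν (Iio (min u t)) := by
        rw [lintegral_Iio_two_mul_ofReal_sub_rpow_half_eq htb, ← Iio_union_Ico_eq_Iio htb.le,
          lintegral_union measurableSet_Ico
            ((Iio_disjoint_Ici le_rfl).mono_right Ico_subset_Ici_self)]
    _ ≤ 2 * B * ENNReal.ofReal (b - t) ^ (-(1 / 2) : ℝ) +
          2 * B * ENNReal.ofReal (b - t) ^ (-(1 / 2) : ℝ) := add_le_add hfar hnear
    _ = 4 * B * ENNReal.ofReal (b - t) ^ (-(1 / 2) : ℝ) := by ring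

theorem ofReal_sq_eq_enorm_sq (y : ℝ) : ENNReal.ofReal (y ^ 2) = ‖y‖ₑ ^ 2 := by
  rw [Real.enorm_eq_ofReal_abs, ← ENNReal.ofReal_pow (abs_nonneg y), sq_abs]

theorem ofReal_sq_sub_le_of_eq_integral {G g : ℝ → ℝ} (hg : Measurable g) {x b : ℝ}
    (hxb : x < b) (hG : G b - G x = ∫ t in Ioc x b, g t) :
    ENNReal.ofReal ((G x - G b) ^ 2) ≤ 2 * ENNReal.ofReal (b - x) ^ (1 / 2 : ℝ) *
      ∫⁻ t in Ioo x b, ENNReal.ofReal (g t ^ 2) * ENNReal.ofReal (b - t) ^ (1 / 2 : ℝ) := by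
  have hw0 : ∀ᵐ t ∂volume.restrict (Ioo x b), ENNReal.ofReal (b - t) ^ (1 / 2 : ℝ) ≠ 0 :=
    (ae_restrict_iff' measurableSet_Ioo).2 (.of_forall fun t ht =>
      (ENNReal.rpow_pos (ENNReal.ofReal_pos.2 (sub_pos.2 ht.2)) ENNReal.ofReal_ne_top).ne')
  have hwtop : ∀ᵐ t ∂volume.restrict (Ioo x b), ENNReal.ofReal (b - t) ^ (1 / 2 : ℝ) ≠ ⊤ :=
    .of_forall fun _ => ENNReal.rpow_ne_top_of_nonneg (by norm_num) ENNReal.ofReal_ne_top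
  calc ENNReal.ofReal ((G x - G b) ^ 2) = ‖∫ t in Ioo x b, g t‖ₑ ^ 2 := by
        rw [ofReal_sq_eq_enorm_sq, ← enorm_neg, neg_sub, hG, integral_Ioc_eq_integral_Ioo]
    _ ≤ (∫⁻ t in Ioo x b, ‖g t‖ₑ) ^ 2 := by gcongr; exact enorm_integral_le_lintegral_enorm _
    _ ≤ (∫⁻ t in Ioo x b, (ENNReal.ofReal (b - t) ^ (1 / 2 : ℝ))⁻¹) *
          ∫⁻ t in Ioo x b, ‖g t‖ₑ ^ 2 * ENNReal.ofReal (b - t) ^ (1 / 2 : ℝ) :=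
        lintegral_sq_le_lintegral_inv_mul_lintegral (by fun_prop) (by fun_prop) hw0 hwtop
    _ = _ := by
        simp_rw [← ENNReal.rpow_neg, ← ofReal_sq_eq_enorm_sq]
        rw [lintegral_Ioo_ofReal_sub_rpow_neg_half hxb.le]

theorem lintegral_Iio_ofReal_sq_sub_le {ν : Measure ℝ} [SFinite ν] {b : ℝ} {B : ℝ≥0∞}
    (hB : ∀ y ≤ b, ν (Iio y) * ENNReal.ofReal (b - y) ≤ B) {G g : ℝ → ℝ} (hg : Measurable g)
    (hG : ∀ x < b, G b - G x = ∫ t in Ioc x b, g t) :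
    ∫⁻ x in Iio b, ENNReal.ofReal ((G x - G b) ^ 2) ∂ν ≤
      4 * B * ∫⁻ t in Iio b, ENNReal.ofReal (g t ^ 2) := by
  calc ∫⁻ x in Iio b, ENNReal.ofReal ((G x - G b) ^ 2) ∂ν
      ≤ ∫⁻ x in Iio b, 2 * ENNReal.ofReal (b - x) ^ (1 / 2 : ℝ) *
          (∫⁻ t in Ioo x b, ENNReal.ofReal (g t ^ 2) * ENNReal.ofReal (b - t) ^ (1 / 2 : ℝ)) ∂ν :=
        setLIntegral_mono' measurableSet_Iio fun x hx =>
          ofReal_sq_sub_le_of_eq_integral hg hx (hG x hx)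
    _ = ∫⁻ t in Iio b, ENNReal.ofReal (g t ^ 2) * ENNReal.ofReal (b - t) ^ (1 / 2 : ℝ) *
          ∫⁻ x in Iio t, 2 * ENNReal.ofReal (b - x) ^ (1 / 2 : ℝ) ∂ν :=
        lintegral_Iio_mul_lintegral_Ioo_swap (by fun_prop) (by fun_prop) b
    _ ≤ ∫⁻ t in Iio b, ENNReal.ofReal (g t ^ 2) * ENNReal.ofReal (b - t) ^ (1 / 2 : ℝ) *
          (4 * B * ENNReal.ofReal (b - t) ^ (-(1 / 2) : ℝ)) := by
        refine setLIntegral_mono' measurableSet_Iio fun t ht => ?_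
        gcongr
        exact lintegral_Iio_two_mul_ofReal_sub_rpow_half_le hB ht
    _ = 4 * B * ∫⁻ t in Iio b, ENNReal.ofReal (g t ^ 2) := by
        rw [← lintegral_const_mul _ (by fun_prop)]
        refine setLIntegral_congr_fun measurableSet_Iio fun t ht => ?_
        rw [mul_mul_mul_comm, ofReal_rpow_mul_ofReal_rpow (sub_pos.2 ht.out)]
        norm_num [mul_comm]

theorem map_orderIso_eq_volume (e : ℝ ≃o ℝ) {μ : Measure ℝ}
    (hμ : ∀ c d, c ≤ d → μ (Ioc c d) = ENNReal.ofReal (e d - e c)) : μ.map e = volume := by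
  refine Measure.ext_of_Ioc' _ _ (fun c d hcd => ?_) (fun c d hcd => ?_) <;>
    rw [Measure.map_apply e.continuous.measurable measurableSet_Ioc, e.preimage_Ioc,
      hμ _ _ (e.symm.monotone hcd.le), e.apply_symm_apply, e.apply_symm_apply]
  · exact ENNReal.ofReal_ne_top
  · rw [Real.volume_Ioc]

theorem lintegral_Iio_ofReal_sq_sub_le_of_orderIso (e : ℝ ≃o ℝ) {μ : Measure ℝ}
    (hμ : ∀ c d, c ≤ d → μ (Ioc c d) = ENNReal.ofReal (e d - e c))
    {m : Measure ℝ} [SFinite m] {a : ℝ} {B : ℝ≥0∞}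
    (hB : ∀ x ≤ a, m (Iio x) * ENNReal.ofReal (e a - e x) ≤ B) {F f : ℝ → ℝ}
    (hf : Measurable f) (hF : ∀ x < a, F a - F x = ∫ t in Ioc x a, f t ∂μ) :
    ∫⁻ x in Iio a, ENNReal.ofReal ((F x - F a) ^ 2) ∂m ≤
      4 * B * ∫⁻ t in Iio a, ENNReal.ofReal (f t ^ 2) ∂μ := by
  have he : MeasurableEmbedding e := e.toHomeomorph.measurableEmbedding
  have hμe : MeasurePreserving e μ volume := ⟨he.measurable, map_orderIso_eq_volume e hμ⟩
  have hB' : ∀ y ≤ e a, m.map e (Iio y) * ENNReal.ofReal (e a - y) ≤ B := fun y hy => by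
    simpa [he.map_apply] using hB (e.symm y) (e.symm_apply_le.2 hy)
  have hG : ∀ y < e a, F (e.symm (e a)) - F (e.symm y) = ∫ u in Ioc y (e a), f (e.symm u) := by
    intro y hy
    rw [← hμe.setIntegral_preimage_emb he]
    simpa using hF (e.symm y) (e.symm_apply_lt.2 hy)
  have key := lintegral_Iio_ofReal_sq_sub_le hB' (G := F ∘ e.symm)
    (hf.comp e.symm.continuous.measurable) hG
  rw [he.restrict_map, he.lintegral_map,
    ← hμe.setLIntegral_comp_preimage_emb he (fun u => ENNReal.ofReal ((f ∘ e.symm) u ^ 2))] at key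
  simpa using key

theorem hardy_upper_bound_left_general
    (S : ℝ → ℝ) (hScont : Continuous S) (hSmono : StrictMono S)
    (hStop : Filter.Tendsto S Filter.atTop Filter.atTop)
    (hSbot : Filter.Tendsto S Filter.atBot Filter.atBot)
    (μS : Measure ℝ)
    (hμS : ∀ c d : ℝ, c ≤ d → μS (Ioc c d) = ENNReal.ofReal (S d - S c))
    (m : Measure ℝ) [IsFiniteMeasure m]
    (a : ℝ)
    (B : ℝ≥0∞)
    (hB : B = ⨆ x ∈ Iic a, m (Iio x) * ENNReal.ofReal (S a - S x))
    (F f : ℝ → ℝ)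
    (hfint : Integrable f μS)
    (hdF : ∀ c d : ℝ, c < d → F d - F c = ∫ t in Ioc c d, f t ∂μS) :
    ∫⁻ x in Iio a, ENNReal.ofReal ((F x - F a) ^ 2) ∂m ≤
      4 * B * ∫⁻ t in Iio a, ENNReal.ofReal (f t ^ 2) ∂μS := by
  let e : ℝ ≃o ℝ := hSmono.orderIsoOfSurjective S (hScont.surjective hStop hSbot)
  have hf := hfint.aemeasurable
  have hBe : ∀ x ≤ a, m (Iio x) * ENNReal.ofReal (e a - e x) ≤ B := fun x hx =>
    hB ▸ le_iSup₂ (f := fun x (_ : x ∈ Iic a) => m (Iio x) * ENNReal.ofReal (S a - S x)) x hx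
  have hF : ∀ x < a, F a - F x = ∫ t in Ioc x a, hf.mk f t ∂μS := fun x hx =>
    (hdF x a hx).trans (integral_congr_ae (ae_restrict_of_ae hf.ae_eq_mk))
  calc _ ≤ 4 * B * ∫⁻ t in Iio a, ENNReal.ofReal (hf.mk f t ^ 2) ∂μS :=
        lintegral_Iio_ofReal_sq_sub_le_of_orderIso e hμS hBe hf.measurable_mk hF
    _ = _ := by
        congr 1
        exact lintegral_congr_ae
          (ae_restrict_of_ae (hf.ae_eq_mk.fun_comp fun y => ENNReal.ofReal (y ^ 2)).symm)

/-- If `B⁻ₐ < ∞`, then the Hardy inequality over `(−∞,a)` holds with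
constant `4 · B⁻ₐ`: for every `F ∈ 𝓕` (with density `f = dF/dS`),
`∫_{(−∞,a)} (F(x) − F(a))² dm ≤ 4·B⁻ₐ · ∫_{(−∞,a)} f² dS`. -/
theorem hardy_upper_bound_left
    (S : ℝ → ℝ) (hScont : Continuous S) (hSmono : StrictMono S)
    (hStop : Filter.Tendsto S Filter.atTop Filter.atTop)
    (hSbot : Filter.Tendsto S Filter.atBot Filter.atBot)
    (μS : Measure ℝ)
    (hμS : ∀ c d : ℝ, c ≤ d → μS (Ioc c d) = ENNReal.ofReal (S d - S c))
    (m : Measure ℝ) [IsFiniteMeasure m]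
    (a : ℝ)
    (B : ℝ≥0∞)
    (hB : B = ⨆ x ∈ Iic a, m (Iio x) * ENNReal.ofReal (S a - S x))
    (hBfin : B ≠ ⊤)
    (F f : ℝ → ℝ)
    (hFL2 : MemLp F 2 m)
    (hfint : Integrable f μS)
    (hfL2 : MemLp f 2 μS)
    (hdF : ∀ c d : ℝ, c < d → F d - F c = ∫ t in Ioc c d, f t ∂μS) :
    ∫⁻ x in Iio a, ENNReal.ofReal ((F x - F a) ^ 2) ∂m ≤
      4 * B * ∫⁻ t in Iio a, ENNReal.ofReal (f t ^ 2) ∂μS :=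
  hardy_upper_bound_left_general S hScont hSmono hStop hSbot μS hμS m a B hB F f hfint hdF
end

section
/- Let a ∈ ℝ and let A < ∞ be such that the Hardy inequality over (−∞,a) holds with constant A, i.e. for every F ∈ 𝓕, ∫_{(−∞,a)} (F(x) − F(a))² dm(x) ≤ A · ∫_{(−∞,a)} (dF/dS)²(t) dS(t). Then B⁻ₐ ≤ A; equivalently, for every r < a, (S(a) − S(r))·m((−∞,r)) ≤ A. -/
/-!
Test the Hardy inequality on `F = S ∘ clamp_[r, a] - S r`, whose `dS`-derivative is the
indicator of `(r, a]`. Left of `r` one has `(F - F a)² = (S a - S r)²`, so the left side is at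
least `(S a - S r)² m((-∞, r))`, while the right side is at most `A (S a - S r)`.
Dividing by `S a - S r` gives the bound.
-/

open MeasureTheory Set
open scoped ENNReal

theorem Ioc_max_min_eq_inter {α : Type*} [LinearOrder α] (r a c d : α) :
    Ioc (max r (min c a)) (max r (min d a)) = Ioc c d ∩ Ioc r a := by
  ext x
  simp only [mem_Ioc, mem_inter_iff, max_lt_iff, min_lt_iff, le_max_iff, le_min_iff]
  grind

theorem ENNReal.le_of_mul_mul_le_mul {x y z : ℝ≥0∞} (h0 : x ≠ 0) (htop : x ≠ ⊤)
    (h : x * x * y ≤ z * x) : x * y ≤ z := by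
  rw [mul_assoc, mul_comm z] at h
  exact (ENNReal.mul_le_mul_iff_right h0 htop).1 h

theorem setLIntegral_ofReal_indicator_one_sq_le {α : Type*} [MeasurableSpace α] (μ : Measure α)
    {s : Set α} (hs : MeasurableSet s) (t : Set α) :
    ∫⁻ x in t, ENNReal.ofReal (s.indicator (fun _ => (1 : ℝ)) x ^ 2) ∂μ ≤ μ s := by
  have hsq :
      (fun x => ENNReal.ofReal (s.indicator (fun _ => (1 : ℝ)) x ^ 2)) = s.indicator 1 := by
    ext x
    by_cases hx : x ∈ s <;> simp [hx]
  rw [hsq, ← lintegral_indicator_one hs]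
  exact setLIntegral_le_lintegral _ _

section Stieltjes

variable {S : ℝ → ℝ} {μS : Measure ℝ}

theorem measureReal_Ioc_eq_sub (hS : Monotone S)
    (hμS : ∀ c d : ℝ, c ≤ d → μS (Ioc c d) = ENNReal.ofReal (S d - S c)) {c d : ℝ}
    (hcd : c ≤ d) : μS.real (Ioc c d) = S d - S c := by
  rw [measureReal_def, hμS c d hcd, ENNReal.toReal_ofReal (sub_nonneg.2 (hS hcd))]

def stieltjesRamp (S : ℝ → ℝ) (r a x : ℝ) : ℝ := S (max r (min x a)) - S r

variable {r a : ℝ}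

theorem stieltjesRamp_monotone (hS : Monotone S) : Monotone (stieltjesRamp S r a) :=
  fun _ _ hxy => sub_le_sub_right (hS (max_le_max_left r (min_le_min_right a hxy))) _

theorem stieltjesRamp_of_le {x : ℝ} (hx : x ≤ r) : stieltjesRamp S r a x = 0 := by
  simp [stieltjesRamp, max_eq_left ((min_le_left x a).trans hx)]

theorem stieltjesRamp_of_ge {x : ℝ} (hra : r ≤ a) (hx : a ≤ x) :
    stieltjesRamp S r a x = S a - S r := by
  simp [stieltjesRamp, min_eq_right hx, hra]

theorem abs_stieltjesRamp_le (hS : Monotone S) (hra : r ≤ a) (x : ℝ) :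
    |stieltjesRamp S r a x| ≤ S a - S r := by
  have hlo : r ≤ max r (min x a) := le_max_left _ _
  have hhi : max r (min x a) ≤ a := max_le hra (min_le_right _ _)
  rw [stieltjesRamp, abs_of_nonneg (sub_nonneg.2 (hS hlo))]
  exact sub_le_sub_right (hS hhi) _

theorem memLp_stieltjesRamp (hS : Monotone S) (hra : r ≤ a) (p : ℝ≥0∞) (m : Measure ℝ)
    [IsFiniteMeasure m] : MemLp (stieltjesRamp S r a) p m :=
  MemLp.of_bound (stieltjesRamp_monotone hS).measurable.aestronglyMeasurable _
    (ae_of_all _ fun x => abs_stieltjesRamp_le hS hra x)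

theorem stieltjesRamp_sub_eq_setIntegral (hS : Monotone S)
    (hμS : ∀ c d : ℝ, c ≤ d → μS (Ioc c d) = ENNReal.ofReal (S d - S c)) {c d : ℝ}
    (hcd : c ≤ d) :
    stieltjesRamp S r a d - stieltjesRamp S r a c =
      ∫ t in Ioc c d, (Ioc r a).indicator (fun _ => 1) t ∂μS := by
  have hmono : max r (min c a) ≤ max r (min d a) := max_le_max_left r (min_le_min_right a hcd)
  rw [setIntegral_indicator measurableSet_Ioc, setIntegral_const, smul_eq_mul, mul_one,
    ← Ioc_max_min_eq_inter, measureReal_Ioc_eq_sub hS hμS hmono]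
  simp [stieltjesRamp]

theorem ofReal_sq_mul_measure_Iio_le_setLIntegral_stieltjesRamp (hS : Monotone S) (hra : r < a)
    (m : Measure ℝ) :
    ENNReal.ofReal (S a - S r) * ENNReal.ofReal (S a - S r) * m (Iio r) ≤
      ∫⁻ x in Iio a, ENNReal.ofReal ((stieltjesRamp S r a x - stieltjesRamp S r a a) ^ 2) ∂m := by
  have hconst : ∀ x ∈ Iio r,
      ENNReal.ofReal ((stieltjesRamp S r a x - stieltjesRamp S r a a) ^ 2) =
        ENNReal.ofReal (S a - S r) * ENNReal.ofReal (S a - S r) := by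
    intro x hx
    rw [stieltjesRamp_of_le (mem_Iio.1 hx).le, stieltjesRamp_of_ge hra.le le_rfl, zero_sub,
      neg_sq, sq, ENNReal.ofReal_mul (sub_nonneg.2 (hS hra.le))]
  calc _ = ∫⁻ x in Iio r,
          ENNReal.ofReal ((stieltjesRamp S r a x - stieltjesRamp S r a a) ^ 2) ∂m := by
        rw [setLIntegral_congr_fun measurableSet_Iio hconst, setLIntegral_const]
    _ ≤ _ := lintegral_mono_set (Iio_subset_Iio hra.le)

theorem ofReal_sub_mul_measure_Iio_le_of_hardy (hS : Monotone S)
    (hμS : ∀ c d : ℝ, c ≤ d → μS (Ioc c d) = ENNReal.ofReal (S d - S c))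
    (m : Measure ℝ) [IsFiniteMeasure m] (A : ℝ)
    (hHardy : ∀ F f : ℝ → ℝ, MemLp F 2 m → Integrable f μS → MemLp f 2 μS →
      (∀ c d : ℝ, c < d → F d - F c = ∫ t in Ioc c d, f t ∂μS) →
      ∫⁻ x in Iio a, ENNReal.ofReal ((F x - F a) ^ 2) ∂m ≤
        ENNReal.ofReal A * ∫⁻ t in Iio a, ENNReal.ofReal (f t ^ 2) ∂μS)
    (hra : r < a) :
    ENNReal.ofReal (S a - S r) * m (Iio r) ≤ ENNReal.ofReal A := by
  rcases eq_or_ne (ENNReal.ofReal (S a - S r)) 0 with hzero | hpos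
  · simp [hzero]
  have hμ : μS (Ioc r a) = ENNReal.ofReal (S a - S r) := hμS r a hra.le
  have hfin : μS (Ioc r a) ≠ ⊤ := hμ ▸ ENNReal.ofReal_ne_top
  set f : ℝ → ℝ := (Ioc r a).indicator fun _ => 1
  have hf_int : Integrable f μS :=
    (integrable_indicator_iff measurableSet_Ioc).2 (integrableOn_const hfin)
  have hf_memLp : MemLp f 2 μS := memLp_indicator_const 2 measurableSet_Ioc 1 (Or.inr hfin)
  have hHardy_ramp := hHardy _ f (memLp_stieltjesRamp hS hra.le 2 m) hf_int hf_memLp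
    fun c d hcd => stieltjesRamp_sub_eq_setIntegral hS hμS hcd.le
  refine ENNReal.le_of_mul_mul_le_mul hpos ENNReal.ofReal_ne_top ?_
  calc _ ≤ _ := ofReal_sq_mul_measure_Iio_le_setLIntegral_stieltjesRamp hS hra m
    _ ≤ _ := hHardy_ramp
    _ ≤ _ := by
      gcongr
      exact hμ ▸ setLIntegral_ofReal_indicator_one_sq_le μS measurableSet_Ioc _

end Stieltjes

theorem hardy_lower_bound_left_general
    (S : ℝ → ℝ) (hSmono : StrictMono S)
    (μS : Measure ℝ)
    (hμS : ∀ c d : ℝ, c ≤ d → μS (Ioc c d) = ENNReal.ofReal (S d - S c))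
    (m : Measure ℝ) [IsFiniteMeasure m]
    (a : ℝ) (A : ℝ)
    (hHardy : ∀ F f : ℝ → ℝ, MemLp F 2 m → Integrable f μS → MemLp f 2 μS →
      (∀ c d : ℝ, c < d → F d - F c = ∫ t in Ioc c d, f t ∂μS) →
      ∫⁻ x in Iio a, ENNReal.ofReal ((F x - F a) ^ 2) ∂m ≤
        ENNReal.ofReal A * ∫⁻ t in Iio a, ENNReal.ofReal (f t ^ 2) ∂μS) :
    (⨆ x ∈ Iic a, m (Iio x) * ENNReal.ofReal (S a - S x)) ≤ ENNReal.ofReal A ∧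
      ∀ r : ℝ, r < a →
        ENNReal.ofReal (S a - S r) * m (Iio r) ≤ ENNReal.ofReal A := by
  have key := fun r (hr : r < a) =>
    ofReal_sub_mul_measure_Iio_le_of_hardy hSmono.monotone hμS m A hHardy hr
  refine ⟨iSup₂_le fun x hx => ?_, key⟩
  rcases (mem_Iic.1 hx).lt_or_eq with hlt | rfl
  · rw [mul_comm]
    exact key x hlt
  · simp

/-- If the Hardy inequality over `(−∞,a)` holds with a (finite) constant `A`,
then `B⁻ₐ ≤ A`; equivalently, for every `r < a`, `(S(a) − S(r)) · m((−∞,r)) ≤ A`. -/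
theorem hardy_lower_bound_left
    (S : ℝ → ℝ) (hScont : Continuous S) (hSmono : StrictMono S)
    (hStop : Filter.Tendsto S Filter.atTop Filter.atTop)
    (hSbot : Filter.Tendsto S Filter.atBot Filter.atBot)
    (μS : Measure ℝ)
    (hμS : ∀ c d : ℝ, c ≤ d → μS (Ioc c d) = ENNReal.ofReal (S d - S c))
    (m : Measure ℝ) [IsFiniteMeasure m]
    (a : ℝ) (A : ℝ)
    (hHardy : ∀ F f : ℝ → ℝ, MemLp F 2 m → Integrable f μS → MemLp f 2 μS →
      (∀ c d : ℝ, c < d → F d - F c = ∫ t in Ioc c d, f t ∂μS) →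
      ∫⁻ x in Iio a, ENNReal.ofReal ((F x - F a) ^ 2) ∂m ≤
        ENNReal.ofReal A * ∫⁻ t in Iio a, ENNReal.ofReal (f t ^ 2) ∂μS) :
    (⨆ x ∈ Iic a, m (Iio x) * ENNReal.ofReal (S a - S x)) ≤ ENNReal.ofReal A ∧
      ∀ r : ℝ, r < a →
        ENNReal.ofReal (S a - S r) * m (Iio r) ≤ ENNReal.ofReal A :=
  hardy_lower_bound_left_general S hSmono μS hμS m a A hHardy
end

section
/- Let a ∈ ℝ and suppose that the Hardy inequality over (a,∞) holds with finite constant A⁺ and the Hardy inequality over (−∞,a) holds with finite constant A⁻ (for all F ∈ 𝓕). Then the Poincaré inequality holds with constant max(A⁺, A⁻): for every F ∈ 𝓕, ∫_ℝ (F(x) − m̄(F))² dm(x) ≤ max(A⁺, A⁻) · ∫_ℝ (dF/dS)²(t) dS(t). In particular the optimal Poincaré constant c_P satisfies c_P ≤ inf_a max(A⁺ₐ, A⁻ₐ). -/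
open MeasureTheory Set
open scoped ENNReal

/-! The mean `m̄(F)` minimises `b ↦ ∫ (F - b)² dm`, so the left-hand side is at most
`∫ (F - F(a))² dm`. Since `F - F(a)` vanishes at `a`, this integral splits into the integrals
over `(-∞, a)` and `(a, ∞)`, which the two Hardy inequalities bound by `A⁻` and `A⁺` times the
energy of `F` on the corresponding half-line. -/

section MeanMinimizes

variable {α : Type*} [MeasurableSpace α] {μ : Measure α} [IsFiniteMeasure μ] {F : α → ℝ}

theorem integral_sq_sub_average_le (hF : MemLp F 2 μ) (b : ℝ) :
    ∫ x, (F x - ⨍ y, F y ∂μ) ^ 2 ∂μ ≤ ∫ x, (F x - b) ^ 2 ∂μ := by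
  set c := ⨍ y, F y ∂μ
  have hsq : Integrable (fun x => (F x - c) ^ 2) μ := (hF.sub (memLp_const c)).integrable_sq
  have hlin : Integrable (fun x => 2 * (c - b) * (F x - c)) μ :=
    ((hF.integrable one_le_two).sub (integrable_const c)).const_mul _
  have hexpand : ∀ x, (F x - b) ^ 2 = (F x - c) ^ 2 + 2 * (c - b) * (F x - c) + (c - b) ^ 2 :=
    fun x => by ring
  calc ∫ x, (F x - c) ^ 2 ∂μ
      ≤ ∫ x, (F x - c) ^ 2 ∂μ + 2 * (c - b) * ∫ x, F x - c ∂μ + μ.real univ * (c - b) ^ 2 := by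
        rw [integral_sub_average]
        nlinarith [measureReal_nonneg (μ := μ) (s := univ), sq_nonneg (c - b)]
    _ = ∫ x, (F x - b) ^ 2 ∂μ := by
        simp_rw [hexpand]
        rw [integral_add (hsq.add hlin : Integrable (fun x => _ + _) μ) (integrable_const _),
          integral_add hsq hlin, integral_const_mul, integral_const, smul_eq_mul]

theorem lintegral_sq_sub_average_le (hF : MemLp F 2 μ) (b : ℝ) :
    ∫⁻ x, ENNReal.ofReal ((F x - ⨍ y, F y ∂μ) ^ 2) ∂μ ≤
      ∫⁻ x, ENNReal.ofReal ((F x - b) ^ 2) ∂μ := by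
  have hofReal : ∀ c : ℝ, ∫⁻ x, ENNReal.ofReal ((F x - c) ^ 2) ∂μ =
      ENNReal.ofReal (∫ x, (F x - c) ^ 2 ∂μ) := fun c =>
    (ofReal_integral_eq_lintegral_ofReal (hF.sub (memLp_const c)).integrable_sq
      (Filter.Eventually.of_forall fun _ => sq_nonneg _)).symm
  rw [hofReal, hofReal]
  exact ENNReal.ofReal_le_ofReal (integral_sq_sub_average_le hF b)

end MeanMinimizes

section SplitAtPoint

variable {α : Type*} [LinearOrder α] [TopologicalSpace α] [OrderClosedTopology α]
  [MeasurableSpace α] [OpensMeasurableSpace α] {μ : Measure α} {g : α → ℝ≥0∞} {a : α}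

theorem lintegral_Iio_add_lintegral_Ioi :
    ∫⁻ x in Iio a, g x ∂μ + ∫⁻ x in Ioi a, g x ∂μ = ∫⁻ x in {a}ᶜ, g x ∂μ := by
  rw [← Iio_union_Ioi]
  exact (lintegral_union measurableSet_Ioi Ioi_disjoint_Iio_same.symm).symm

theorem lintegral_Iio_add_lintegral_Ioi_le :
    ∫⁻ x in Iio a, g x ∂μ + ∫⁻ x in Ioi a, g x ∂μ ≤ ∫⁻ x, g x ∂μ :=
  lintegral_Iio_add_lintegral_Ioi.trans_le (setLIntegral_le_lintegral _ _)

theorem lintegral_eq_lintegral_Iio_add_lintegral_Ioi (hga : g a = 0) :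
    ∫⁻ x, g x ∂μ = ∫⁻ x in Iio a, g x ∂μ + ∫⁻ x in Ioi a, g x ∂μ := by
  rw [lintegral_Iio_add_lintegral_Ioi, ← lintegral_add_compl g (measurableSet_singleton a),
    lintegral_singleton, hga, zero_mul, zero_add]

end SplitAtPoint

theorem poincare_from_hardy_general
    (μS : Measure ℝ)
    (m : Measure ℝ) [IsFiniteMeasure m]
    (a : ℝ) (Aplus Aminus : ℝ)
    (hHardyPlus : ∀ F f : ℝ → ℝ, MemLp F 2 m → Integrable f μS → MemLp f 2 μS →
      (∀ c d : ℝ, c < d → F d - F c = ∫ t in Ioc c d, f t ∂μS) →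
      ∫⁻ x in Ioi a, ENNReal.ofReal ((F x - F a) ^ 2) ∂m ≤
        ENNReal.ofReal Aplus * ∫⁻ t in Ioi a, ENNReal.ofReal (f t ^ 2) ∂μS)
    (hHardyMinus : ∀ F f : ℝ → ℝ, MemLp F 2 m → Integrable f μS → MemLp f 2 μS →
      (∀ c d : ℝ, c < d → F d - F c = ∫ t in Ioc c d, f t ∂μS) →
      ∫⁻ x in Iio a, ENNReal.ofReal ((F x - F a) ^ 2) ∂m ≤
        ENNReal.ofReal Aminus * ∫⁻ t in Iio a, ENNReal.ofReal (f t ^ 2) ∂μS) :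
    ∀ F f : ℝ → ℝ, MemLp F 2 m → Integrable f μS → MemLp f 2 μS →
      (∀ c d : ℝ, c < d → F d - F c = ∫ t in Ioc c d, f t ∂μS) →
      ∫⁻ x, ENNReal.ofReal ((F x - (m univ).toReal⁻¹ * ∫ y, F y ∂m) ^ 2) ∂m ≤
        ENNReal.ofReal (max Aplus Aminus) * ∫⁻ t, ENNReal.ofReal (f t ^ 2) ∂μS := by
  intro F f hF hfInt hf2 hFf
  have hmean : (m univ).toReal⁻¹ * ∫ y, F y ∂m = ⨍ y, F y ∂m := by
    rw [average_eq, measureReal_def, smul_eq_mul]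
  calc ∫⁻ x, ENNReal.ofReal ((F x - (m univ).toReal⁻¹ * ∫ y, F y ∂m) ^ 2) ∂m
      ≤ ∫⁻ x, ENNReal.ofReal ((F x - F a) ^ 2) ∂m := hmean ▸ lintegral_sq_sub_average_le hF (F a)
    _ = ∫⁻ x in Iio a, ENNReal.ofReal ((F x - F a) ^ 2) ∂m +
          ∫⁻ x in Ioi a, ENNReal.ofReal ((F x - F a) ^ 2) ∂m :=
        lintegral_eq_lintegral_Iio_add_lintegral_Ioi (by simp)
    _ ≤ ENNReal.ofReal Aminus * ∫⁻ t in Iio a, ENNReal.ofReal (f t ^ 2) ∂μS +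
          ENNReal.ofReal Aplus * ∫⁻ t in Ioi a, ENNReal.ofReal (f t ^ 2) ∂μS :=
        add_le_add (hHardyMinus F f hF hfInt hf2 hFf) (hHardyPlus F f hF hfInt hf2 hFf)
    _ ≤ ENNReal.ofReal (max Aplus Aminus) * (∫⁻ t in Iio a, ENNReal.ofReal (f t ^ 2) ∂μS +
          ∫⁻ t in Ioi a, ENNReal.ofReal (f t ^ 2) ∂μS) := by
        rw [mul_add]
        gcongr
        exacts [le_max_right _ _, le_max_left _ _]
    _ ≤ ENNReal.ofReal (max Aplus Aminus) * ∫⁻ t, ENNReal.ofReal (f t ^ 2) ∂μS := by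
        gcongr
        exact lintegral_Iio_add_lintegral_Ioi_le

/-- If the Hardy inequalities over `(a,∞)` and `(−∞,a)` hold with finite
constants `A⁺` and `A⁻` respectively, then the Poincaré inequality holds with constant
`max(A⁺, A⁻)`: for every `F ∈ 𝓕`,
`∫_ℝ (F(x) − m̄(F))² dm ≤ max(A⁺,A⁻) · ∫_ℝ (dF/dS)² dS`.
(In particular the optimal Poincaré constant satisfies `c_P ≤ inf_a max(A⁺ₐ, A⁻ₐ)`.) -/
theorem poincare_from_hardy
    (S : ℝ → ℝ) (hScont : Continuous S) (hSmono : StrictMono S)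
    (hStop : Filter.Tendsto S Filter.atTop Filter.atTop)
    (hSbot : Filter.Tendsto S Filter.atBot Filter.atBot)
    (μS : Measure ℝ)
    (hμS : ∀ c d : ℝ, c ≤ d → μS (Ioc c d) = ENNReal.ofReal (S d - S c))
    (m : Measure ℝ) [IsFiniteMeasure m] (hm : m univ ≠ 0)
    (a : ℝ) (Aplus Aminus : ℝ)
    (hHardyPlus : ∀ F f : ℝ → ℝ, MemLp F 2 m → Integrable f μS → MemLp f 2 μS →
      (∀ c d : ℝ, c < d → F d - F c = ∫ t in Ioc c d, f t ∂μS) →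
      ∫⁻ x in Ioi a, ENNReal.ofReal ((F x - F a) ^ 2) ∂m ≤
        ENNReal.ofReal Aplus * ∫⁻ t in Ioi a, ENNReal.ofReal (f t ^ 2) ∂μS)
    (hHardyMinus : ∀ F f : ℝ → ℝ, MemLp F 2 m → Integrable f μS → MemLp f 2 μS →
      (∀ c d : ℝ, c < d → F d - F c = ∫ t in Ioc c d, f t ∂μS) →
      ∫⁻ x in Iio a, ENNReal.ofReal ((F x - F a) ^ 2) ∂m ≤
        ENNReal.ofReal Aminus * ∫⁻ t in Iio a, ENNReal.ofReal (f t ^ 2) ∂μS) :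
    ∀ F f : ℝ → ℝ, MemLp F 2 m → Integrable f μS → MemLp f 2 μS →
      (∀ c d : ℝ, c < d → F d - F c = ∫ t in Ioc c d, f t ∂μS) →
      ∫⁻ x, ENNReal.ofReal ((F x - (m univ).toReal⁻¹ * ∫ y, F y ∂m) ^ 2) ∂m ≤
        ENNReal.ofReal (max Aplus Aminus) * ∫⁻ t, ENNReal.ofReal (f t ^ 2) ∂μS :=
  poincare_from_hardy_general μS m a Aplus Aminus hHardyPlus hHardyMinus
end

section
/- Suppose the Poincaré inequality holds with constant c: for every F ∈ 𝓕, ∫_ℝ (F(x) − m̄(F))² dm(x) ≤ c·∫_ℝ (dF/dS)² dS. Let a ∈ ℝ and let A⁺, A⁻ > 0, F₊, F₋ ∈ 𝓕 satisfy ∫_{(a,∞)} (F₊(x) − F₊(a))² dm(x) ≥ A⁺ ∫_{(a,∞)} (dF₊/dS)² dS > 0 and ∫_{(−∞,a)} (F₋(x) − F₋(a))² dm(x) ≥ A⁻ ∫_{(−∞,a)} (dF₋/dS)² dS > 0. Then min(A⁺, A⁻) ≤ c. Consequently the optimal Poincaré constant c_P satisfies c_P ≥ sup_a min(A⁺ₐ,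 A⁻ₐ), where A⁺ₐ, A⁻ₐ are the optimal Hardy constants over (a,∞) and (−∞,a). -/
/-!
Glue the two Hardy witnesses at `a`: `G = α (F₊ - F₊(a))` on `(a, ∞)` and `β (F₋ - F₋(a))` on
`(-∞, a)`, with `(α, β) ≠ 0` chosen so that `G` has `m`-mean zero. Its `dS`-derivative is
`α F₊'` on `(a, ∞)` and `β F₋'` on `(-∞, a)` (`dS` has no atom at `a` since `S` is continuous),
so both sides of the Poincaré inequality for `G` split along the two half-lines, and the
Hardy bounds give `min(A⁺, A⁻) E ≤ ∫ G² dm ≤ c E` with `0 < E < ∞` the energy of `G`.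
-/

open MeasureTheory Set Filter Topology
open scoped ENNReal

/-- `dF ≪ dμ` with density `dF/dμ = f`. -/
def IsPrimitive (μ : Measure ℝ) (F f : ℝ → ℝ) : Prop :=
  ∀ x y : ℝ, x < y → F y - F x = ∫ t in Ioc x y, f t ∂μ

noncomputable def glueAt (a : ℝ) (f g : ℝ → ℝ) : ℝ → ℝ :=
  (Ioi a).indicator f + (Iio a).indicator g

lemma measure_singleton_eq_zero_of_continuousWithinAt {μ : Measure ℝ} {S : ℝ → ℝ}
    (hμ : ∀ c d : ℝ, c ≤ d → μ (Ioc c d) = ENNReal.ofReal (S d - S c)) {a : ℝ}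
    (hS : ContinuousWithinAt S (Iio a) a) : μ {a} = 0 := by
  have hlim : Tendsto (fun x => ENNReal.ofReal (S a - S x)) (𝓝[<] a) (𝓝 0) := by
    simpa using ENNReal.tendsto_ofReal ((tendsto_const_nhds (x := S a)).sub hS)
  refine le_antisymm (ge_of_tendsto hlim ?_) bot_le
  filter_upwards [self_mem_nhdsWithin] with x hx
  rw [← hμ x a hx.le]
  exact measure_mono (singleton_subset_iff.2 ⟨hx, le_rfl⟩)

lemma exists_ne_zero_mul_add_mul_eq_zero (u v : ℝ) :
    ∃ α β : ℝ, (α ≠ 0 ∨ β ≠ 0) ∧ α * u + β * v = 0 := by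
  by_cases hu : u = 0
  · exact ⟨1, 0, Or.inl one_ne_zero, by simp [hu]⟩
  · exact ⟨v, -u, Or.inr (neg_ne_zero.2 hu), by ring⟩

namespace IsPrimitive

variable {μ : Measure ℝ} {F G f g : ℝ → ℝ}

lemma sub_of_le (hF : IsPrimitive μ F f) {x y : ℝ} (hxy : x ≤ y) :
    F y - F x = ∫ t in Ioc x y, f t ∂μ := by
  rcases hxy.eq_or_lt with rfl | hlt
  · simp
  · exact hF x y hlt

lemma sub_const (hF : IsPrimitive μ F f) (C : ℝ) : IsPrimitive μ (fun x => F x - C) f :=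
  fun x y hxy => by rw [sub_sub_sub_cancel_right]; exact hF x y hxy

lemma const_mul (hF : IsPrimitive μ F f) (α : ℝ) :
    IsPrimitive μ (fun x => α * F x) (fun t => α * f t) :=
  fun x y hxy => by rw [integral_const_mul, ← hF x y hxy, mul_sub]

lemma add (hF : IsPrimitive μ F f) (hG : IsPrimitive μ G g) (hf : LocallyIntegrable f μ)
    (hg : LocallyIntegrable g μ) : IsPrimitive μ (F + G) (f + g) := by
  intro x y hxy
  have hIoc {h : ℝ → ℝ} (hh : LocallyIntegrable h μ) : IntegrableOn h (Ioc x y) μ :=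
    (hh.integrableOn_isCompact isCompact_Icc).mono_set Ioc_subset_Icc_self
  simp only [Pi.add_apply]
  rw [integral_add (hIoc hf) (hIoc hg), ← hF x y hxy, ← hG x y hxy]
  ring

lemma indicator_Ioi (hF : IsPrimitive μ F f) {a : ℝ} (ha : F a = 0) :
    IsPrimitive μ ((Ioi a).indicator F) ((Ioi a).indicator f) := by
  have hmax (x : ℝ) : (Ioi a).indicator F x = F (max x a) := by
    by_cases hx : x ∈ Ioi a
    · rw [indicator_of_mem hx, max_eq_left hx.le]
    · rw [indicator_of_notMem hx, max_eq_right (not_lt.1 hx), ha]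
  intro x y hxy
  rw [hmax, hmax, setIntegral_indicator measurableSet_Ioi, Ioc_inter_Ioi]
  rcases lt_or_ge a y with hay | hya
  · rw [max_eq_left hay.le]
    exact hF.sub_of_le (max_le hxy.le hay.le)
  · rw [max_eq_right hya, max_eq_right (hxy.le.trans hya), Ioc_eq_empty (by simpa using hya)]
    simp

lemma indicator_Iio (hF : IsPrimitive μ F f) {a : ℝ} (ha : F a = 0) (hμa : μ {a} = 0) :
    IsPrimitive μ ((Iio a).indicator F) ((Iio a).indicator f) := by
  have hmin (x : ℝ) : (Iio a).indicator F x = F (min x a) := by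
    by_cases hx : x ∈ Iio a
    · rw [indicator_of_mem hx, min_eq_left hx.le]
    · rw [indicator_of_notMem hx, min_eq_right (not_lt.1 hx), ha]
  intro x y hxy
  rw [hmin, hmin, setIntegral_indicator measurableSet_Iio,
    setIntegral_congr_set ((ae_eq_refl _).inter (Iio_ae_eq_Iic' hμa)), Ioc_inter_Iic]
  rcases lt_or_ge x a with hxa | hax
  · rw [min_eq_left hxa.le]
    exact hF.sub_of_le (le_min hxy.le hxa.le)
  · rw [min_eq_right hax, min_eq_right (hax.trans hxy.le),
      Ioc_eq_empty (not_lt.2 hax)]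
    simp

lemma glueAt (hF : IsPrimitive μ F f) (hG : IsPrimitive μ G g) {a : ℝ} (hFa : F a = 0)
    (hGa : G a = 0) (hμa : μ {a} = 0) (hf : LocallyIntegrable f μ)
    (hg : LocallyIntegrable g μ) : IsPrimitive μ (glueAt a F G) (glueAt a f g) :=
  (hF.indicator_Ioi hFa).add (hG.indicator_Iio hGa hμa) (hf.indicator measurableSet_Ioi)
    (hg.indicator measurableSet_Iio)

end IsPrimitive

lemma lintegral_ofReal_const_mul_sq {X : Type*} [MeasurableSpace X] (μ : Measure X) (c : ℝ)
    (f : X → ℝ) :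
    ∫⁻ x, ENNReal.ofReal ((c * f x) ^ 2) ∂μ =
      ENNReal.ofReal (c ^ 2) * ∫⁻ x, ENNReal.ofReal (f x ^ 2) ∂μ := by
  rw [← lintegral_const_mul' _ _ ENNReal.ofReal_ne_top]
  simp only [mul_pow, ENNReal.ofReal_mul (sq_nonneg c)]

section glueAt

variable {μ ν : Measure ℝ} {a α β : ℝ} {F G f g : ℝ → ℝ}

lemma glueAt_self : glueAt a f g a = 0 := by
  simp [glueAt]

lemma eqOn_glueAt_Ioi : EqOn (glueAt a f g) f (Ioi a) := fun x (hx : a < x) => by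
  simp [glueAt, hx, hx.not_gt]

lemma eqOn_glueAt_Iio : EqOn (glueAt a f g) g (Iio a) := fun x (hx : x < a) => by
  simp [glueAt, hx, hx.not_gt]

lemma MeasureTheory.MemLp.glueAt {p : ℝ≥0∞} (hf : MemLp f p μ) (hg : MemLp g p μ) (a : ℝ) :
    MemLp (glueAt a f g) p μ :=
  (hf.indicator measurableSet_Ioi).add (hg.indicator measurableSet_Iio)

lemma MeasureTheory.Integrable.glueAt (hf : Integrable f μ) (hg : Integrable g μ) (a : ℝ) :
    Integrable (glueAt a f g) μ :=
  (hf.indicator measurableSet_Ioi).add (hg.indicator measurableSet_Iio)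

lemma integral_glueAt (hf : IntegrableOn f (Ioi a) μ) (hg : IntegrableOn g (Iio a) μ) :
    ∫ x, glueAt a f g x ∂μ = ∫ x in Ioi a, f x ∂μ + ∫ x in Iio a, g x ∂μ := by
  simp only [glueAt, Pi.add_apply]
  rw [integral_add (hf.integrable_indicator measurableSet_Ioi)
    (hg.integrable_indicator measurableSet_Iio), integral_indicator measurableSet_Ioi,
    integral_indicator measurableSet_Iio]

lemma lintegral_ofReal_sq_glueAt :
    ∫⁻ x, ENNReal.ofReal (glueAt a f g x ^ 2) ∂μ =
      ∫⁻ x in Ioi a, ENNReal.ofReal (f x ^ 2) ∂μ + ∫⁻ x in Iio a, ENNReal.ofReal (g x ^ 2) ∂μ := by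
  rw [← lintegral_add_compl _ (measurableSet_singleton a), lintegral_singleton, glueAt_self,
    ← Iio_union_Ioi, lintegral_union measurableSet_Ioi Iio_disjoint_Ioi_same,
    setLIntegral_congr_fun measurableSet_Ioi fun x hx => by rw [eqOn_glueAt_Ioi hx],
    setLIntegral_congr_fun measurableSet_Iio fun x hx => by rw [eqOn_glueAt_Iio hx]]
  simp [add_comm]

lemma lintegral_ofReal_sq_glueAt_const_mul :
    ∫⁻ x, ENNReal.ofReal (glueAt a (fun x => α * f x) (fun x => β * g x) x ^ 2) ∂μ =
      ENNReal.ofReal (α ^ 2) * ∫⁻ x in Ioi a, ENNReal.ofReal (f x ^ 2) ∂μ +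
        ENNReal.ofReal (β ^ 2) * ∫⁻ x in Iio a, ENNReal.ofReal (g x ^ 2) ∂μ := by
  rw [lintegral_ofReal_sq_glueAt, lintegral_ofReal_const_mul_sq, lintegral_ofReal_const_mul_sq]

lemma lintegral_ofReal_sq_glueAt_const_mul_ne_zero (hαβ : α ≠ 0 ∨ β ≠ 0)
    (hf : ∫⁻ x in Ioi a, ENNReal.ofReal (f x ^ 2) ∂μ ≠ 0)
    (hg : ∫⁻ x in Iio a, ENNReal.ofReal (g x ^ 2) ∂μ ≠ 0) :
    ∫⁻ x, ENNReal.ofReal (glueAt a (fun x => α * f x) (fun x => β * g x) x ^ 2) ∂μ ≠ 0 := by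
  rw [lintegral_ofReal_sq_glueAt_const_mul]
  rcases hαβ with hα | hβ
  · exact fun h => mul_ne_zero (by simpa using hα) hf (add_eq_zero.1 h).1
  · exact fun h => mul_ne_zero (by simpa using hβ) hg (add_eq_zero.1 h).2

lemma ofReal_min_mul_lintegral_sq_glueAt_le {A B : ℝ}
    (hF : ENNReal.ofReal A * ∫⁻ x in Ioi a, ENNReal.ofReal (f x ^ 2) ∂ν ≤
      ∫⁻ x in Ioi a, ENNReal.ofReal (F x ^ 2) ∂μ)
    (hG : ENNReal.ofReal B * ∫⁻ x in Iio a, ENNReal.ofReal (g x ^ 2) ∂ν ≤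
      ∫⁻ x in Iio a, ENNReal.ofReal (G x ^ 2) ∂μ) :
    ENNReal.ofReal (min A B) *
        ∫⁻ x, ENNReal.ofReal (glueAt a (fun x => α * f x) (fun x => β * g x) x ^ 2) ∂ν ≤
      ∫⁻ x, ENNReal.ofReal (glueAt a (fun x => α * F x) (fun x => β * G x) x ^ 2) ∂μ := by
  rw [lintegral_ofReal_sq_glueAt_const_mul, lintegral_ofReal_sq_glueAt_const_mul, mul_add,
    mul_left_comm, mul_left_comm (ENNReal.ofReal (min A B))]
  gcongr
  · exact (mul_le_mul_left (ENNReal.ofReal_le_ofReal (min_le_left A B)) _).trans hF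
  · exact (mul_le_mul_left (ENNReal.ofReal_le_ofReal (min_le_right A B)) _).trans hG

end glueAt

lemma le_of_ofReal_mul_le_ofReal_mul {A c : ℝ} (hA : 0 < A) {E : ℝ≥0∞} (hE₀ : E ≠ 0)
    (hE : E ≠ ∞) (h : ENNReal.ofReal A * E ≤ ENNReal.ofReal c * E) : A ≤ c :=
  (ENNReal.ofReal_le_ofReal_iff'.1 ((ENNReal.mul_le_mul_iff_left hE₀ hE).1 h)).resolve_right
    hA.not_ge

theorem poincare_lower_bound_general
    (S : ℝ → ℝ) (hScont : Continuous S)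
    (μS : Measure ℝ)
    (hμS : ∀ c d : ℝ, c ≤ d → μS (Ioc c d) = ENNReal.ofReal (S d - S c))
    (m : Measure ℝ) [IsFiniteMeasure m]
    (c : ℝ)
    (hPoincare : ∀ F f : ℝ → ℝ, MemLp F 2 m → Integrable f μS → MemLp f 2 μS →
      (∀ x y : ℝ, x < y → F y - F x = ∫ t in Ioc x y, f t ∂μS) →
      ∫⁻ x, ENNReal.ofReal ((F x - (m univ).toReal⁻¹ * ∫ y, F y ∂m) ^ 2) ∂m ≤
        ENNReal.ofReal c * ∫⁻ t, ENNReal.ofReal (f t ^ 2) ∂μS)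
    (a : ℝ) (Aplus Aminus : ℝ) (hAplus : 0 < Aplus) (hAminus : 0 < Aminus)
    (Fp fp Fm fm : ℝ → ℝ)
    (hFpL2 : MemLp Fp 2 m) (hfpint : Integrable fp μS) (hfpL2 : MemLp fp 2 μS)
    (hdFp : ∀ x y : ℝ, x < y → Fp y - Fp x = ∫ t in Ioc x y, fp t ∂μS)
    (hFmL2 : MemLp Fm 2 m) (hfmint : Integrable fm μS) (hfmL2 : MemLp fm 2 μS)
    (hdFm : ∀ x y : ℝ, x < y → Fm y - Fm x = ∫ t in Ioc x y, fm t ∂μS)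
    (hWitPlus : ENNReal.ofReal Aplus * ∫⁻ t in Ioi a, ENNReal.ofReal (fp t ^ 2) ∂μS ≤
      ∫⁻ x in Ioi a, ENNReal.ofReal ((Fp x - Fp a) ^ 2) ∂m)
    (hWitPlusPos : 0 < ∫⁻ t in Ioi a, ENNReal.ofReal (fp t ^ 2) ∂μS)
    (hWitMinus : ENNReal.ofReal Aminus * ∫⁻ t in Iio a, ENNReal.ofReal (fm t ^ 2) ∂μS ≤
      ∫⁻ x in Iio a, ENNReal.ofReal ((Fm x - Fm a) ^ 2) ∂m)
    (hWitMinusPos : 0 < ∫⁻ t in Iio a, ENNReal.ofReal (fm t ^ 2) ∂μS) :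
    min Aplus Aminus ≤ c := by
  have hatom : μS {a} = 0 :=
    measure_singleton_eq_zero_of_continuousWithinAt hμS hScont.continuousWithinAt
  obtain ⟨α, β, hαβ, hmean⟩ := exists_ne_zero_mul_add_mul_eq_zero
    (∫ x in Ioi a, (Fp x - Fp a) ∂m) (∫ x in Iio a, (Fm x - Fm a) ∂m)
  have hPp : MemLp (fun x => α * (Fp x - Fp a)) 2 m :=
    (hFpL2.sub (memLp_const (Fp a))).const_mul α
  have hPm : MemLp (fun x => β * (Fm x - Fm a)) 2 m :=
    (hFmL2.sub (memLp_const (Fm a))).const_mul β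
  set G := glueAt a (fun x => α * (Fp x - Fp a)) (fun x => β * (Fm x - Fm a))
  set g := glueAt a (fun t => α * fp t) (fun t => β * fm t)
  have hG_mean : ∫ x, G x ∂m = 0 := by
    rw [integral_glueAt (hPp.integrable one_le_two).integrableOn
      (hPm.integrable one_le_two).integrableOn, integral_const_mul, integral_const_mul, hmean]
  have hG_prim : IsPrimitive μS G g :=
    ((IsPrimitive.sub_const hdFp (Fp a)).const_mul α).glueAt
      ((IsPrimitive.sub_const hdFm (Fm a)).const_mul β) (by simp) (by simp) hatom
      (hfpint.const_mul α).locallyIntegrable (hfmint.const_mul β).locallyIntegrable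
  have hgL2 := (hfpL2.const_mul α).glueAt (hfmL2.const_mul β) a
  have hpoinc := hPoincare G g (hPp.glueAt hPm a) ((hfpint.const_mul α).glueAt
    (hfmint.const_mul β) a) hgL2 hG_prim
  simp only [hG_mean, mul_zero, sub_zero] at hpoinc
  exact le_of_ofReal_mul_le_ofReal_mul (lt_min hAplus hAminus)
    (lintegral_ofReal_sq_glueAt_const_mul_ne_zero hαβ hWitPlusPos.ne' hWitMinusPos.ne')
    hgL2.integrable_sq.lintegral_lt_top.ne
    ((ofReal_min_mul_lintegral_sq_glueAt_le hWitPlus hWitMinus).trans hpoinc)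

/-- If the Poincaré inequality holds with constant `c`, and for some `a` there
are `F₊, F₋ ∈ 𝓕` witnessing that the Hardy inequalities over `(a,∞)` and `(−∞,a)` cannot
hold with constants smaller than `A⁺ > 0` and `A⁻ > 0` respectively (the corresponding
Dirichlet energies being positive), then `min(A⁺, A⁻) ≤ c`.
(Consequently the optimal Poincaré constant satisfies `c_P ≥ sup_a min(A⁺ₐ, A⁻ₐ)`.) -/
theorem poincare_lower_bound
    (S : ℝ → ℝ) (hScont : Continuous S) (hSmono : StrictMono S)
    (hStop : Filter.Tendsto S Filter.atTop Filter.atTop)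
    (hSbot : Filter.Tendsto S Filter.atBot Filter.atBot)
    (μS : Measure ℝ)
    (hμS : ∀ c d : ℝ, c ≤ d → μS (Ioc c d) = ENNReal.ofReal (S d - S c))
    (m : Measure ℝ) [IsFiniteMeasure m] (hm : m univ ≠ 0)
    (c : ℝ)
    (hPoincare : ∀ F f : ℝ → ℝ, MemLp F 2 m → Integrable f μS → MemLp f 2 μS →
      (∀ x y : ℝ, x < y → F y - F x = ∫ t in Ioc x y, f t ∂μS) →
      ∫⁻ x, ENNReal.ofReal ((F x - (m univ).toReal⁻¹ * ∫ y, F y ∂m) ^ 2) ∂m ≤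
        ENNReal.ofReal c * ∫⁻ t, ENNReal.ofReal (f t ^ 2) ∂μS)
    (a : ℝ) (Aplus Aminus : ℝ) (hAplus : 0 < Aplus) (hAminus : 0 < Aminus)
    (Fp fp Fm fm : ℝ → ℝ)
    (hFpL2 : MemLp Fp 2 m) (hfpint : Integrable fp μS) (hfpL2 : MemLp fp 2 μS)
    (hdFp : ∀ x y : ℝ, x < y → Fp y - Fp x = ∫ t in Ioc x y, fp t ∂μS)
    (hFmL2 : MemLp Fm 2 m) (hfmint : Integrable fm μS) (hfmL2 : MemLp fm 2 μS)
    (hdFm : ∀ x y : ℝ, x < y → Fm y - Fm x = ∫ t in Ioc x y, fm t ∂μS)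
    (hWitPlus : ENNReal.ofReal Aplus * ∫⁻ t in Ioi a, ENNReal.ofReal (fp t ^ 2) ∂μS ≤
      ∫⁻ x in Ioi a, ENNReal.ofReal ((Fp x - Fp a) ^ 2) ∂m)
    (hWitPlusPos : 0 < ∫⁻ t in Ioi a, ENNReal.ofReal (fp t ^ 2) ∂μS)
    (hWitMinus : ENNReal.ofReal Aminus * ∫⁻ t in Iio a, ENNReal.ofReal (fm t ^ 2) ∂μS ≤
      ∫⁻ x in Iio a, ENNReal.ofReal ((Fm x - Fm a) ^ 2) ∂m)
    (hWitMinusPos : 0 < ∫⁻ t in Iio a, ENNReal.ofReal (fm t ^ 2) ∂μS) :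
    min Aplus Aminus ≤ c :=
  poincare_lower_bound_general S hScont μS hμS m c hPoincare a Aplus Aminus hAplus hAminus Fp fp Fm
    fm hFpL2 hfpint hfpL2 hdFp hFmL2 hfmint hfmL2 hdFm hWitPlus hWitPlusPos hWitMinus hWitMinusPos
end

section
/- Let a ∈ ℝ and let B be a real number with m((x,∞))·(S(x) − S(a)) ≤ B for all x ≥ a. Then for every measurable function f : ℝ → [0,∞] and every x > a, J(Kf)(x) ≤ B·(Kf(x) + Jf(x)). -/
/-!
Split `Kf(t)`, for `t > x`, into `Kf(x)` plus the integral of `h y = (S(y) − S(a)) f(y)` over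
`(x, t]`. The first part contributes `(S(x) − S(a)) m((x,∞)) Kf(x) ≤ B Kf(x)`. By Tonelli the second
part contributes `(S(x) − S(a)) ∫_{(x,∞)} h(y) m([y,∞)) dm(y)`, and `m([y,∞)) (S(y) − S(a)) ≤ B` is
the limit of the hypothesis at `z ↑ y`, since `S` is continuous; this leaves `B Jf(x)`.

When `S(x) > S(a)` the hypothesis at `x` makes `m` finite on `(x,∞)`, so Tonelli applies;
otherwise the left side vanishes.
-/

open MeasureTheory Set Filter Topology
open scoped ENNReal

/-- The operator `J`: `Jf(x) = (S(x) − S(a)) · ∫_{(x,∞)} f dm`. -/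
noncomputable def Jop (S : ℝ → ℝ) (m : Measure ℝ) (a : ℝ) (f : ℝ → ℝ≥0∞) : ℝ → ℝ≥0∞ :=
  fun x => ENNReal.ofReal (S x - S a) * ∫⁻ y in Ioi x, f y ∂m

/-- The operator `K`: `Kf(x) = ∫_{(a,x]} (S(y) − S(a)) f(y) dm(y)`. -/
noncomputable def Kop (S : ℝ → ℝ) (m : Measure ℝ) (a : ℝ) (f : ℝ → ℝ≥0∞) : ℝ → ℝ≥0∞ :=
  fun x => ∫⁻ y in Ioc a x, ENNReal.ofReal (S y - S a) * f y ∂m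

theorem measure_Ici_mul_le_of_eventually_measure_Ioi_mul_le {m : Measure ℝ} {φ : ℝ → ℝ≥0∞}
    {y : ℝ} {c : ℝ≥0∞} (hφ : ContinuousWithinAt φ (Iio y) y)
    (h : ∀ᶠ z in 𝓝[<] y, m (Ioi z) * φ z ≤ c) :
    m (Ici y) * φ y ≤ c := by
  rcases eq_or_ne (φ y) 0 with hφy | hφy
  · simp [hφy]
  refine le_of_tendsto (ENNReal.Tendsto.const_mul hφ (Or.inl hφy)) ?_
  filter_upwards [h, self_mem_nhdsWithin] with z hz hzy
  exact (mul_le_mul_left (measure_mono (Ici_subset_Ioi.2 hzy)) _).trans hz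

theorem lintegral_setLIntegral_Iic_eq {α : Type*} [MeasurableSpace α] [TopologicalSpace α]
    [LinearOrder α] [OrderClosedTopology α] [SecondCountableTopology α] [OpensMeasurableSpace α]
    {μ : Measure α} [SFinite μ] {h : α → ℝ≥0∞} (hh : Measurable h) :
    ∫⁻ t, ∫⁻ y in Iic t, h y ∂μ ∂μ = ∫⁻ y, h y * μ (Ici y) ∂μ := by
  have hmeas : Measurable (Function.uncurry fun t y => (Iic t).indicator h y) := by
    have : (Function.uncurry fun t y => (Iic t).indicator h y)
        = {p : α × α | p.2 ≤ p.1}.indicator (fun p => h p.2) := by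
      ext p
      simp only [Function.uncurry, indicator_apply, mem_Iic, mem_ofPred_eq]
    rw [this]
    exact (hh.comp measurable_snd).indicator (measurableSet_le measurable_snd measurable_fst)
  calc ∫⁻ t, ∫⁻ y in Iic t, h y ∂μ ∂μ = ∫⁻ t, ∫⁻ y, (Iic t).indicator h y ∂μ ∂μ := by
        simp_rw [lintegral_indicator measurableSet_Iic]
    _ = ∫⁻ y, ∫⁻ t, (Ici y).indicator (fun _ => h y) t ∂μ ∂μ := by
        rw [lintegral_lintegral_swap hmeas.aemeasurable]
        simp only [indicator_apply, mem_Iic, mem_Ici]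
    _ = ∫⁻ y, h y * μ (Ici y) ∂μ := by
        simp_rw [lintegral_indicator_const measurableSet_Ici]

section Operators

variable {S : ℝ → ℝ} {m : Measure ℝ} {a : ℝ} {f : ℝ → ℝ≥0∞}

theorem Kop_eq_add_setLIntegral_Ioc {x t : ℝ} (hax : a ≤ x) (hxt : x ≤ t) :
    Kop S m a f t = Kop S m a f x + ∫⁻ y in Ioc x t, ENNReal.ofReal (S y - S a) * f y ∂m := by
  rw [Kop, ← Ioc_union_Ioc_eq_Ioc hax hxt,
    lintegral_union measurableSet_Ioc (Ioc_disjoint_Ioc_of_le le_rfl)]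
  rfl

theorem setLIntegral_Ioi_Kop_le (hS : Measurable S) (hf : Measurable f) {x : ℝ} (hax : a ≤ x)
    (hfin : m (Ioi x) ≠ ∞) :
    ∫⁻ t in Ioi x, Kop S m a f t ∂m ≤
      m (Ioi x) * Kop S m a f x +
        ∫⁻ y in Ioi x, ENNReal.ofReal (S y - S a) * f y * m (Ici y) ∂m := by
  set h : ℝ → ℝ≥0∞ := fun y => ENNReal.ofReal (S y - S a) * f y
  have hh : Measurable h := (ENNReal.measurable_ofReal.comp (hS.sub measurable_const)).mul hf
  have : IsFiniteMeasure (m.restrict (Ioi x)) := isFiniteMeasure_restrict.2 hfin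
  calc ∫⁻ t in Ioi x, Kop S m a f t ∂m
      = ∫⁻ t in Ioi x, (Kop S m a f x + ∫⁻ y in Iic t, h y ∂m.restrict (Ioi x)) ∂m := by
        refine setLIntegral_congr_fun measurableSet_Ioi fun t ht => ?_
        rw [Kop_eq_add_setLIntegral_Ioc hax ht.le,
          Measure.restrict_restrict measurableSet_Iic, Iic_inter_Ioi]
    _ = m (Ioi x) * Kop S m a f x + ∫⁻ y in Ioi x, h y * m.restrict (Ioi x) (Ici y) ∂m := by
        rw [lintegral_add_left measurable_const, setLIntegral_const, mul_comm,
          lintegral_setLIntegral_Iic_eq hh]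
    _ ≤ _ := by
        gcongr
        exact Measure.restrict_le_self

theorem setLIntegral_Ioi_mul_measure_Ici_le (hS : Continuous S) {B : ℝ}
    (hB : ∀ x : ℝ, a ≤ x → m (Ioi x) * ENNReal.ofReal (S x - S a) ≤ ENNReal.ofReal B)
    {x : ℝ} (hax : a ≤ x) :
    ∫⁻ y in Ioi x, ENNReal.ofReal (S y - S a) * f y * m (Ici y) ∂m ≤
      ENNReal.ofReal B * ∫⁻ y in Ioi x, f y ∂m := by
  rw [← lintegral_const_mul' _ _ ENNReal.ofReal_ne_top]
  refine setLIntegral_mono' measurableSet_Ioi fun y (hy : x < y) => ?_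
  have hy_bound : m (Ici y) * ENNReal.ofReal (S y - S a) ≤ ENNReal.ofReal B := by
    refine measure_Ici_mul_le_of_eventually_measure_Ioi_mul_le
      (ENNReal.continuous_ofReal.comp (hS.sub continuous_const)).continuousWithinAt ?_
    filter_upwards [Ioo_mem_nhdsLT (hax.trans_lt hy)] with z hz
    exact hB z hz.1.le
  calc ENNReal.ofReal (S y - S a) * f y * m (Ici y)
      = f y * (m (Ici y) * ENNReal.ofReal (S y - S a)) := by ring
    _ ≤ f y * ENNReal.ofReal B := by gcongr
    _ = ENNReal.ofReal B * f y := mul_comm _ _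

end Operators

theorem JK_le_B_KplusJ_general
    (S : ℝ → ℝ) (hScont : Continuous S)
    (m : Measure ℝ)
    (a B : ℝ)
    (hB : ∀ x : ℝ, a ≤ x → m (Ioi x) * ENNReal.ofReal (S x - S a) ≤ ENNReal.ofReal B)
    (f : ℝ → ℝ≥0∞) (hf : Measurable f) :
    ∀ x : ℝ, a < x →
      Jop S m a (Kop S m a f) x ≤
        ENNReal.ofReal B * (Kop S m a f x + Jop S m a f x) := by
  intro x hx
  rcases le_or_gt (S x) (S a) with hSx | hSx
  · simp [Jop, ENNReal.ofReal_eq_zero.2 (sub_nonpos.2 hSx)]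
  have hfin : m (Ioi x) ≠ ∞ := by
    intro htop
    have := hB x hx.le
    rw [htop, ENNReal.top_mul (ENNReal.ofReal_pos.2 (sub_pos.2 hSx)).ne'] at this
    exact ENNReal.ofReal_ne_top (top_le_iff.1 this)
  calc Jop S m a (Kop S m a f) x
      ≤ ENNReal.ofReal (S x - S a) *
          (m (Ioi x) * Kop S m a f x + ENNReal.ofReal B * ∫⁻ y in Ioi x, f y ∂m) := by
        refine mul_le_mul_right ((setLIntegral_Ioi_Kop_le hScont.measurable hf hx.le hfin).trans ?_) _
        gcongr
        exact setLIntegral_Ioi_mul_measure_Ici_le hScont hB hx.le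
    _ = m (Ioi x) * ENNReal.ofReal (S x - S a) * Kop S m a f x +
          ENNReal.ofReal B * Jop S m a f x := by
        rw [Jop]
        ring
    _ ≤ ENNReal.ofReal B * Kop S m a f x + ENNReal.ofReal B * Jop S m a f x := by
        gcongr
        exact hB x hx.le
    _ = _ := (mul_add _ _ _).symm

/-- If `m((x,∞))·(S(x) − S(a)) ≤ B` for all `x ≥ a`, then for every
measurable `f : ℝ → [0,∞]` and every `x > a`, `J(Kf)(x) ≤ B·(Kf(x) + Jf(x))`. -/
theorem JK_le_B_KplusJ
    (S : ℝ → ℝ) (hScont : Continuous S) (hSmono : StrictMono S)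
    (m : Measure ℝ) [IsFiniteMeasure m]
    (a B : ℝ)
    (hB : ∀ x : ℝ, a ≤ x → m (Ioi x) * ENNReal.ofReal (S x - S a) ≤ ENNReal.ofReal B)
    (f : ℝ → ℝ≥0∞) (hf : Measurable f) :
    ∀ x : ℝ, a < x →
      Jop S m a (Kop S m a f) x ≤
        ENNReal.ofReal B * (Kop S m a f x + Jop S m a f x) :=
  JK_le_B_KplusJ_general S hScont m a B hB f hf
end

section
/- Let a ∈ ℝ and let B be a real number with m((x,∞))·(S(x) − S(a)) ≤ B for all x ≥ a. Then for every integer n ≥ 0 and every x > a, J(Kⁿ1)(x) ≤ B · ∑_{i=0}^{n} B^{n−i} Kⁱ1(x), where 1 denotes the constant function equal to 1 and Kⁿ denotes the n-fold iterate of K. -/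
/-!
Write `s = S - S a`. For `y > x > a`, `K f y = K f x + ∫_{(x,y]} s f dm`; integrating over `y > x`
and swapping the order of integration gives
`J (K f) x = s x m((x,∞)) K f x + s x ∫_{(x,∞)} s(z) m([z,∞)) f(z) dm(z)`.
The hypothesis bounds `s x m((x,∞))` by `B`, and by left continuity of `S` also `s z m([z,∞))`,
so `J (K f) ≤ B K f + B J f`; induction on `n` unrolls this recursion into the geometric sum.
-/

open MeasureTheory Set
open scoped ENNReal Topology

theorem Finset.sum_range_succ_pow_sub_mul {R : Type*} [CommSemiring R] (b : R) (c : ℕ → R)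
    (n : ℕ) :
    ∑ i ∈ Finset.range (n + 2), b ^ (n + 1 - i) * c i =
      c (n + 1) + b * ∑ i ∈ Finset.range (n + 1), b ^ (n - i) * c i := by
  rw [Finset.sum_range_succ, Nat.sub_self, pow_zero, one_mul, add_comm, Finset.mul_sum]
  congr 1
  refine Finset.sum_congr rfl fun i hi => ?_
  rw [← mul_assoc, ← pow_succ', Nat.succ_sub (Nat.lt_succ_iff.mp (Finset.mem_range.mp hi))]

theorem setLIntegral_Ioi_setLIntegral_Ioc {m : Measure ℝ} [SFinite m] {g : ℝ → ℝ≥0∞}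
    (hg : Measurable g) (x : ℝ) :
    ∫⁻ y in Ioi x, ∫⁻ z in Ioc x y, g z ∂m ∂m = ∫⁻ z in Ioi x, m (Ici z) * g z ∂m := by
  have hIoc : ∀ y, ∫⁻ z in Ioc x y, g z ∂m = ∫⁻ z in Ioi x, (Iic y).indicator g z ∂m := by
    intro y
    rw [lintegral_indicator measurableSet_Iic, Measure.restrict_restrict measurableSet_Iic,
      inter_comm, Ioi_inter_Iic]
  have hmeas : Measurable (Function.uncurry fun y z : ℝ => (Iic y).indicator g z) := by
    have : (Function.uncurry fun y z : ℝ => (Iic y).indicator g z) =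
        {p : ℝ × ℝ | p.2 ≤ p.1}.indicator (fun p => g p.2) := by
      funext p
      simp [Function.uncurry, indicator_apply]
    rw [this]
    exact (hg.comp measurable_snd).indicator (measurableSet_le measurable_snd measurable_fst)
  simp_rw [hIoc]
  rw [lintegral_lintegral_swap hmeas.aemeasurable]
  refine setLIntegral_congr_fun measurableSet_Ioi fun z (hz : x < z) => ?_
  have hswap : ∀ y, (Iic y).indicator g z = (Ici z).indicator (fun _ => g z) y := by
    intro y
    simp [indicator_apply]
  simp_rw [hswap]
  rw [lintegral_indicator measurableSet_Ici, Measure.restrict_restrict measurableSet_Ici,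
    setLIntegral_const, inter_eq_left.mpr (Ici_subset_Ioi.mpr hz), mul_comm]

section Kop

variable {S : ℝ → ℝ} {m : Measure ℝ} {a : ℝ}

theorem Kop_monotone (f : ℝ → ℝ≥0∞) : Monotone (Kop S m a f) :=
  fun _ _ hxy => lintegral_mono_set (Ioc_subset_Ioc_right hxy)

theorem measurable_iterate_Kop {f : ℝ → ℝ≥0∞} (hf : Measurable f) (n : ℕ) :
    Measurable ((Kop S m a)^[n] f) := by
  cases n with
  | zero => exact hf
  | succ n =>
    rw [Function.iterate_succ_apply']
    exact (Kop_monotone _).measurable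

theorem Kop_eq_add (f : ℝ → ℝ≥0∞) {x y : ℝ} (hax : a ≤ x) (hxy : x ≤ y) :
    Kop S m a f y = Kop S m a f x + ∫⁻ z in Ioc x y, ENNReal.ofReal (S z - S a) * f z ∂m := by
  rw [Kop, Kop, ← Ioc_union_Ioc_eq_Ioc hax hxy,
    lintegral_union measurableSet_Ioc (Ioc_disjoint_Ioc_of_le le_rfl)]

theorem setLIntegral_Ioi_Kop [SFinite m] (hS : Measurable S) {f : ℝ → ℝ≥0∞}
    (hf : Measurable f) {x : ℝ} (hax : a ≤ x) :
    ∫⁻ y in Ioi x, Kop S m a f y ∂m =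
      m (Ioi x) * Kop S m a f x +
        ∫⁻ z in Ioi x, m (Ici z) * (ENNReal.ofReal (S z - S a) * f z) ∂m := by
  have hg : Measurable fun z => ENNReal.ofReal (S z - S a) * f z :=
    (ENNReal.measurable_ofReal.comp (hS.sub measurable_const)).mul hf
  calc ∫⁻ y in Ioi x, Kop S m a f y ∂m
      = ∫⁻ y in Ioi x, Kop S m a f x +
          ∫⁻ z in Ioc x y, ENNReal.ofReal (S z - S a) * f z ∂m ∂m :=
        setLIntegral_congr_fun measurableSet_Ioi fun y hy => Kop_eq_add f hax (le_of_lt hy)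
    _ = _ := by
      rw [lintegral_add_left measurable_const, setLIntegral_const, mul_comm,
        setLIntegral_Ioi_setLIntegral_Ioc hg]

/-- The hypothesis on `(x, ∞)` passes to `[z, ∞)` because `m (Ioi w) ≥ m (Ici z)` for `w < z`
and `S w → S z` as `w ↑ z`. -/
theorem measure_Ici_mul_le [IsFiniteMeasure m] (hS : Continuous S) {B : ℝ≥0∞}
    (hB : ∀ x, a ≤ x → m (Ioi x) * ENNReal.ofReal (S x - S a) ≤ B) {z : ℝ} (hz : a < z) :
    m (Ici z) * ENNReal.ofReal (S z - S a) ≤ B := by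
  have hlim : Filter.Tendsto (fun w => m (Ici z) * ENNReal.ofReal (S w - S a)) (𝓝[<] z)
      (𝓝 (m (Ici z) * ENNReal.ofReal (S z - S a))) :=
    ENNReal.Tendsto.const_mul ((ENNReal.continuous_ofReal.tendsto _).comp
      (((hS.tendsto z).sub tendsto_const_nhds).mono_left nhdsWithin_le_nhds))
      (Or.inr (measure_ne_top m _))
  refine le_of_tendsto hlim ?_
  filter_upwards [Ioo_mem_nhdsLT hz] with w hw
  calc m (Ici z) * ENNReal.ofReal (S w - S a)
      ≤ m (Ioi w) * ENNReal.ofReal (S w - S a) :=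
        mul_le_mul_left (measure_mono fun t ht => hw.2.trans_le ht) _
    _ ≤ B := hB w hw.1.le

theorem Jop_Kop_le [IsFiniteMeasure m] (hS : Continuous S) {B : ℝ≥0∞}
    (hB : ∀ x, a ≤ x → m (Ioi x) * ENNReal.ofReal (S x - S a) ≤ B) {f : ℝ → ℝ≥0∞}
    (hf : Measurable f) {x : ℝ} (hx : a < x) :
    Jop S m a (Kop S m a f) x ≤ B * Kop S m a f x + B * Jop S m a f x := by
  have hinner : ∫⁻ z in Ioi x, m (Ici z) * (ENNReal.ofReal (S z - S a) * f z) ∂m ≤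
      B * ∫⁻ z in Ioi x, f z ∂m := by
    rw [← lintegral_const_mul B hf]
    refine setLIntegral_mono' measurableSet_Ioi fun z (hz : x < z) => ?_
    rw [← mul_assoc]
    exact mul_le_mul_left (measure_Ici_mul_le hS hB (hx.trans hz)) _
  calc Jop S m a (Kop S m a f) x
      = m (Ioi x) * ENNReal.ofReal (S x - S a) * Kop S m a f x +
          ENNReal.ofReal (S x - S a) *
            ∫⁻ z in Ioi x, m (Ici z) * (ENNReal.ofReal (S z - S a) * f z) ∂m := by
        rw [Jop, setLIntegral_Ioi_Kop hS.measurable hf hx.le, mul_add]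
        ring
    _ ≤ B * Kop S m a f x + ENNReal.ofReal (S x - S a) * (B * ∫⁻ z in Ioi x, f z ∂m) := by
        gcongr
        exact hB x hx.le
    _ = B * Kop S m a f x + B * Jop S m a f x := by
        rw [Jop]
        ring

end Kop

theorem J_iterateK_le_general
    (S : ℝ → ℝ) (hScont : Continuous S)
    (m : Measure ℝ) [IsFiniteMeasure m]
    (a B : ℝ)
    (hB : ∀ x : ℝ, a ≤ x → m (Ioi x) * ENNReal.ofReal (S x - S a) ≤ ENNReal.ofReal B) :
    ∀ (n : ℕ) (x : ℝ), a < x →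
      Jop S m a ((Kop S m a)^[n] (fun _ => 1)) x ≤
        ENNReal.ofReal B *
          ∑ i ∈ Finset.range (n + 1),
            ENNReal.ofReal B ^ (n - i) * (Kop S m a)^[i] (fun _ => 1) x := by
  intro n
  induction n with
  | zero =>
    intro x hx
    simpa [Jop, mul_comm] using hB x hx.le
  | succ n ih =>
    intro x hx
    calc Jop S m a ((Kop S m a)^[n + 1] (fun _ => 1)) x
        ≤ ENNReal.ofReal B * (Kop S m a)^[n + 1] (fun _ => 1) x +
            ENNReal.ofReal B * Jop S m a ((Kop S m a)^[n] (fun _ => 1)) x := by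
          rw [Function.iterate_succ_apply']
          exact Jop_Kop_le hScont hB (measurable_iterate_Kop measurable_const n) hx
      _ ≤ ENNReal.ofReal B * (Kop S m a)^[n + 1] (fun _ => 1) x +
            ENNReal.ofReal B * (ENNReal.ofReal B *
              ∑ i ∈ Finset.range (n + 1),
                ENNReal.ofReal B ^ (n - i) * (Kop S m a)^[i] (fun _ => 1) x) := by
          gcongr
          exact ih x hx
      _ = _ := by
          rw [Finset.sum_range_succ_pow_sub_mul, mul_add]

/-- If `m((x,∞))·(S(x) − S(a)) ≤ B` for all `x ≥ a`, then for every `n ≥ 0`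
and every `x > a`, `J(Kⁿ1)(x) ≤ B · ∑_{i=0}^{n} B^{n−i} Kⁱ1(x)`. -/
theorem J_iterateK_le
    (S : ℝ → ℝ) (hScont : Continuous S) (hSmono : StrictMono S)
    (m : Measure ℝ) [IsFiniteMeasure m]
    (a B : ℝ)
    (hB : ∀ x : ℝ, a ≤ x → m (Ioi x) * ENNReal.ofReal (S x - S a) ≤ ENNReal.ofReal B) :
    ∀ (n : ℕ) (x : ℝ), a < x →
      Jop S m a ((Kop S m a)^[n] (fun _ => 1)) x ≤
        ENNReal.ofReal B *
          ∑ i ∈ Finset.range (n + 1),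
            ENNReal.ofReal B ^ (n - i) * (Kop S m a)^[i] (fun _ => 1) x :=
  J_iterateK_le_general S hScont m a B hB
end

section
/- Let a ∈ ℝ and let B be a real number with m((x,∞))·(S(x) − S(a)) ≤ B for all x ≥ a. Then for every measurable function f : ℝ → [0,∞], ∫_{(a,∞)} Kf(x) dm(x) ≤ B · ∫_{(a,∞)} f(x) dm(x). -/
open MeasureTheory Set
open scoped ENNReal Topology

/-- If `m((x,∞))·(S(x) − S(a)) ≤ B` for all `x ≥ a`, then for every
measurable `f : ℝ → [0,∞]`, `∫_{(a,∞)} Kf(x) dm(x) ≤ B · ∫_{(a,∞)} f(x) dm(x)`. -/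
theorem integral_K_le
    (S : ℝ → ℝ) (hScont : Continuous S) (hSmono : StrictMono S)
    (m : Measure ℝ) [IsFiniteMeasure m]
    (a B : ℝ)
    (hB : ∀ x : ℝ, a ≤ x → m (Ioi x) * ENNReal.ofReal (S x - S a) ≤ ENNReal.ofReal B)
    (f : ℝ → ℝ≥0∞) (hf : Measurable f) :
    ∫⁻ x in Ioi a, Kop S m a f x ∂m ≤ ENNReal.ofReal B * ∫⁻ x in Ioi a, f x ∂m := by
  set g : ℝ → ℝ≥0∞ := fun y => ENNReal.ofReal (S y - S a) * f y with hgdef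
  have hgmeas : Measurable g :=
    (ENNReal.measurable_ofReal.comp (hScont.measurable.sub measurable_const)).mul hf
  -- Key bound: for y > a, m(Ici y) * (S y - S a) ≤ B, by a limit from the left.
  have key : ∀ y, a < y → m (Ici y) * ENNReal.ofReal (S y - S a) ≤ ENNReal.ofReal B := by
    intro y hy
    have hne : (𝓝[<] y).NeBot := nhdsLT_neBot y
    have htend : Filter.Tendsto (fun y' => m (Ici y) * ENNReal.ofReal (S y' - S a)) (𝓝[<] y)
        (𝓝 (m (Ici y) * ENNReal.ofReal (S y - S a))) := by
      apply ENNReal.Tendsto.const_mul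
      · exact (ENNReal.continuous_ofReal.tendsto _).comp
          (((hScont.sub continuous_const).tendsto y).mono_left nhdsWithin_le_nhds)
      · exact Or.inr (measure_ne_top m _)
    refine le_of_tendsto htend ?_
    filter_upwards [Ioo_mem_nhdsLT_of_mem (by simp [le_refl, hy] : y ∈ Ioc a y)] with y' hy'
    calc m (Ici y) * ENNReal.ofReal (S y' - S a)
        ≤ m (Ioi y') * ENNReal.ofReal (S y' - S a) :=
          mul_le_mul_left (measure_mono fun z hz => lt_of_lt_of_le hy'.2 hz) _
      _ ≤ ENNReal.ofReal B := hB y' hy'.1.le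
  -- Tonelli swap
  have hswap : ∫⁻ x in Ioi a, Kop S m a f x ∂m
      = ∫⁻ y, ∫⁻ x in Ioi a, (Ioc a x).indicator g y ∂m ∂m := by
    rw [← lintegral_lintegral_swap]
    · simp only [Kop]
      congr 1; ext x
      rw [lintegral_indicator measurableSet_Ioc _]
    · apply Measurable.aemeasurable
      have heq : (Function.uncurry fun x y => (Ioc a x).indicator g y)
          = fun p : ℝ × ℝ => if p ∈ {q : ℝ × ℝ | a < q.2 ∧ q.2 ≤ q.1} then g p.2 else 0 := by
        ext p
        by_cases h : a < p.2 ∧ p.2 ≤ p.1 <;>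
          simp [Function.uncurry, Set.indicator, mem_Ioc, h]
      rw [heq]
      exact Measurable.ite
        ((measurableSet_lt measurable_const measurable_snd).inter
          (measurableSet_le measurable_snd measurable_fst))
        (hgmeas.comp measurable_snd) measurable_const
  rw [hswap]
  have inner : ∀ y, ∫⁻ x in Ioi a, (Ioc a x).indicator g y ∂m
      = (Ioi a).indicator (fun y => g y * m (Ici y)) y := by
    intro y
    by_cases hy : a < y
    · have h1 : ∀ x, (Ioc a x).indicator g y = (Ici y).indicator (fun _ => g y) x := by
        intro x
        by_cases hx : y ≤ x
        · simp [Set.indicator, mem_Ioc, hy, hx]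
        · simp [Set.indicator, mem_Ioc, hy, hx]
      simp only [h1]
      rw [lintegral_indicator measurableSet_Ici _]
      rw [Measure.restrict_restrict measurableSet_Ici, lintegral_const,
        Measure.restrict_apply_univ]
      have h2 : Ici y ∩ Ioi a = Ici y :=
        inter_eq_left.mpr fun z hz => lt_of_lt_of_le hy hz
      rw [h2]; exact (indicator_of_mem hy (fun y => g y * m (Ici y))).symm
    · have h1 : ∀ x, (Ioc a x).indicator g y = 0 := by
        intro x
        apply indicator_of_notMem
        simp [mem_Ioc]; intro h; exact absurd h hy
      simp only [h1]
      simp [indicator_of_notMem (by simpa using hy : y ∉ Ioi a)]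
  simp only [inner]
  rw [lintegral_indicator measurableSet_Ioi _]
  calc ∫⁻ y in Ioi a, g y * m (Ici y) ∂m
      ≤ ∫⁻ y in Ioi a, ENNReal.ofReal B * f y ∂m := by
        refine setLIntegral_mono (measurable_const.mul hf) fun y hy => ?_
        have : g y * m (Ici y) = (m (Ici y) * ENNReal.ofReal (S y - S a)) * f y := by
          simp only [hgdef]; ring
        rw [this]
        exact mul_le_mul_left (key y hy) _
    _ = ENNReal.ofReal B * ∫⁻ y in Ioi a, f y ∂m := lintegral_const_mul _ hf
end

section
/- Let a ∈ ℝ and let B be a real number with m((x,∞))·(S(x) − S(a)) ≤ B for all x ≥ a. Then for every integer n ≥ 0, ∫_{(a,∞)} (J + K)ⁿ 1(x) dm(x) ≤ 4ⁿ · Bⁿ · m((a,∞)), where 1 denotes the constant function equal to 1 and (J+K)ⁿ the n-fold iterate of J + K. -/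
/-!
Put `φ = (S - S a)⁺`, `ν = m` restricted to `(a, ∞)` and `μ = φ ν`. Then `J + K` is the operator
`g ↦ φ x ∫_{(x,∞)} g dν + ∫_{(-∞,x]} φ g dν`, and by left continuity of `S` the hypothesis becomes
`φ x · ν [x, ∞) ≤ B` for every `x`. Weight with the iterated primitives `Ψ₀ = 1`,
`Ψₖ₊₁ x = ∫_{(-∞,x]} Ψₖ dμ`. Exchanging the order of integration gives `∫ Ψₖ · Jg dν ≤ ∫ Ψₖ₊₁ g dν`
and, because `∫_{[y,∞)} Ψₖ dν ≤ ∑_{i+j=k} Bʲ Ψᵢ y · ν [y, ∞)`, also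
`∫ Ψₖ · Kg dν ≤ ∑_{i+j=k} Bʲ⁺¹ ∫ Ψᵢ g dν`. Induction on `n` yields
`∫ Ψₖ (J + K)ⁿ 1 dν ≤ 4ⁿ 2ᵏ Bⁿ⁺ᵏ ν ℝ`, and `k = 0` is the claim.
-/

open MeasureTheory Set
open scoped ENNReal

open scoped Topology
open Finset.HasAntidiagonal

theorem lintegral_mul_setLIntegral_comm {α : Type*} [MeasurableSpace α] {μ ν : Measure α}
    [SFinite μ] [SFinite ν] {r : α → α → Prop} (hr : MeasurableSet {p : α × α | r p.1 p.2})
    {u v : α → ℝ≥0∞} (hu : Measurable u) (hv : Measurable v) :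
    ∫⁻ x, u x * ∫⁻ y in {y | r x y}, v y ∂ν ∂μ = ∫⁻ y, v y * ∫⁻ x in {x | r x y}, u x ∂μ ∂ν := by
  set F := {p : α × α | r p.1 p.2}.indicator fun p => u p.1 * v p.2
  have hF : Measurable F := ((hu.comp measurable_fst).mul (hv.comp measurable_snd)).indicator hr
  have left (x : α) : u x * ∫⁻ y in {y | r x y}, v y ∂ν = ∫⁻ y, F (x, y) ∂ν := by
    have hs : MeasurableSet {y | r x y} := measurable_prodMk_left hr
    rw [← lintegral_const_mul _ hv, ← lintegral_indicator hs]
    rfl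
  have right (y : α) : v y * ∫⁻ x in {x | r x y}, u x ∂μ = ∫⁻ x, F (x, y) ∂μ := by
    have hs : MeasurableSet {x | r x y} := measurable_prodMk_right hr
    rw [← lintegral_const_mul _ hu, ← lintegral_indicator hs]
    simp only [F, indicator, mul_comm]
    rfl
  simp_rw [left, right]
  exact lintegral_lintegral_swap hF.aemeasurable

theorem measurable_setLIntegral_Ioi (ν : Measure ℝ) (g : ℝ → ℝ≥0∞) :
    Measurable fun x => ∫⁻ y in Ioi x, g y ∂ν :=
  Antitone.measurable fun _ _ h => lintegral_mono_set (Ioi_subset_Ioi h)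

theorem measurable_setLIntegral_Iic (ν : Measure ℝ) (g : ℝ → ℝ≥0∞) :
    Measurable fun x => ∫⁻ y in Iic x, g y ∂ν :=
  Monotone.measurable fun _ _ h => lintegral_mono_set (Iic_subset_Iic.2 h)

noncomputable def jkOp (φ : ℝ → ℝ≥0∞) (ν : Measure ℝ) (g : ℝ → ℝ≥0∞) : ℝ → ℝ≥0∞ :=
  fun x => φ x * ∫⁻ y in Ioi x, g y ∂ν + ∫⁻ y in Iic x, φ y * g y ∂ν

noncomputable def iterPrimitive (μ : Measure ℝ) : ℕ → ℝ → ℝ≥0∞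
  | 0 => fun _ => 1
  | k + 1 => fun x => ∫⁻ z in Iic x, iterPrimitive μ k z ∂μ

theorem measurable_iterPrimitive (μ : Measure ℝ) : ∀ k, Measurable (iterPrimitive μ k)
  | 0 => measurable_const
  | k + 1 => measurable_setLIntegral_Iic μ (iterPrimitive μ k)

theorem iterPrimitive_succ_eq_add (μ : Measure ℝ) (k : ℕ) {x y : ℝ} (h : y ≤ x) :
    iterPrimitive μ (k + 1) x =
      iterPrimitive μ (k + 1) y + ∫⁻ z in Ioc y x, iterPrimitive μ k z ∂μ := by
  simp only [iterPrimitive]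
  rw [← lintegral_union measurableSet_Ioc (Iic_disjoint_Ioc le_rfl), Iic_union_Ioc_eq_Iic h]

theorem measurable_jkOp {φ : ℝ → ℝ≥0∞} (hφ : Measurable φ) (ν : Measure ℝ) (g : ℝ → ℝ≥0∞) :
    Measurable (jkOp φ ν g) :=
  (hφ.mul (measurable_setLIntegral_Ioi ν g)).add (measurable_setLIntegral_Iic ν _)

theorem measurable_iterate_jkOp {φ : ℝ → ℝ≥0∞} (hφ : Measurable φ) (ν : Measure ℝ)
    {g : ℝ → ℝ≥0∞} (hg : Measurable g) :
    ∀ n, Measurable ((jkOp φ ν)^[n] g)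
  | 0 => hg
  | n + 1 => by
      rw [Function.iterate_succ_apply']
      exact measurable_jkOp hφ ν _

section

variable {ν : Measure ℝ} [SFinite ν] {φ : ℝ → ℝ≥0∞} {β : ℝ≥0∞}

theorem lintegral_setLIntegral_Iic_withDensity_le (hφ : Measurable φ)
    (hβ : ∀ z, φ z * ν (Ici z) ≤ β) {h : ℝ → ℝ≥0∞} (hh : Measurable h) :
    ∫⁻ x, ∫⁻ z in Iic x, h z ∂ν.withDensity φ ∂ν ≤ β * ∫⁻ z, h z ∂ν := by
  have hIci : Measurable fun z => ν (Ici z) :=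
    Antitone.measurable fun _ _ hzw => measure_mono (Ici_subset_Ici.2 hzw)
  calc ∫⁻ x, ∫⁻ z in Iic x, h z ∂ν.withDensity φ ∂ν
      = ∫⁻ x, 1 * ∫⁻ z in {z | z ≤ x}, h z ∂ν.withDensity φ ∂ν := by simp_rw [one_mul]; rfl
    _ = ∫⁻ z, h z * ∫⁻ _ in Ici z, 1 ∂ν ∂ν.withDensity φ :=
        lintegral_mul_setLIntegral_comm (r := fun x z => z ≤ x)
          (measurableSet_le measurable_snd measurable_fst) measurable_const hh
    _ = ∫⁻ z, φ z * (h z * ν (Ici z)) ∂ν := by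
        simp_rw [setLIntegral_one]
        exact lintegral_withDensity_eq_lintegral_mul _ hφ (hh.mul hIci)
    _ ≤ ∫⁻ z, β * h z ∂ν := lintegral_mono fun z => by
        rw [mul_left_comm, mul_comm]
        gcongr
        exact hβ z
    _ = β * ∫⁻ z, h z ∂ν := lintegral_const_mul _ hh

local notation "Ψ" => iterPrimitive (ν.withDensity φ)

theorem lintegral_iterPrimitive_le (hφ : Measurable φ) (hβ : ∀ z, φ z * ν (Ici z) ≤ β) :
    ∀ k, ∫⁻ x, Ψ k x ∂ν ≤ β ^ k * ν univ
  | 0 => by simp [iterPrimitive]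
  | k + 1 => calc
      ∫⁻ x, Ψ (k + 1) x ∂ν ≤ β * ∫⁻ x, Ψ k x ∂ν :=
        lintegral_setLIntegral_Iic_withDensity_le hφ hβ (measurable_iterPrimitive _ k)
      _ ≤ β * (β ^ k * ν univ) := by gcongr; exact lintegral_iterPrimitive_le hφ hβ k
      _ = β ^ (k + 1) * ν univ := by ring

theorem setLIntegral_Ici_iterPrimitive_succ_le (hφ : Measurable φ)
    (hβ : ∀ z, φ z * ν (Ici z) ≤ β) (k : ℕ) (y : ℝ) :
    ∫⁻ x in Ici y, Ψ (k + 1) x ∂ν ≤ Ψ (k + 1) y * ν (Ici y) + β * ∫⁻ x in Ici y, Ψ k x ∂ν := by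
  have hΨ := measurable_iterPrimitive (ν.withDensity φ) k
  calc ∫⁻ x in Ici y, Ψ (k + 1) x ∂ν
      = ∫⁻ x in Ici y, Ψ (k + 1) y + ∫⁻ z in Ioc y x, Ψ k z ∂ν.withDensity φ ∂ν :=
        setLIntegral_congr_fun measurableSet_Ici fun x hx => iterPrimitive_succ_eq_add _ k hx
    _ = Ψ (k + 1) y * ν (Ici y) + ∫⁻ x in Ici y, ∫⁻ z in Ioc y x, Ψ k z ∂ν.withDensity φ ∂ν := by
        rw [lintegral_add_left measurable_const, setLIntegral_const]
    _ ≤ Ψ (k + 1) y * ν (Ici y) +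
          ∫⁻ x, ∫⁻ z in Iic x, (Ioi y).indicator (Ψ k) z ∂ν.withDensity φ ∂ν := by
        simp_rw [setLIntegral_indicator measurableSet_Ioi, Ioi_inter_Iic]
        gcongr
        exact Measure.restrict_le_self
    _ ≤ Ψ (k + 1) y * ν (Ici y) + β * ∫⁻ z in Ioi y, Ψ k z ∂ν := by
        rw [← lintegral_indicator measurableSet_Ioi]
        gcongr
        exact lintegral_setLIntegral_Iic_withDensity_le hφ hβ (hΨ.indicator measurableSet_Ioi)
    _ ≤ Ψ (k + 1) y * ν (Ici y) + β * ∫⁻ x in Ici y, Ψ k x ∂ν := by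
        gcongr
        exact Ioi_subset_Ici_self

theorem setLIntegral_Ici_iterPrimitive_le (hφ : Measurable φ)
    (hβ : ∀ z, φ z * ν (Ici z) ≤ β) (y : ℝ) :
    ∀ k, ∫⁻ x in Ici y, Ψ k x ∂ν ≤
      ∑ p ∈ antidiagonal k, β ^ p.2 * Ψ p.1 y * ν (Ici y)
  | 0 => by simp [iterPrimitive]
  | k + 1 => by
      rw [Finset.Nat.sum_antidiagonal_succ']
      calc ∫⁻ x in Ici y, Ψ (k + 1) x ∂ν
          ≤ Ψ (k + 1) y * ν (Ici y) + β * ∫⁻ x in Ici y, Ψ k x ∂ν :=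
            setLIntegral_Ici_iterPrimitive_succ_le hφ hβ k y
        _ ≤ Ψ (k + 1) y * ν (Ici y) +
              β * ∑ p ∈ antidiagonal k, β ^ p.2 * Ψ p.1 y * ν (Ici y) := by
            gcongr
            exact setLIntegral_Ici_iterPrimitive_le hφ hβ y k
        _ = _ := by
            rw [Finset.mul_sum]
            simp only [pow_zero, one_mul, pow_succ]
            congr 1
            exact Finset.sum_congr rfl fun p _ => by ring

theorem lintegral_iterPrimitive_mul_tail_le (hφ : Measurable φ) {g : ℝ → ℝ≥0∞}
    (hg : Measurable g) (k : ℕ) :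
    ∫⁻ x, Ψ k x * (φ x * ∫⁻ y in Ioi x, g y ∂ν) ∂ν ≤ ∫⁻ y, Ψ (k + 1) y * g y ∂ν := by
  have hΨ := measurable_iterPrimitive (ν.withDensity φ) k
  calc ∫⁻ x, Ψ k x * (φ x * ∫⁻ y in Ioi x, g y ∂ν) ∂ν
      = ∫⁻ x, φ x * (Ψ k x * ∫⁻ y in Ioi x, g y ∂ν) ∂ν := lintegral_congr fun x => by ring
    _ = ∫⁻ x, Ψ k x * ∫⁻ y in {y | x < y}, g y ∂ν ∂ν.withDensity φ :=
        (lintegral_withDensity_eq_lintegral_mul _ hφ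
          (hΨ.mul (measurable_setLIntegral_Ioi ν g))).symm
    _ = ∫⁻ y, g y * ∫⁻ x in Iio y, Ψ k x ∂ν.withDensity φ ∂ν :=
        lintegral_mul_setLIntegral_comm (measurableSet_lt measurable_fst measurable_snd) hΨ hg
    _ ≤ ∫⁻ y, g y * Ψ (k + 1) y ∂ν := by
        gcongr with y
        exact lintegral_mono_set Iio_subset_Iic_self
    _ = ∫⁻ y, Ψ (k + 1) y * g y ∂ν := by simp_rw [mul_comm]

theorem lintegral_iterPrimitive_mul_head_le (hφ : Measurable φ)
    (hβ : ∀ z, φ z * ν (Ici z) ≤ β) {g : ℝ → ℝ≥0∞} (hg : Measurable g) (k : ℕ) :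
    ∫⁻ x, Ψ k x * ∫⁻ y in Iic x, φ y * g y ∂ν ∂ν ≤
      ∑ p ∈ antidiagonal k, β ^ (p.2 + 1) * ∫⁻ y, Ψ p.1 y * g y ∂ν := by
  have hΨ := measurable_iterPrimitive (ν.withDensity φ)
  calc ∫⁻ x, Ψ k x * ∫⁻ y in Iic x, φ y * g y ∂ν ∂ν
      = ∫⁻ y, φ y * g y * ∫⁻ x in Ici y, Ψ k x ∂ν ∂ν :=
        lintegral_mul_setLIntegral_comm (r := fun x y => y ≤ x)
          (measurableSet_le measurable_snd measurable_fst) (hΨ k) (hφ.mul hg)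
    _ ≤ ∫⁻ y, φ y * g y * ∑ p ∈ antidiagonal k, β ^ p.2 * Ψ p.1 y * ν (Ici y) ∂ν := by
        gcongr with y
        exact setLIntegral_Ici_iterPrimitive_le hφ hβ y k
    _ ≤ ∫⁻ y, ∑ p ∈ antidiagonal k, β ^ (p.2 + 1) * (Ψ p.1 y * g y) ∂ν := by
        gcongr with y
        rw [Finset.mul_sum]
        refine Finset.sum_le_sum fun p _ => ?_
        calc φ y * g y * (β ^ p.2 * Ψ p.1 y * ν (Ici y))
            = φ y * ν (Ici y) * (β ^ p.2 * (Ψ p.1 y * g y)) := by ring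
          _ ≤ β * (β ^ p.2 * (Ψ p.1 y * g y)) := by gcongr; exact hβ y
          _ = β ^ (p.2 + 1) * (Ψ p.1 y * g y) := by ring
    _ = ∑ p ∈ antidiagonal k, β ^ (p.2 + 1) * ∫⁻ y, Ψ p.1 y * g y ∂ν := by
        rw [lintegral_finsetSum _ fun p _ => ((hΨ p.1).mul hg).const_mul _]
        refine Finset.sum_congr rfl fun p _ => ?_
        exact lintegral_const_mul _ ((hΨ p.1).mul hg)

theorem sum_antidiagonal_pow_mul_le (n k : ℕ) (c : ℝ≥0∞) :
    ∑ p ∈ antidiagonal k, β ^ (p.2 + 1) * (4 ^ n * 2 ^ p.1 * β ^ (n + p.1) * c) ≤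
      4 ^ n * 2 ^ (k + 1) * β ^ (n + k + 1) * c := by
  have hgeom := geom_sum_mul_add (1 : ℝ≥0∞) (k + 1)
  rw [one_add_one_eq_two, mul_one] at hgeom
  calc ∑ p ∈ antidiagonal k, β ^ (p.2 + 1) * (4 ^ n * 2 ^ p.1 * β ^ (n + p.1) * c)
      = (∑ p ∈ antidiagonal k, (2 : ℝ≥0∞) ^ p.1) * (4 ^ n * β ^ (n + k + 1) * c) := by
        rw [Finset.sum_mul]
        refine Finset.sum_congr rfl fun p hp => ?_
        rw [← mem_antidiagonal.1 hp]
        ring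
    _ ≤ 2 ^ (k + 1) * (4 ^ n * β ^ (n + k + 1) * c) := by
        gcongr
        rw [Finset.Nat.sum_antidiagonal_eq_sum_range_succ_mk, ← hgeom]
        exact le_self_add
    _ = 4 ^ n * 2 ^ (k + 1) * β ^ (n + k + 1) * c := by ring

theorem lintegral_iterPrimitive_mul_iterate_jkOp_le (hφ : Measurable φ)
    (hβ : ∀ z, φ z * ν (Ici z) ≤ β) (n k : ℕ) :
    ∫⁻ x, Ψ k x * (jkOp φ ν)^[n] (fun _ => 1) x ∂ν ≤ 4 ^ n * 2 ^ k * β ^ (n + k) * ν univ := by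
  induction n generalizing k with
  | zero =>
    simp only [Function.iterate_zero, id, mul_one, pow_zero, one_mul, zero_add]
    calc ∫⁻ x, Ψ k x ∂ν ≤ β ^ k * ν univ := lintegral_iterPrimitive_le hφ hβ k
      _ ≤ 2 ^ k * β ^ k * ν univ := by
        gcongr
        exact le_mul_of_one_le_left' (one_le_pow₀ one_le_two)
  | succ n ih =>
    set g := (jkOp φ ν)^[n] (fun _ => 1)
    have hg : Measurable g := measurable_iterate_jkOp hφ ν measurable_const n
    have tail : ∫⁻ x, Ψ k x * (φ x * ∫⁻ y in Ioi x, g y ∂ν) ∂ν ≤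
        4 ^ n * 2 ^ (k + 1) * β ^ (n + k + 1) * ν univ :=
      (lintegral_iterPrimitive_mul_tail_le hφ hg k).trans (ih (k + 1))
    have head : ∫⁻ x, Ψ k x * ∫⁻ y in Iic x, φ y * g y ∂ν ∂ν ≤
        4 ^ n * 2 ^ (k + 1) * β ^ (n + k + 1) * ν univ := calc
      _ ≤ ∑ p ∈ antidiagonal k, β ^ (p.2 + 1) * ∫⁻ y, Ψ p.1 y * g y ∂ν :=
          lintegral_iterPrimitive_mul_head_le hφ hβ hg k
      _ ≤ ∑ p ∈ antidiagonal k, β ^ (p.2 + 1) * (4 ^ n * 2 ^ p.1 * β ^ (n + p.1) * ν univ) := by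
          gcongr with p
          exact ih p.1
      _ ≤ 4 ^ n * 2 ^ (k + 1) * β ^ (n + k + 1) * ν univ := sum_antidiagonal_pow_mul_le n k _
    rw [Function.iterate_succ_apply']
    calc ∫⁻ x, Ψ k x * jkOp φ ν g x ∂ν
        = ∫⁻ x, Ψ k x * (φ x * ∫⁻ y in Ioi x, g y ∂ν) ∂ν +
            ∫⁻ x, Ψ k x * ∫⁻ y in Iic x, φ y * g y ∂ν ∂ν := by
          simp_rw [jkOp, mul_add]
          exact lintegral_add_left ((measurable_iterPrimitive _ k).mul
            (hφ.mul (measurable_setLIntegral_Ioi ν g))) _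
      _ ≤ 4 ^ n * 2 ^ (k + 1) * β ^ (n + k + 1) * ν univ +
            4 ^ n * 2 ^ (k + 1) * β ^ (n + k + 1) * ν univ := add_le_add tail head
      _ = 4 ^ (n + 1) * 2 ^ k * β ^ (n + 1 + k) * ν univ := by ring

theorem lintegral_iterate_jkOp_le (hφ : Measurable φ) (hβ : ∀ z, φ z * ν (Ici z) ≤ β) (n : ℕ) :
    ∫⁻ x, (jkOp φ ν)^[n] (fun _ => 1) x ∂ν ≤ 4 ^ n * β ^ n * ν univ := by
  simpa [iterPrimitive] using lintegral_iterPrimitive_mul_iterate_jkOp_le hφ hβ n 0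

end

theorem mul_measure_Ici_le_of_continuousAt {m : Measure ℝ} [IsFiniteMeasure m] {φ : ℝ → ℝ≥0∞}
    {a x : ℝ} {β : ℝ≥0∞} (hφ : ContinuousAt φ x) (hax : a < x)
    (h : ∀ t ∈ Ioo a x, φ t * m (Ioi t) ≤ β) : φ x * m (Ici x) ≤ β := by
  have hlim : Filter.Tendsto (fun t => φ t * m (Ici x)) (𝓝[<] x) (𝓝 (φ x * m (Ici x))) :=
    ENNReal.Tendsto.mul_const (hφ.tendsto.mono_left nhdsWithin_le_nhds) (.inr (measure_ne_top _ _))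
  refine le_of_tendsto hlim (Filter.mem_of_superset (Ioo_mem_nhdsLT hax) fun t ht => ?_)
  calc φ t * m (Ici x) ≤ φ t * m (Ioi t) := by gcongr; exact ht.2
    _ ≤ β := h t ht

theorem ofReal_sub_eq_zero_of_le {S : ℝ → ℝ} (hS : Monotone S) {a x : ℝ} (hx : x ≤ a) :
    ENNReal.ofReal (S x - S a) = 0 :=
  ENNReal.ofReal_eq_zero.2 (sub_nonpos.2 (hS hx))

theorem Jop_add_Kop_eq_jkOp {S : ℝ → ℝ} (hS : Monotone S) (m : Measure ℝ) (a : ℝ) :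
    (fun g y => Jop S m a g y + Kop S m a g y) =
      jkOp (fun x => ENNReal.ofReal (S x - S a)) (m.restrict (Ioi a)) := by
  ext g x
  simp only [Jop, Kop, jkOp, Measure.restrict_restrict measurableSet_Ioi,
    Measure.restrict_restrict measurableSet_Iic, Iic_inter_Ioi]
  rcases le_or_gt x a with hx | hx
  · simp [ofReal_sub_eq_zero_of_le hS hx]
  · rw [inter_eq_left.2 (Ioi_subset_Ioi hx.le)]

/-- If `m((x,∞))·(S(x) − S(a)) ≤ B` for all `x ≥ a`, then for every
`n ≥ 0`, `∫_{(a,∞)} (J + K)ⁿ1(x) dm(x) ≤ 4ⁿ·Bⁿ·m((a,∞))`. -/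
theorem integral_iterate_JplusK_le
    (S : ℝ → ℝ) (hScont : Continuous S) (hSmono : StrictMono S)
    (m : Measure ℝ) [IsFiniteMeasure m]
    (a B : ℝ)
    (hB : ∀ x : ℝ, a ≤ x → m (Ioi x) * ENNReal.ofReal (S x - S a) ≤ ENNReal.ofReal B) :
    ∀ n : ℕ,
      ∫⁻ x in Ioi a, (fun g y => Jop S m a g y + Kop S m a g y)^[n] (fun _ => 1) x ∂m ≤
        4 ^ n * ENNReal.ofReal B ^ n * m (Ioi a) := by
  set φ : ℝ → ℝ≥0∞ := fun x => ENNReal.ofReal (S x - S a)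
  have hφc : Continuous φ := ENNReal.continuous_ofReal.comp (hScont.sub continuous_const)
  have hβ : ∀ x, φ x * m.restrict (Ioi a) (Ici x) ≤ ENNReal.ofReal B := by
    intro x
    rcases le_or_gt x a with hx | hx
    · simp [φ, ofReal_sub_eq_zero_of_le hSmono.monotone hx]
    rw [Measure.restrict_apply measurableSet_Ici, inter_eq_left.2 (Ici_subset_Ioi.2 hx)]
    exact mul_measure_Ici_le_of_continuousAt hφc.continuousAt hx fun t ht =>
      (mul_comm _ _).trans_le (hB t ht.1.le)
  intro n
  rw [Jop_add_Kop_eq_jkOp hSmono.monotone, ← Measure.restrict_apply_univ]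
  exact lintegral_iterate_jkOp_le hφc.measurable hβ n
end

section
/- Let a ∈ ℝ and let B be a real number with m((x,∞))·(S(x) − S(a)) ≤ B for all x ≥ a. Then for every t > a, ∫_{(t,∞)} √(S(x) − S(a)) dm(x) ≤ 2B / √(S(t) − S(a)). -/
open MeasureTheory Set
open scoped ENNReal

/-!
By the layer-cake formula the integral is `∫₀^∞ m{x > t, √(S x - S a) > s} ds`. With
`v = S t - S a`, the level set for `s` lies in `{S x - S a > max v s²}`, which by continuity and
monotonicity of `S` is a ray `(c, ∞)` with `S c - S a = max v s²`; the hypothesis bounds its mass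
by `B / max v s²`. Finally `∫₀^∞ ds / max v s² = √v / v + 1 / √v = 2 / √v`.
-/

lemma lintegral_Ioi_inv_sq {r : ℝ} (hr : 0 < r) :
    ∫⁻ s in Ioi r, (ENNReal.ofReal (s ^ 2))⁻¹ = ENNReal.ofReal r⁻¹ := by
  have hpow : ∀ s ∈ Ioi r, (ENNReal.ofReal (s ^ 2))⁻¹ = ENNReal.ofReal (s ^ (-2 : ℝ)) := by
    intro s hs
    have hs0 : 0 < s := hr.trans hs
    rw [← ENNReal.ofReal_inv_of_pos (by positivity), Real.rpow_neg hs0.le, Real.rpow_two]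
  rw [setLIntegral_congr_fun measurableSet_Ioi hpow,
    ← ofReal_integral_eq_lintegral_ofReal (integrableOn_Ioi_rpow_of_lt (by norm_num) hr)
      ((ae_restrict_mem measurableSet_Ioi).mono fun s hs => Real.rpow_nonneg (hr.trans hs).le _),
    integral_Ioi_rpow_of_lt (by norm_num) hr]
  norm_num [Real.rpow_neg_one]

lemma lintegral_Ioi_inv_max_sq {v : ℝ} (hv : 0 < v) :
    ∫⁻ s in Ioi 0, (ENNReal.ofReal (max v (s ^ 2)))⁻¹ = ENNReal.ofReal (2 / √v) := by
  have hr : 0 < √v := Real.sqrt_pos.2 hv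
  have hsmall : ∀ s ∈ Ioc 0 √v, (ENNReal.ofReal (max v (s ^ 2)))⁻¹ = (ENNReal.ofReal v)⁻¹ :=
    fun s hs => by rw [max_eq_left ((Real.le_sqrt' hs.1).1 hs.2)]
  have hlarge : ∀ s ∈ Ioi √v, (ENNReal.ofReal (max v (s ^ 2)))⁻¹ = (ENNReal.ofReal (s ^ 2))⁻¹ :=
    fun s hs => by rw [max_eq_right ((Real.sqrt_lt' (hr.trans hs)).1 hs).le]
  rw [← Ioc_union_Ioi_eq_Ioi hr.le, lintegral_union measurableSet_Ioi Ioc_disjoint_Ioi_same,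
    setLIntegral_congr_fun measurableSet_Ioc hsmall, setLIntegral_congr_fun measurableSet_Ioi hlarge,
    lintegral_Ioi_inv_sq hr, setLIntegral_const, Real.volume_Ioc, sub_zero,
    ← ENNReal.ofReal_inv_of_pos hv, ← ENNReal.ofReal_mul (by positivity),
    ← ENNReal.ofReal_add (by positivity) (by positivity)]
  congr 1
  field_simp
  rw [Real.sq_sqrt hv.le]
  ring

lemma measure_lt_sub_mul_le {S : ℝ → ℝ} (hScont : Continuous S) (hSmono : StrictMono S)
    (hStop : Filter.Tendsto S Filter.atTop Filter.atTop) {m : Measure ℝ} {a B : ℝ}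
    (hB : ∀ x : ℝ, a ≤ x → m (Ioi x) * ENNReal.ofReal (S x - S a) ≤ ENNReal.ofReal B)
    {t y : ℝ} (ht : a ≤ t) (hy : S t - S a ≤ y) :
    m {x | y < S x - S a} * ENNReal.ofReal y ≤ ENNReal.ofReal B := by
  obtain ⟨c, htc, hc⟩ : ∃ c, t ≤ c ∧ S c = S a + y :=
    intermediate_value_Ici hScont.continuousOn hStop (by simp only [mem_Ici]; linarith)
  have hlevel : {x | y < S x - S a} = Ioi c := by
    ext x
    exact ⟨fun (h : y < S x - S a) => hSmono.lt_iff_lt.1 (by linarith),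
      fun (h : c < x) => show y < S x - S a by linarith [hSmono h]⟩
  simpa [hlevel, hc] using hB c (ht.trans htc)

theorem integral_sqrt_tail_le_general
    (S : ℝ → ℝ) (hScont : Continuous S) (hSmono : StrictMono S)
    (hStop : Filter.Tendsto S Filter.atTop Filter.atTop)
    (m : Measure ℝ)
    (a B : ℝ)
    (hB : ∀ x : ℝ, a ≤ x → m (Ioi x) * ENNReal.ofReal (S x - S a) ≤ ENNReal.ofReal B) :
    ∀ t : ℝ, a < t →
      ∫⁻ x in Ioi t, ENNReal.ofReal (Real.sqrt (S x - S a)) ∂m ≤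
        ENNReal.ofReal (2 * B / Real.sqrt (S t - S a)) := by
  intro t ht
  have hv : 0 < S t - S a := sub_pos.2 (hSmono ht)
  have hf : Continuous fun x => √(S x - S a) := (hScont.sub continuous_const).sqrt
  have htail : ∀ s ∈ Ioi (0 : ℝ), m.restrict (Ioi t) {x | s < √(S x - S a)} ≤
      ENNReal.ofReal B * (ENNReal.ofReal (max (S t - S a) (s ^ 2)))⁻¹ := by
    intro s hs
    have hsub : {x | s < √(S x - S a)} ∩ Ioi t ⊆ {x | max (S t - S a) (s ^ 2) < S x - S a} :=
      fun x ⟨hxs, hxt⟩ => max_lt (by linarith [hSmono hxt]) ((Real.lt_sqrt (le_of_lt hs)).1 hxs)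
    rw [Measure.restrict_apply (measurableSet_lt measurable_const hf.measurable),
      ← div_eq_mul_inv, ENNReal.le_div_iff_mul_le
      (Or.inl (ENNReal.ofReal_pos.2 (lt_max_of_lt_left hv)).ne') (Or.inl ENNReal.ofReal_ne_top)]
    exact (mul_le_mul_left (measure_mono hsub) _).trans
      (measure_lt_sub_mul_le hScont hSmono hStop hB ht.le (le_max_left _ _))
  calc ∫⁻ x in Ioi t, ENNReal.ofReal √(S x - S a) ∂m
      = ∫⁻ s in Ioi 0, m.restrict (Ioi t) {x | s < √(S x - S a)} :=
        lintegral_eq_lintegral_meas_lt _ (ae_of_all _ fun _ => Real.sqrt_nonneg _)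
          hf.aemeasurable
    _ ≤ ∫⁻ s in Ioi 0, ENNReal.ofReal B * (ENNReal.ofReal (max (S t - S a) (s ^ 2)))⁻¹ :=
        setLIntegral_mono' measurableSet_Ioi htail
    _ = ENNReal.ofReal (2 * B / √(S t - S a)) := by
        rw [lintegral_const_mul' _ _ ENNReal.ofReal_ne_top, lintegral_Ioi_inv_max_sq hv,
          ← ENNReal.ofReal_mul' (by positivity)]
        ring_nf

/-- If `m((x,∞))·(S(x) − S(a)) ≤ B` for all `x ≥ a`, then for every `t > a`,
`∫_{(t,∞)} √(S(x) − S(a)) dm(x) ≤ 2B / √(S(t) − S(a))`. -/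
theorem integral_sqrt_tail_le
    (S : ℝ → ℝ) (hScont : Continuous S) (hSmono : StrictMono S)
    (hStop : Filter.Tendsto S Filter.atTop Filter.atTop)
    (m : Measure ℝ) [IsFiniteMeasure m]
    (a B : ℝ)
    (hB : ∀ x : ℝ, a ≤ x → m (Ioi x) * ENNReal.ofReal (S x - S a) ≤ ENNReal.ofReal B) :
    ∀ t : ℝ, a < t →
      ∫⁻ x in Ioi t, ENNReal.ofReal (Real.sqrt (S x - S a)) ∂m ≤
        ENNReal.ofReal (2 * B / Real.sqrt (S t - S a)) :=
  integral_sqrt_tail_le_general S hScont hSmono hStop m a B hB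
end

section
/- Let a ∈ ℝ, let F : ℝ → ℝ satisfy dF ≪ dS with density f = dF/dS. Then for every x > a, (F(x) − F(a))² ≤ 2·√(S(x) − S(a)) · ∫_{(a,x]} f(t)² √(S(t) − S(a)) dS(t). -/
open MeasureTheory Set
open scoped ENNReal

/-!
Bound `|F x - F a|` by `∫_{(a,x]} |f| dS` and apply the Cauchy–Schwarz inequality with the weight
`w = √(S - S a)`. The remaining factor `∫_{(a,x]} w⁻¹ dS` is computed by pushing `dS` forward
along `S`, which turns it into Lebesgue measure on `(S a, S x]`, where
`∫ (u - S a)^(-1/2) du = 2 √(S x - S a)`.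
-/

theorem ENNReal.sq_lintegral_le_lintegral_mul_lintegral_inv {α : Type*} [MeasurableSpace α]
    {μ : Measure α} {f w : α → ℝ≥0∞} (hf : AEMeasurable f μ) (hw : AEMeasurable w μ)
    (hw_ne_zero : ∀ᵐ x ∂μ, w x ≠ 0) (hw_ne_top : ∀ᵐ x ∂μ, w x ≠ ∞) :
    (∫⁻ x, f x ∂μ) ^ 2 ≤ (∫⁻ x, f x ^ 2 * w x ∂μ) * ∫⁻ x, (w x)⁻¹ ∂μ := by
  have hf_eq : ∀ᵐ x ∂μ, f x = (f x * w x ^ (1 / 2 : ℝ)) * w x ^ (-(1 / 2) : ℝ) := by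
    filter_upwards [hw_ne_zero, hw_ne_top] with x h0 htop
    rw [mul_assoc, ← ENNReal.rpow_add _ _ h0 htop, add_neg_cancel, ENNReal.rpow_zero, mul_one]
  have holder := ENNReal.lintegral_mul_le_Lp_mul_Lq μ Real.HolderConjugate.two_two
    (f := fun x => f x * w x ^ (1 / 2 : ℝ)) (g := fun x => w x ^ (-(1 / 2) : ℝ))
    (hf.mul (hw.pow_const _)) (hw.pow_const _)
  have hA : ∀ x, (f x * w x ^ (1 / 2 : ℝ)) ^ (2 : ℝ) = f x ^ 2 * w x := by
    intro x
    rw [ENNReal.mul_rpow_of_nonneg _ _ zero_le_two, ← ENNReal.rpow_mul, ENNReal.rpow_two]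
    norm_num
  have hB : ∀ x, (w x ^ (-(1 / 2) : ℝ)) ^ (2 : ℝ) = (w x)⁻¹ := by
    intro x
    rw [← ENNReal.rpow_mul]
    norm_num [ENNReal.rpow_neg_one]
  simp only [Pi.mul_apply, hA, hB, ← lintegral_congr_ae hf_eq] at holder
  calc (∫⁻ x, f x ∂μ) ^ 2
      ≤ ((∫⁻ x, f x ^ 2 * w x ∂μ) ^ (1 / 2 : ℝ) * (∫⁻ x, (w x)⁻¹ ∂μ) ^ (1 / 2 : ℝ)) ^ 2 :=
        pow_le_pow_left' holder 2
    _ = (∫⁻ x, f x ^ 2 * w x ∂μ) * ∫⁻ x, (w x)⁻¹ ∂μ := by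
        rw [mul_pow, ← ENNReal.rpow_two, ← ENNReal.rpow_two, ← ENNReal.rpow_mul, ← ENNReal.rpow_mul]
        norm_num

section StieltjesMeasure

variable {S : ℝ → ℝ} {μ : Measure ℝ}

theorem measure_preimage_Ioc_of_mem_range (hS : StrictMono S)
    (hμ : ∀ c d, c ≤ d → μ (Ioc c d) = ENNReal.ofReal (S d - S c))
    {p q : ℝ} (hp : p ∈ range S) (hq : q ∈ range S) :
    μ (S ⁻¹' Ioc p q) = ENNReal.ofReal (q - p) := by
  obtain ⟨c, rfl⟩ := hp
  obtain ⟨d, rfl⟩ := hq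
  have hpre : S ⁻¹' Ioc (S c) (S d) = Ioc c d := by
    ext t
    simp only [mem_preimage, mem_Ioc, hS.lt_iff_lt, hS.le_iff_le]
  rw [hpre]
  rcases le_total c d with hcd | hdc
  · exact hμ c d hcd
  · rw [Ioc_eq_empty_of_le hdc, measure_empty,
      ENNReal.ofReal_of_nonpos (sub_nonpos.mpr (hS.monotone hdc))]

theorem map_restrict_Ioc_eq_volume (hS_cont : Continuous S) (hS : StrictMono S)
    (hμ : ∀ c d, c ≤ d → μ (Ioc c d) = ENNReal.ofReal (S d - S c)) {a b : ℝ} (hab : a ≤ b) :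
    (μ.restrict (Ioc a b)).map S = volume.restrict (Ioc (S a) (S b)) := by
  have hpre : S ⁻¹' Ioc (S a) (S b) = Ioc a b := by
    ext t
    simp only [mem_preimage, mem_Ioc, hS.lt_iff_lt, hS.le_iff_le]
  have hmap : ∀ u v, ((μ.restrict (Ioc a b)).map S) (Ioc u v)
      = ENNReal.ofReal (min v (S b) - max u (S a)) := by
    intro u v
    rw [Measure.map_apply hS_cont.measurable measurableSet_Ioc,
      Measure.restrict_apply (hS_cont.measurable measurableSet_Ioc), ← hpre, ← preimage_inter,
      Ioc_inter_Ioc]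
    rcases le_or_gt (max u (S a)) (min v (S b)) with hle | hlt
    · have hrange : Icc (S a) (S b) ⊆ range S :=
        (intermediate_value_Icc hab hS_cont.continuousOn).trans (image_subset_range _ _)
      exact measure_preimage_Ioc_of_mem_range hS hμ
        (hrange ⟨le_max_right _ _, hle.trans (min_le_right _ _)⟩)
        (hrange ⟨(le_max_right _ _).trans hle, min_le_right _ _⟩)
    · rw [Ioc_eq_empty_of_le hlt.le, preimage_empty, measure_empty,
        ENNReal.ofReal_of_nonpos (sub_nonpos.mpr hlt.le)]
  refine Measure.ext_of_Ioc' _ _ (fun u v _ => ?_) (fun u v _ => ?_)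
  · rw [hmap]
    exact ENNReal.ofReal_ne_top
  · rw [hmap, Measure.restrict_apply measurableSet_Ioc, Ioc_inter_Ioc, Real.volume_Ioc]

end StieltjesMeasure

theorem lintegral_Ioc_inv_ofReal_sqrt_sub {b c : ℝ} (hbc : b ≤ c) :
    ∫⁻ u in Ioc b c, (ENNReal.ofReal (Real.sqrt (u - b)))⁻¹
      = ENNReal.ofReal (2 * Real.sqrt (c - b)) := by
  have hrpow : ∀ u ∈ Ioc b c, (ENNReal.ofReal (Real.sqrt (u - b)))⁻¹
      = ENNReal.ofReal ((u - b) ^ (-(1 / 2) : ℝ)) := by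
    intro u hu
    have hpos : 0 < u - b := sub_pos.mpr hu.1
    rw [← ENNReal.ofReal_inv_of_pos (Real.sqrt_pos.mpr hpos), Real.rpow_neg hpos.le,
      Real.sqrt_eq_rpow]
  have hint : IntervalIntegrable (fun u : ℝ => (u - b) ^ (-(1 / 2) : ℝ)) volume b c := by
    simpa using (intervalIntegral.intervalIntegrable_rpow' (a := 0) (b := c - b)
      (r := -(1 / 2)) (by norm_num)).comp_sub_right b
  rw [setLIntegral_congr_fun measurableSet_Ioc hrpow, ← ofReal_integral_eq_lintegral_ofReal
    ((intervalIntegrable_iff_integrableOn_Ioc_of_le hbc).mp hint) ?_,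
    ← intervalIntegral.integral_of_le hbc,
    intervalIntegral.integral_comp_sub_right (fun u => u ^ (-(1 / 2) : ℝ)), sub_self,
    integral_rpow (Or.inl (by norm_num)), Real.zero_rpow (by norm_num), Real.sqrt_eq_rpow]
  · rw [show -(1 / 2 : ℝ) + 1 = 1 / 2 by norm_num]
    ring_nf
  · filter_upwards [ae_restrict_mem measurableSet_Ioc] with u hu
    exact Real.rpow_nonneg (sub_nonneg.mpr hu.1.le) _

/-- (Cauchy–Schwarz step) If `dF ≪ dS` with density `f = dF/dS`, then for
every `x > a`,
`(F(x) − F(a))² ≤ 2·√(S(x) − S(a)) · ∫_{(a,x]} f(t)² √(S(t) − S(a)) dS(t)`. -/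
theorem cauchy_schwarz_step
    (S : ℝ → ℝ) (hScont : Continuous S) (hSmono : StrictMono S)
    (μS : Measure ℝ)
    (hμS : ∀ c d : ℝ, c ≤ d → μS (Ioc c d) = ENNReal.ofReal (S d - S c))
    (a : ℝ) (F f : ℝ → ℝ)
    (hfint : Integrable f μS)
    (hdF : ∀ c d : ℝ, c < d → F d - F c = ∫ t in Ioc c d, f t ∂μS) :
    ∀ x : ℝ, a < x →
      ENNReal.ofReal ((F x - F a) ^ 2) ≤
        ENNReal.ofReal (2 * Real.sqrt (S x - S a)) *
          ∫⁻ t in Ioc a x, ENNReal.ofReal (f t ^ 2 * Real.sqrt (S t - S a)) ∂μS := by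
  intro x hax
  set w : ℝ → ℝ≥0∞ := fun t => ENNReal.ofReal (Real.sqrt (S t - S a))
  have hw_integral :
      ∫⁻ t in Ioc a x, (w t)⁻¹ ∂μS = ENNReal.ofReal (2 * Real.sqrt (S x - S a)) := by
    rw [← lintegral_Ioc_inv_ofReal_sqrt_sub (hSmono hax).le,
      ← map_restrict_Ioc_eq_volume hScont hSmono hμS hax.le,
      lintegral_map (by fun_prop) hScont.measurable]
  have hw_ne_zero : ∀ᵐ t ∂μS.restrict (Ioc a x), w t ≠ 0 := by
    filter_upwards [ae_restrict_mem measurableSet_Ioc] with t ht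
    exact (ENNReal.ofReal_pos.mpr (Real.sqrt_pos.mpr (sub_pos.mpr (hSmono ht.1)))).ne'
  calc ENNReal.ofReal ((F x - F a) ^ 2) = ‖∫ t in Ioc a x, f t ∂μS‖ₑ ^ 2 := by
        rw [← hdF a x hax, Real.enorm_eq_ofReal_abs, ← ENNReal.ofReal_pow (abs_nonneg _), sq_abs]
    _ ≤ (∫⁻ t in Ioc a x, ‖f t‖ₑ ∂μS) ^ 2 :=
        pow_le_pow_left' (enorm_integral_le_lintegral_enorm _) 2
    _ ≤ (∫⁻ t in Ioc a x, ‖f t‖ₑ ^ 2 * w t ∂μS) * ∫⁻ t in Ioc a x, (w t)⁻¹ ∂μS :=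
        ENNReal.sq_lintegral_le_lintegral_mul_lintegral_inv hfint.aemeasurable.enorm.restrict
          (by fun_prop) hw_ne_zero (.of_forall fun _ => ENNReal.ofReal_ne_top)
    _ = _ := by
        rw [hw_integral, mul_comm]
        congr 2 with t
        rw [Real.enorm_eq_ofReal_abs, ← ENNReal.ofReal_pow (abs_nonneg _), sq_abs,
          ← ENNReal.ofReal_mul (sq_nonneg _)]
end

section
/- Let a < b and set C = (S(b) − S(a))⁻¹ · ∫_{[a,b]} (S(b) − S(y))(S(y) − S(a)) dm(y). Then for every integer n ≥ 0 and every x ∈ [a,b], the n-fold iterate of the Green operator applied to the constant function 1 satisfies Gⁿ1(x) ≤ Cⁿ. -/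
open MeasureTheory Set
open scoped ENNReal

/-- The Green kernel `G(a,b,x,y)` on `[a,b]`. -/
noncomputable def greenKernel (S : ℝ → ℝ) (a b x y : ℝ) : ℝ :=
  if y ≤ x then (S b - S x) * (S y - S a) / (S b - S a)
  else (S b - S y) * (S x - S a) / (S b - S a)

/-- The Green operator `Gf(x) = ∫_{[a,b]} G(a,b,x,y) f(y) dm(y)`. -/
noncomputable def greenOp (S : ℝ → ℝ) (m : Measure ℝ) (a b : ℝ) (f : ℝ → ℝ≥0∞) :
    ℝ → ℝ≥0∞ :=
  fun x => ∫⁻ y in Icc a b, ENNReal.ofReal (greenKernel S a b x y) * f y ∂m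

/-- With `C = (S(b) − S(a))⁻¹ ∫_{[a,b]} (S(b) − S(y))(S(y) − S(a)) dm(y)`,
for every `n ≥ 0` and every `x ∈ [a,b]`, `Gⁿ1(x) ≤ Cⁿ`. -/
theorem green_iterate_upper_bound
    (S : ℝ → ℝ) (hScont : Continuous S) (hSmono : StrictMono S)
    (m : Measure ℝ) [IsFiniteMeasure m]
    (a b : ℝ) (hab : a < b)
    (C : ℝ)
    (hC : C = (S b - S a)⁻¹ * ∫ y in Icc a b, (S b - S y) * (S y - S a) ∂m) :
    ∀ (n : ℕ) (x : ℝ), x ∈ Icc a b →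
      (greenOp S m a b)^[n] (fun _ => 1) x ≤ ENNReal.ofReal C ^ n := by
  have hSab : S a < S b := hSmono hab
  have hSab' : (0:ℝ) < S b - S a := by linarith
  set g : ℝ → ℝ := fun y => (S b - S y) * (S y - S a) / (S b - S a) with hg
  -- pointwise kernel bound
  have hker : ∀ x y, y ∈ Icc a b →
      ENNReal.ofReal (greenKernel S a b x y) ≤ ENNReal.ofReal (g y) := by
    intro x y hy
    apply ENNReal.ofReal_le_ofReal
    have h1 : S y - S a ≥ 0 := by have := hSmono.monotone hy.1; linarith
    have h2 : S b - S y ≥ 0 := by have := hSmono.monotone hy.2; linarith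
    unfold greenKernel
    split_ifs with h
    · apply div_le_div_of_nonneg_right _ hSab'.le
      rcases le_or_gt (S b - S x) 0 with hx | hx
      · exact le_trans (mul_nonpos_of_nonpos_of_nonneg hx h1) (mul_nonneg h2 h1)
      · have : S y ≤ S x := hSmono.monotone h
        exact mul_le_mul_of_nonneg_right (by linarith) h1
    · apply div_le_div_of_nonneg_right _ hSab'.le
      rcases le_or_gt (S x - S a) 0 with hx | hx
      · exact le_trans (mul_nonpos_of_nonneg_of_nonpos h2 hx) (mul_nonneg h2 h1)
      · have : S x ≤ S y := (hSmono.monotone (le_of_not_ge h))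
        exact mul_le_mul_of_nonneg_left (by linarith) h2
  -- g nonneg on Icc
  have hgnn : ∀ y ∈ Icc a b, 0 ≤ g y := by
    intro y hy
    have h1 : S y - S a ≥ 0 := by have := hSmono.monotone hy.1; linarith
    have h2 : S b - S y ≥ 0 := by have := hSmono.monotone hy.2; linarith
    exact div_nonneg (mul_nonneg h2 h1) hSab'.le
  have hgcont : Continuous g := by
    apply Continuous.div_const
    exact ((continuous_const.sub hScont).mul (hScont.sub continuous_const))
  have hgint : IntegrableOn g (Icc a b) m :=
    hgcont.continuousOn.integrableOn_compact isCompact_Icc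
  -- the lintegral of g equals ofReal C
  have hC0 : ∫⁻ y in Icc a b, ENNReal.ofReal (g y) ∂m = ENNReal.ofReal C := by
    rw [← ofReal_integral_eq_lintegral_ofReal hgint
        ((ae_restrict_iff' measurableSet_Icc).2 (Filter.Eventually.of_forall hgnn))]
    congr 1
    rw [hC]
    have : ∀ y, g y = ((S b - S y) * (S y - S a)) * (S b - S a)⁻¹ := by
      intro y; rw [hg]; ring
    simp_rw [this]
    rw [integral_mul_const]
    ring
  -- main induction, for all x
  have main : ∀ (n : ℕ) (x : ℝ),
      (greenOp S m a b)^[n] (fun _ => 1) x ≤ ENNReal.ofReal C ^ n := by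
    intro n
    induction n with
    | zero => intro x; simp
    | succ n ih =>
      intro x
      rw [Function.iterate_succ_apply']
      calc greenOp S m a b ((greenOp S m a b)^[n] (fun _ => 1)) x
          ≤ ∫⁻ y in Icc a b, ENNReal.ofReal (g y) * ENNReal.ofReal C ^ n ∂m := by
            unfold greenOp
            refine lintegral_mono_ae ((ae_restrict_iff' measurableSet_Icc).2
              (Filter.Eventually.of_forall ?_))
            intro y hy
            exact mul_le_mul' (hker x y hy) (ih y)
        _ = (∫⁻ y in Icc a b, ENNReal.ofReal (g y) ∂m) * ENNReal.ofReal C ^ n := by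
            rw [lintegral_mul_const']
            exact ENNReal.pow_ne_top ENNReal.ofReal_ne_top
        _ = ENNReal.ofReal C ^ (n + 1) := by rw [hC0, pow_succ']
  intro n x _
  exact main n x
end

section
/- Let a < a' < b' < b and define κ₁ = (S(a') − S(a))/(S(b') − S(a')), κ₂ = (S(b) − S(b'))/(S(b') − S(a')), and c = (κ₁κ₂/(1 + κ₁ + κ₂)) · (S(b') − S(a')) · m([a',b']). Then for every integer n ≥ 0 and every x ∈ [a',b'], the n-fold iterate of the Green operator applied to the constant function 1 satisfies Gⁿ1(x) ≥ cⁿ. -/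
/-!
On `[a',b']²` the kernel is at least `k = (S b - S b')(S a' - S a)/(S b - S a)`, since each of its
two factors is smallest at an endpoint of `[a',b']`. Hence `G` maps a function that is `≥ C` on
`[a',b']` to one that is `≥ k · m([a',b']) · C` there, and induction gives `Gⁿ1 ≥ (k · m([a',b']))ⁿ`.
Finally `1 + κ₁ + κ₂ = (S b - S a)/(S b' - S a')`, so `c ≤ k · m([a',b'])`.
-/

open MeasureTheory Set
open scoped ENNReal

theorem le_greenKernel_of_mem_Icc {S : ℝ → ℝ} (hS : Monotone S) {a a' b' b x y : ℝ}
    (hSab : S a < S b) (haa' : a ≤ a') (hb'b : b' ≤ b)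
    (hx : x ∈ Icc a' b') (hy : y ∈ Icc a' b') :
    (S b - S b') * (S a' - S a) / (S b - S a) ≤ greenKernel S a b x y := by
  have hxa := hS hx.1; have hxb := hS hx.2
  have hya := hS hy.1; have hyb := hS hy.2
  have hSa := hS haa'; have hSb := hS hb'b
  unfold greenKernel
  split_ifs
  · gcongr; linarith
  · gcongr; linarith

theorem le_greenOp_of_le_on {S : ℝ → ℝ} {m : Measure ℝ} {a b k : ℝ} {s : Set ℝ}
    (hs : MeasurableSet s) (hsab : s ⊆ Icc a b)
    (hker : ∀ x ∈ s, ∀ y ∈ s, k ≤ greenKernel S a b x y)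
    {f : ℝ → ℝ≥0∞} {C : ℝ≥0∞} (hf : ∀ y ∈ s, C ≤ f y) {x : ℝ} (hx : x ∈ s) :
    ENNReal.ofReal k * m s * C ≤ greenOp S m a b f x :=
  calc ENNReal.ofReal k * m s * C
      = ∫⁻ _ in s, ENNReal.ofReal k * C ∂m := by rw [setLIntegral_const]; ring
    _ ≤ ∫⁻ y in s, ENNReal.ofReal (greenKernel S a b x y) * f y ∂m :=
        setLIntegral_mono' hs fun y hy =>
          mul_le_mul' (ENNReal.ofReal_le_ofReal (hker x hx y hy)) (hf y hy)
    _ ≤ greenOp S m a b f x := lintegral_mono_set hsab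

theorem pow_le_greenOp_iterate_one {S : ℝ → ℝ} {m : Measure ℝ} {a b k : ℝ} {s : Set ℝ}
    (hs : MeasurableSet s) (hsab : s ⊆ Icc a b)
    (hker : ∀ x ∈ s, ∀ y ∈ s, k ≤ greenKernel S a b x y) (n : ℕ) {x : ℝ} (hx : x ∈ s) :
    (ENNReal.ofReal k * m s) ^ n ≤ (greenOp S m a b)^[n] (fun _ => 1) x := by
  induction n generalizing x with
  | zero => simp
  | succ n ih =>
    rw [pow_succ', Function.iterate_succ_apply']
    exact le_greenOp_of_le_on hs hsab hker (fun y hy => ih hy) hx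

theorem green_iterate_lower_bound_general
    (S : ℝ → ℝ) (hSmono : StrictMono S)
    (m : Measure ℝ)
    (a a' b' b : ℝ) (haa' : a < a') (ha'b' : a' < b') (hb'b : b' < b)
    (κ₁ κ₂ c : ℝ)
    (hκ₁ : κ₁ = (S a' - S a) / (S b' - S a'))
    (hκ₂ : κ₂ = (S b - S b') / (S b' - S a'))
    (hc : c = κ₁ * κ₂ / (1 + κ₁ + κ₂) * (S b' - S a') * (m (Icc a' b')).toReal) :
    ∀ (n : ℕ) (x : ℝ), x ∈ Icc a' b' →
      ENNReal.ofReal c ^ n ≤ (greenOp S m a b)^[n] (fun _ => 1) x := by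
  intro n x hx
  set k := (S b - S b') * (S a' - S a) / (S b - S a)
  have hSa'b' : 0 < S b' - S a' := sub_pos.2 (hSmono ha'b')
  have hSab : S a < S b := hSmono (haa'.trans (ha'b'.trans hb'b))
  have hck : c = k * (m (Icc a' b')).toReal := by
    have hSab' : S b - S a ≠ 0 := (sub_pos.2 hSab).ne'
    rw [hc, hκ₁, hκ₂]
    congr 1
    field_simp
    ring
  have hkc : ENNReal.ofReal c ≤ ENNReal.ofReal k * m (Icc a' b') := by
    rw [hck, ENNReal.ofReal_mul' ENNReal.toReal_nonneg]
    gcongr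
    exact ENNReal.ofReal_toReal_le
  calc ENNReal.ofReal c ^ n ≤ (ENNReal.ofReal k * m (Icc a' b')) ^ n := by gcongr
    _ ≤ (greenOp S m a b)^[n] (fun _ => 1) x :=
      pow_le_greenOp_iterate_one measurableSet_Icc (Icc_subset_Icc haa'.le hb'b.le)
        (fun x hx y hy => le_greenKernel_of_mem_Icc hSmono.monotone hSab haa'.le hb'b.le hx hy)
        n hx

/-- Let `a < a' < b' < b`, `κ₁ = (S(a') − S(a))/(S(b') − S(a'))`,
`κ₂ = (S(b) − S(b'))/(S(b') − S(a'))` and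
`c = (κ₁κ₂/(1 + κ₁ + κ₂))·(S(b') − S(a'))·m([a',b'])`. Then for every `n ≥ 0` and every
`x ∈ [a',b']`, `Gⁿ1(x) ≥ cⁿ`. -/
theorem green_iterate_lower_bound
    (S : ℝ → ℝ) (hScont : Continuous S) (hSmono : StrictMono S)
    (m : Measure ℝ) [IsFiniteMeasure m]
    (a a' b' b : ℝ) (haa' : a < a') (ha'b' : a' < b') (hb'b : b' < b)
    (κ₁ κ₂ c : ℝ)
    (hκ₁ : κ₁ = (S a' - S a) / (S b' - S a'))
    (hκ₂ : κ₂ = (S b - S b') / (S b' - S a'))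
    (hc : c = κ₁ * κ₂ / (1 + κ₁ + κ₂) * (S b' - S a') * (m (Icc a' b')).toReal) :
    ∀ (n : ℕ) (x : ℝ), x ∈ Icc a' b' →
      ENNReal.ofReal c ^ n ≤ (greenOp S m a b)^[n] (fun _ => 1) x :=
  green_iterate_lower_bound_general S hSmono m a a' b' b haa' ha'b' hb'b κ₁ κ₂ c hκ₁ hκ₂ hc
end

section
/- Let a < a' < b' < b and define κ₁ = (S(a') − S(a))/(S(b') − S(a')) and κ₂ = (S(b) − S(b'))/(S(b') − S(a')). Then for all x, y ∈ [a',b'], G(a,b,x,y) ≥ (κ₁κ₂/(1 + κ₁ + κ₂)) · (S(b') − S(a')). -/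
open Set

/-!
Writing `u = S a' - S a`, `d = S b' - S a'`, `v = S b - S b'`, the bound equals
`κ₁κ₂ d / (1 + κ₁ + κ₂) = u v / (u + d + v) = G(a, b, b', a')`. On the square `[a', b']²`
both factors of the kernel are smallest at the corner `(b', a')`, since `S` is increasing.
-/

theorem div_mul_div_div_one_add_add_mul {p q d : ℝ} (hd : d ≠ 0) (h : p + d + q ≠ 0) :
    p / d * (q / d) / (1 + p / d + q / d) * d = q * p / (p + d + q) := by
  rw [show 1 + p / d + q / d = (p + d + q) / d by field_simp; ring]
  field_simp

section greenKernel

variable {S : ℝ → ℝ} {a b x y : ℝ}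

theorem greenKernel_of_le (h : y ≤ x) :
    greenKernel S a b x y = (S b - S x) * (S y - S a) / (S b - S a) :=
  if_pos h

theorem greenKernel_of_lt (h : x < y) :
    greenKernel S a b x y = (S b - S y) * (S x - S a) / (S b - S a) :=
  if_neg h.not_ge

theorem greenKernel_corner_le {a' b' : ℝ} (hS : Monotone S) (ha : a ≤ a') (hb : b' ≤ b)
    (hx : x ∈ Icc a' b') (hy : y ∈ Icc a' b') :
    greenKernel S a b b' a' ≤ greenKernel S a b x y := by
  have hSa : S a ≤ S a' := hS ha
  have hSb : S b' ≤ S b := hS hb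
  have hSx : S a' ≤ S x ∧ S x ≤ S b' := ⟨hS hx.1, hS hx.2⟩
  have hSy : S a' ≤ S y ∧ S y ≤ S b' := ⟨hS hy.1, hS hy.2⟩
  rw [greenKernel_of_le (hx.1.trans hx.2)]
  rcases le_or_gt y x with hyx | hxy
  · rw [greenKernel_of_le hyx]
    gcongr <;> linarith
  · rw [greenKernel_of_lt hxy]
    gcongr <;> linarith

end greenKernel

theorem green_kernel_lower_bound_general
    (S : ℝ → ℝ) (hSmono : StrictMono S)
    (a a' b' b : ℝ) (haa' : a < a') (ha'b' : a' < b') (hb'b : b' < b)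
    (κ₁ κ₂ : ℝ)
    (hκ₁ : κ₁ = (S a' - S a) / (S b' - S a'))
    (hκ₂ : κ₂ = (S b - S b') / (S b' - S a')) :
    ∀ x ∈ Icc a' b', ∀ y ∈ Icc a' b',
      κ₁ * κ₂ / (1 + κ₁ + κ₂) * (S b' - S a') ≤ greenKernel S a b x y := by
  intro x hx y hy
  have hu := hSmono haa'
  have hd := hSmono ha'b'
  have hv := hSmono hb'b
  have bound_eq : κ₁ * κ₂ / (1 + κ₁ + κ₂) * (S b' - S a') = greenKernel S a b b' a' := by
    rw [hκ₁, hκ₂, div_mul_div_div_one_add_add_mul (by linarith) (by linarith),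
      greenKernel_of_le ha'b'.le]
    ring
  rw [bound_eq]
  exact greenKernel_corner_le hSmono.monotone haa'.le hb'b.le hx hy

/-- Let `a < a' < b' < b`, `κ₁ = (S(a') − S(a))/(S(b') − S(a'))` and
`κ₂ = (S(b) − S(b'))/(S(b') − S(a'))`. Then for all `x, y ∈ [a',b']`,
`G(a,b,x,y) ≥ (κ₁κ₂/(1 + κ₁ + κ₂))·(S(b') − S(a'))`. -/
theorem green_kernel_lower_bound
    (S : ℝ → ℝ) (hScont : Continuous S) (hSmono : StrictMono S)
    (a a' b' b : ℝ) (haa' : a < a') (ha'b' : a' < b') (hb'b : b' < b)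
    (κ₁ κ₂ : ℝ)
    (hκ₁ : κ₁ = (S a' - S a) / (S b' - S a'))
    (hκ₂ : κ₂ = (S b - S b') / (S b' - S a')) :
    ∀ x ∈ Icc a' b', ∀ y ∈ Icc a' b',
      κ₁ * κ₂ / (1 + κ₁ + κ₂) * (S b' - S a') ≤ greenKernel S a b x y :=
  green_kernel_lower_bound_general S hSmono a a' b' b haa' ha'b' hb'b κ₁ κ₂ hκ₁ hκ₂
end
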